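/- arXiv:2601.16783 — 12 statements merged into one kernel-verified Lean document; each statement's English description precedes it below -/
import Mathlib

section
/- Let g : ℝ → ℝ be a smooth function. Then the following are equivalent: (i) for every open connected set Ω ⊆ ℝ² and every smooth f : Ω → ℝ satisfying the minimal surface equation, the composition g ∘ f also satisfies the minimal surface equation on Ω; (ii) there exists a constant C ∈ ℝ such that either g(t) = C for all t, or g(t) = t + C for all t, or g(t) = −t + C for all t. -/
/-- Partial derivative in the x-direction. -/
noncomputable def px (f : ℝ × ℝ → ℝ) (p : ℝ × ℝ) : ℝ := fderiv ℝ f p (1, 0)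

/-- Partial derivative in the y-direction. -/
noncomputable def py (f : ℝ × ℝ → ℝ) (p : ℝ × ℝ) : ℝ := fderiv ℝ f p (0, 1)

/-- `f` satisfies the minimal surface equation
`(1 + f_y²)·f_xx − 2·f_xy·f_x·f_y + (1 + f_x²)·f_yy = 0` at every point of `Ω`. -/
def SatisfiesMSE (f : ℝ × ℝ → ℝ) (Ω : Set (ℝ × ℝ)) : Prop :=
  ∀ p ∈ Ω,
    (1 + (py f p) ^ 2) * px (px f) p - 2 * py (px f) p * px f p * py f p
      + (1 + (px f p) ^ 2) * py (py f) p = 0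

/-- `u` satisfies the modified equation
`(u_xx − u_yy)·(u_x² − u_y²) + 4·u_xy·u_x·u_y = 2·j(u)·(u_x² + u_y²)`
at every point of `Ω` (real form of `(u_z²·u_z̄z̄ + u_z̄²·u_zz)/(u_z·u_z̄) = j(u)`). -/
def SatisfiesModified (u : ℝ × ℝ → ℝ) (j : ℝ → ℝ) (Ω : Set (ℝ × ℝ)) : Prop :=
  ∀ p ∈ Ω,
    (px (px u) p - py (py u) p) * ((px u p) ^ 2 - (py u p) ^ 2)
      + 4 * py (px u) p * px u p * py u p
      = 2 * j (u p) * ((px u p) ^ 2 + (py u p) ^ 2)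

/- ## Auxiliary lemmas -/

open Real Filter
open scoped ContDiff

lemma px_const' (c : ℝ) : px (fun _ : ℝ × ℝ => c) = fun _ => 0 := by
  funext p; simp [px]

lemma py_const' (c : ℝ) : py (fun _ : ℝ × ℝ => c) = fun _ => 0 := by
  funext p; simp [py]

lemma px_neg' (f : ℝ × ℝ → ℝ) : px (fun q => -f q) = fun p => -(px f p) := by
  funext p; unfold px; rw [fderiv_fun_neg]; simp

lemma py_neg' (f : ℝ × ℝ → ℝ) : py (fun q => -f q) = fun p => -(py f p) := by
  funext p; unfold py; rw [fderiv_fun_neg]; simp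

lemma px_sep {F G : ℝ → ℝ} {a b : ℝ} {p : ℝ × ℝ}
    (hF : HasDerivAt F a p.1) (hG : HasDerivAt G b p.2) :
    px (fun q => F q.1 + G q.2) p = a := by
  have h : HasFDerivAt (fun q : ℝ × ℝ => F q.1 + G q.2)
      (a • ContinuousLinearMap.fst ℝ ℝ ℝ + b • ContinuousLinearMap.snd ℝ ℝ ℝ) p :=
    (hF.comp_hasFDerivAt p hasFDerivAt_fst).add (hG.comp_hasFDerivAt p hasFDerivAt_snd)
  rw [px, h.fderiv]
  simp

lemma py_sep {F G : ℝ → ℝ} {a b : ℝ} {p : ℝ × ℝ}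
    (hF : HasDerivAt F a p.1) (hG : HasDerivAt G b p.2) :
    py (fun q => F q.1 + G q.2) p = b := by
  have h : HasFDerivAt (fun q : ℝ × ℝ => F q.1 + G q.2)
      (a • ContinuousLinearMap.fst ℝ ℝ ℝ + b • ContinuousLinearMap.snd ℝ ℝ ℝ) p :=
    (hF.comp_hasFDerivAt p hasFDerivAt_fst).add (hG.comp_hasFDerivAt p hasFDerivAt_snd)
  rw [py, h.fderiv]
  simp

lemma px_comp_fst {h : ℝ → ℝ} {a : ℝ} {p : ℝ × ℝ} (hh : HasDerivAt h a p.1) :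
    px (fun q => h q.1) p = a := by
  have h2 : HasFDerivAt (fun q : ℝ × ℝ => h q.1) (a • ContinuousLinearMap.fst ℝ ℝ ℝ) p :=
    hh.comp_hasFDerivAt p hasFDerivAt_fst
  rw [px, h2.fderiv]
  simp

lemma py_comp_fst {h : ℝ → ℝ} {a : ℝ} {p : ℝ × ℝ} (hh : HasDerivAt h a p.1) :
    py (fun q => h q.1) p = 0 := by
  have h2 : HasFDerivAt (fun q : ℝ × ℝ => h q.1) (a • ContinuousLinearMap.fst ℝ ℝ ℝ) p :=
    hh.comp_hasFDerivAt p hasFDerivAt_fst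
  rw [py, h2.fderiv]
  simp

lemma px_comp_snd {h : ℝ → ℝ} {a : ℝ} {p : ℝ × ℝ} (hh : HasDerivAt h a p.2) :
    px (fun q => h q.2) p = 0 := by
  have h2 : HasFDerivAt (fun q : ℝ × ℝ => h q.2) (a • ContinuousLinearMap.snd ℝ ℝ ℝ) p :=
    hh.comp_hasFDerivAt p hasFDerivAt_snd
  rw [px, h2.fderiv]
  simp

lemma py_comp_snd {h : ℝ → ℝ} {a : ℝ} {p : ℝ × ℝ} (hh : HasDerivAt h a p.2) :
    py (fun q => h q.2) p = a := by
  have h2 : HasFDerivAt (fun q : ℝ × ℝ => h q.2) (a • ContinuousLinearMap.snd ℝ ℝ ℝ) p :=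
    hh.comp_hasFDerivAt p hasFDerivAt_snd
  rw [py, h2.fderiv]
  simp

/-- The strip on which the Scherk surface lives. -/
def sstrip : Set (ℝ × ℝ) :=
  Set.Ioo (-(π / 2)) (π / 2) ×ˢ Set.Ioo (-(π / 2)) (π / 2)

lemma sstrip_isOpen : IsOpen sstrip := isOpen_Ioo.prod isOpen_Ioo

lemma sstrip_isConnected : IsConnected sstrip := by
  refine ⟨⟨(0, 0), ?_⟩, ((convex_Ioo _ _).prod (convex_Ioo _ _)).isPreconnected⟩
  have h := pi_pos
  constructor <;> constructor <;> simp <;> linarith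

lemma sstrip_cos_ne {q : ℝ × ℝ} (hq : q ∈ sstrip) : cos q.1 ≠ 0 ∧ cos q.2 ≠ 0 :=
  ⟨ne_of_gt (cos_pos_of_mem_Ioo hq.1), ne_of_gt (cos_pos_of_mem_Ioo hq.2)⟩

lemma one_mem_Ioo : (1 : ℝ) ∈ Set.Ioo (-(π / 2)) (π / 2) := by
  have h := pi_gt_three
  constructor <;> linarith

lemma p0_mem_sstrip : ((1 : ℝ), (0 : ℝ)) ∈ sstrip := by
  refine ⟨one_mem_Ioo, ?_⟩
  have h := pi_pos
  constructor <;> linarith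

lemma hasDerivAt_logcos {x : ℝ} (h : cos x ≠ 0) :
    HasDerivAt (fun t => Real.log (Real.cos t)) (-tan x) x := by
  simpa [Real.tan_eq_sin_div_cos, neg_div] using (Real.hasDerivAt_cos x).log h

/-- The affine images of the Scherk surface. -/
noncomputable def aff (a c : ℝ) : ℝ × ℝ → ℝ :=
  fun q => (c + a * -Real.log (Real.cos q.1)) + a * Real.log (Real.cos q.2)

lemma aff_hasDerivAt_F {a c x : ℝ} (h : cos x ≠ 0) :
    HasDerivAt (fun t => c + a * -Real.log (Real.cos t)) (a * tan x) x := by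
  have := (((hasDerivAt_logcos h).neg).const_mul a).const_add c
  simpa using this

lemma aff_hasDerivAt_G {a x : ℝ} (h : cos x ≠ 0) :
    HasDerivAt (fun t => a * Real.log (Real.cos t)) (a * -tan x) x := by
  simpa using (hasDerivAt_logcos h).const_mul a

lemma aff_px {a c : ℝ} {q : ℝ × ℝ} (hq : q ∈ sstrip) : px (aff a c) q = a * tan q.1 := by
  obtain ⟨h1, h2⟩ := sstrip_cos_ne hq
  exact px_sep (aff_hasDerivAt_F h1) (aff_hasDerivAt_G h2)

lemma aff_py {a c : ℝ} {q : ℝ × ℝ} (hq : q ∈ sstrip) : py (aff a c) q = a * -tan q.2 := by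
  obtain ⟨h1, h2⟩ := sstrip_cos_ne hq
  exact py_sep (aff_hasDerivAt_F h1) (aff_hasDerivAt_G h2)

lemma aff_px_ev {a c : ℝ} {p : ℝ × ℝ} (hp : p ∈ sstrip) :
    px (aff a c) =ᶠ[nhds p] fun q => a * tan q.1 := by
  filter_upwards [sstrip_isOpen.mem_nhds hp] with q hq
  exact aff_px hq

lemma aff_py_ev {a c : ℝ} {p : ℝ × ℝ} (hp : p ∈ sstrip) :
    py (aff a c) =ᶠ[nhds p] fun q => a * -tan q.2 := by
  filter_upwards [sstrip_isOpen.mem_nhds hp] with q hq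
  exact aff_py hq

lemma aff_pxx {a c : ℝ} {p : ℝ × ℝ} (hp : p ∈ sstrip) :
    px (px (aff a c)) p = a * (1 / cos p.1 ^ 2) := by
  have h1 := (sstrip_cos_ne hp).1
  have he : px (px (aff a c)) p = px (fun q => a * tan q.1) p := by
    unfold px
    congr 1
    exact (aff_px_ev (a := a) (c := c) hp).fderiv_eq
  rw [he]
  exact px_comp_fst ((Real.hasDerivAt_tan h1).const_mul a)

lemma aff_pyx {a c : ℝ} {p : ℝ × ℝ} (hp : p ∈ sstrip) :
    py (px (aff a c)) p = 0 := by
  have h1 := (sstrip_cos_ne hp).1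
  have he : py (px (aff a c)) p = py (fun q => a * tan q.1) p := by
    unfold py
    congr 1
    exact (aff_px_ev (a := a) (c := c) hp).fderiv_eq
  rw [he]
  exact py_comp_fst ((Real.hasDerivAt_tan h1).const_mul a)

lemma aff_pyy {a c : ℝ} {p : ℝ × ℝ} (hp : p ∈ sstrip) :
    py (py (aff a c)) p = a * -(1 / cos p.2 ^ 2) := by
  have h2 := (sstrip_cos_ne hp).2
  have he : py (py (aff a c)) p = py (fun q => a * -tan q.2) p := by
    unfold py
    congr 1
    exact (aff_py_ev (a := a) (c := c) hp).fderiv_eq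
  rw [he]
  exact py_comp_snd (((Real.hasDerivAt_tan h2).neg).const_mul a)

lemma aff_contDiffOn (a c : ℝ) : ContDiffOn ℝ (⊤ : ℕ∞) (aff a c) sstrip := by
  intro q hq
  obtain ⟨h1, h2⟩ := sstrip_cos_ne hq
  have c1 : ContDiffAt ℝ (⊤ : ℕ∞) (fun q : ℝ × ℝ => Real.cos q.1) q :=
    (Real.contDiff_cos.comp contDiff_fst).contDiffAt
  have c2 : ContDiffAt ℝ (⊤ : ℕ∞) (fun q : ℝ × ℝ => Real.cos q.2) q :=
    (Real.contDiff_cos.comp contDiff_snd).contDiffAt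
  exact ((((contDiffAt_const (c := c)).add ((c1.log h1).neg.const_smul a)).add
    ((c2.log h2).const_smul a)).congr_of_eventuallyEq
    (by filter_upwards with q; simp only [aff, smul_eq_mul]; try ring)).contDiffWithinAt

lemma one_div_cos_sq {x : ℝ} (h : cos x ≠ 0) : 1 / cos x ^ 2 = 1 + tan x ^ 2 := by
  rw [Real.tan_eq_sin_div_cos]
  field_simp
  exact (cos_sq_add_sin_sq x).symm

lemma aff_one_mse : SatisfiesMSE (aff 1 0) sstrip := by
  intro p hp
  obtain ⟨h1, h2⟩ := sstrip_cos_ne hp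
  rw [aff_px hp, aff_py hp, aff_pxx hp, aff_pyx hp, aff_pyy hp,
    one_div_cos_sq h1, one_div_cos_sq h2]
  ring

/-- a smooth `g : ℝ → ℝ` transforms every minimal graph surface into a
minimal graph surface iff it is of the form `C`, `t + C` or `−t + C`. -/
theorem trivial_minimal_graph_transformations (g : ℝ → ℝ) (hg : ContDiff ℝ (⊤ : ℕ∞) g) :
    (∀ Ω : Set (ℝ × ℝ), IsOpen Ω → IsConnected Ω →
      ∀ f : ℝ × ℝ → ℝ, ContDiffOn ℝ (⊤ : ℕ∞) f Ω → SatisfiesMSE f Ω →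
        SatisfiesMSE (g ∘ f) Ω) ↔
      ∃ C : ℝ, (∀ t : ℝ, g t = C) ∨ (∀ t : ℝ, g t = t + C) ∨ (∀ t : ℝ, g t = -t + C) := by
  constructor
  · intro H
    have hgd : Differentiable ℝ g := hg.differentiable (by simp)
    have hg' : ContDiff ℝ (∞ : WithTop ℕ∞) g := hg.of_le (by simp)
    have hgd2 : Differentiable ℝ (deriv g) :=
      ((contDiff_infty_iff_deriv.mp hg').2).differentiable (by simp)
    -- Step 1: test against the plane f(x,y) = x to show g is affine
    have hpxf1 : px (fun q : ℝ × ℝ => q.1) = fun _ => 1 := by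
      funext q; exact px_comp_fst (hasDerivAt_id q.1)
    have hpyf1 : py (fun q : ℝ × ℝ => q.1) = fun _ => 0 := by
      funext q; exact py_comp_fst (hasDerivAt_id q.1)
    have hmse1 : SatisfiesMSE (fun q : ℝ × ℝ => q.1) Set.univ := by
      intro p _
      simp only [hpxf1, hpyf1, px_const', py_const']
      norm_num
    have hu1 := H Set.univ isOpen_univ isConnected_univ (fun q => q.1)
      contDiff_fst.contDiffOn hmse1
    have hcomp1 : g ∘ (fun q : ℝ × ℝ => q.1) = fun q => g q.1 := rfl
    rw [hcomp1] at hu1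
    have hpxu : px (fun q : ℝ × ℝ => g q.1) = fun q => deriv g q.1 := by
      funext q; exact px_comp_fst (hgd q.1).hasDerivAt
    have hpyu : py (fun q : ℝ × ℝ => g q.1) = fun _ => 0 := by
      funext q; exact py_comp_fst (hgd q.1).hasDerivAt
    have hg2 : ∀ t : ℝ, deriv (deriv g) t = 0 := by
      intro t
      have ht := hu1 (t, 0) (Set.mem_univ _)
      simp only [hpxu, hpyu, py_const'] at ht
      have e1 : px (fun q : ℝ × ℝ => deriv g q.1) ((t : ℝ), (0 : ℝ)) = deriv (deriv g) t :=
        px_comp_fst (hgd2 t).hasDerivAt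
      have e2 : py (fun q : ℝ × ℝ => deriv g q.1) ((t : ℝ), (0 : ℝ)) = 0 :=
        py_comp_fst (hgd2 t).hasDerivAt
      rw [e1, e2] at ht
      linear_combination ht
    set α := deriv g 0 with hα
    have hderiv : ∀ t : ℝ, deriv g t = α :=
      fun t => is_const_of_deriv_eq_zero hgd2 hg2 t 0
    have hform : ∀ t : ℝ, g t = g 0 + α * t := by
      intro t
      have hd : Differentiable ℝ (fun t => g t - α * t) :=
        hgd.sub (differentiable_id.const_mul α)
      have hd0 : ∀ x : ℝ, deriv (fun t => g t - α * t) x = 0 := by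
        intro x
        have h1 : HasDerivAt (fun t => g t - α * t) (deriv g x - α) x :=
          (hgd x).hasDerivAt.sub (by simpa using (hasDerivAt_id x).const_mul α)
        rw [h1.deriv, hderiv x, sub_self]
      have := is_const_of_deriv_eq_zero hd hd0 t 0
      simp only [mul_zero, sub_zero] at this
      linarith
    -- Step 2: test against the Scherk surface
    have hu2 := H sstrip sstrip_isOpen sstrip_isConnected (aff 1 0) (aff_contDiffOn 1 0) aff_one_mse
    have hcomp2 : g ∘ aff 1 0 = aff α (g 0) := by
      funext q
      show g (aff 1 0 q) = aff α (g 0) q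
      rw [hform (aff 1 0 q)]
      simp only [aff]
      ring
    rw [hcomp2] at hu2
    have hp0 := p0_mem_sstrip
    have ht := hu2 ((1 : ℝ), (0 : ℝ)) hp0
    rw [aff_px hp0, aff_py hp0, aff_pxx hp0, aff_pyx hp0, aff_pyy hp0] at ht
    simp only [Real.tan_zero, Real.cos_zero] at ht
    have hc1 : cos (1 : ℝ) ≠ 0 := ne_of_gt (cos_pos_of_mem_Ioo one_mem_Ioo)
    have hident : 1 / cos (1 : ℝ) ^ 2 = 1 + tan (1 : ℝ) ^ 2 := one_div_cos_sq hc1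
    have ht1 : tan (1 : ℝ) ≠ 0 := by
      have := pi_gt_three
      exact ne_of_gt (tan_pos_of_pos_of_lt_pi_div_two one_pos (by linarith))
    have key : α * tan (1 : ℝ) ^ 2 * (1 - α ^ 2) = 0 := by
      linear_combination ht - α * hident
    have hcase : α = 0 ∨ α = 1 ∨ α = -1 := by
      have ht2 : tan (1 : ℝ) ^ 2 ≠ 0 := pow_ne_zero _ ht1
      rcases mul_eq_zero.mp key with h | h
      · rcases mul_eq_zero.mp h with h' | h'
        · exact Or.inl h'
        · exact absurd h' ht2
      · have h2 : (1 - α) * (1 + α) = 0 := by linear_combination h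
        rcases mul_eq_zero.mp h2 with h' | h'
        · exact Or.inr (Or.inl (by linarith))
        · exact Or.inr (Or.inr (by linarith))
    refine ⟨g 0, ?_⟩
    rcases hcase with h | h | h
    · exact Or.inl fun t => by rw [hform t, h]; ring
    · exact Or.inr (Or.inl fun t => by rw [hform t, h]; ring)
    · exact Or.inr (Or.inr fun t => by rw [hform t, h]; ring)
  · rintro ⟨C, hC | hC | hC⟩ <;> intro Ω hΩo hΩc f hf hMSE
    · have h1 : g ∘ f = fun _ => C := funext fun q => hC (f q)
      intro p hp
      rw [h1, px_const', py_const', px_const', py_const']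
      norm_num
    · have h1 : g ∘ f = fun q => f q + C := funext fun q => hC (f q)
      have h2 : px (g ∘ f) = px f := by
        funext q; rw [h1]; unfold px; rw [fderiv_add_const]
      have h3 : py (g ∘ f) = py f := by
        funext q; rw [h1]; unfold py; rw [fderiv_add_const]
      intro p hp
      rw [h2, h3]
      exact hMSE p hp
    · have h1 : g ∘ f = fun q => -f q + C := funext fun q => hC (f q)
      have h2 : px (g ∘ f) = fun q => -(px f q) := by
        funext q; rw [h1]; unfold px; rw [fderiv_add_const, fderiv_fun_neg]; simp
      have h3 : py (g ∘ f) = fun q => -(py f q) := by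
        funext q; rw [h1]; unfold py; rw [fderiv_add_const, fderiv_fun_neg]; simp
      intro p hp
      rw [h2, h3, px_neg', py_neg', py_neg']
      have := hMSE p hp
      linear_combination -this
end

section
/- Let Ω ⊆ ℝ² be open, let f : Ω → ℝ be a smooth function satisfying the minimal surface equation, let U ⊆ ℝ be open with f(Ω) ⊆ U, and let g : ℝ → ℝ be smooth on U. Then g ∘ f satisfies the minimal surface equation on Ω if and only if for every point p ∈ Ω one has g''(f(p))·(f_x(p)² + f_y(p)²) = (g'(f(p))³ − g'(f(p)))·(f_xx(p) + f_yy(p)). -/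
open Filter Topology

lemma px_def (f : ℝ × ℝ → ℝ) : px f = fun p => fderiv ℝ f p (1, 0) := rfl
lemma py_def (f : ℝ × ℝ → ℝ) : py f = fun p => fderiv ℝ f p (0, 1) := rfl

lemma deriv_eq_fderiv_one' (g : ℝ → ℝ) : deriv g = fun y => fderiv ℝ g y 1 := rfl

lemma deriv_diffAt' {g : ℝ → ℝ} {x : ℝ} (hg : ContDiffAt ℝ (⊤ : ℕ∞) g x) :
    DifferentiableAt ℝ (deriv g) x := by
  rw [deriv_eq_fderiv_one']
  exact ((hg.fderiv_right (by exact WithTop.coe_le_coe.mpr le_top)).differentiableAt one_ne_zero).clm_apply (differentiableAt_const 1)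

lemma fderivOneDim' (g : ℝ → ℝ) (x v : ℝ) : fderiv ℝ g x v = v * deriv g x := by
  have : fderiv ℝ g x v = fderiv ℝ g x (v • (1:ℝ)) := by norm_num
  rw [this, map_smul, smul_eq_mul, fderiv_apply_one_eq_deriv]

lemma pd_diffAt' {f : ℝ × ℝ → ℝ} {p : ℝ × ℝ} (hf : ContDiffAt ℝ (⊤ : ℕ∞) f p) (v : ℝ × ℝ) :
    DifferentiableAt ℝ (fun q => fderiv ℝ f q v) p :=
  ((hf.fderiv_right (by exact WithTop.coe_le_coe.mpr le_top)).differentiableAt one_ne_zero).clm_apply (differentiableAt_const v)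

lemma chain1' {f : ℝ × ℝ → ℝ} {g : ℝ → ℝ} {p : ℝ × ℝ}
    (hf : DifferentiableAt ℝ f p) (hg : DifferentiableAt ℝ g (f p)) (v : ℝ × ℝ) :
    fderiv ℝ (g ∘ f) p v = deriv g (f p) * fderiv ℝ f p v := by
  rw [fderiv_comp p hg hf, ContinuousLinearMap.comp_apply, fderivOneDim', mul_comm]

lemma chain2' {Ω : Set (ℝ × ℝ)} (hΩ : IsOpen Ω) {f : ℝ × ℝ → ℝ} (hf : ContDiffOn ℝ (⊤ : ℕ∞) f Ω)
    {U : Set ℝ} (hU : IsOpen U) (hfU : f '' Ω ⊆ U) {g : ℝ → ℝ} (hg : ContDiffOn ℝ (⊤ : ℕ∞) g U)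
    {p : ℝ × ℝ} (hp : p ∈ Ω) (v w : ℝ × ℝ) :
    fderiv ℝ (fun q => fderiv ℝ (g ∘ f) q v) p w
      = deriv (deriv g) (f p) * fderiv ℝ f p v * fderiv ℝ f p w
        + deriv g (f p) * fderiv ℝ (fun q => fderiv ℝ f q v) p w := by
  have hfp : ContDiffAt ℝ (⊤ : ℕ∞) f p := hf.contDiffAt (hΩ.mem_nhds hp)
  have hfpU : f p ∈ U := hfU ⟨p, hp, rfl⟩
  have hgp : ContDiffAt ℝ (⊤ : ℕ∞) g (f p) := hg.contDiffAt (hU.mem_nhds hfpU)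
  have hev : (fun q => fderiv ℝ (g ∘ f) q v) =ᶠ[𝓝 p]
      (fun q => deriv g (f q) * fderiv ℝ f q v) := by
    filter_upwards [hΩ.mem_nhds hp] with q hq
    have hfq : DifferentiableAt ℝ f q :=
      (hf.contDiffAt (hΩ.mem_nhds hq)).differentiableAt (by simp)
    have hgq : DifferentiableAt ℝ g (f q) :=
      (hg.contDiffAt (hU.mem_nhds (hfU ⟨q, hq, rfl⟩))).differentiableAt (by simp)
    exact chain1' hfq hgq v
  rw [hev.fderiv_eq]
  have hd1 : DifferentiableAt ℝ (fun q => deriv g (f q)) p :=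
    (deriv_diffAt' hgp).comp p (hfp.differentiableAt (by simp))
  have hd2 : DifferentiableAt ℝ (fun q => fderiv ℝ f q v) p := pd_diffAt' hfp v
  rw [fderiv_fun_mul hd1 hd2]
  simp only [ContinuousLinearMap.add_apply, ContinuousLinearMap.smul_apply, smul_eq_mul]
  have hcomp : fderiv ℝ (fun q => deriv g (f q)) p w
      = deriv (deriv g) (f p) * fderiv ℝ f p w := by
    have := chain1' (hfp.differentiableAt (by simp)) (deriv_diffAt' hgp) w
    exact this
  rw [hcomp]; ring

/-- `g ∘ f` satisfies the minimal surface equation iff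
`g''(f)·‖∇f‖² = (g'(f)³ − g'(f))·Δf` on `Ω`. -/
theorem mgt_characterization (Ω : Set (ℝ × ℝ)) (hΩ : IsOpen Ω)
    (f : ℝ × ℝ → ℝ) (hf : ContDiffOn ℝ (⊤ : ℕ∞) f Ω) (hmse : SatisfiesMSE f Ω)
    (U : Set ℝ) (hU : IsOpen U) (hfU : f '' Ω ⊆ U)
    (g : ℝ → ℝ) (hg : ContDiffOn ℝ (⊤ : ℕ∞) g U) :
    SatisfiesMSE (g ∘ f) Ω ↔
      ∀ p ∈ Ω,
        deriv (deriv g) (f p) * ((px f p) ^ 2 + (py f p) ^ 2) =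
          ((deriv g (f p)) ^ 3 - deriv g (f p)) * (px (px f) p + py (py f) p) := by
  unfold SatisfiesMSE
  refine forall_congr' fun p => forall_congr' fun hp => ?_
  have hfp : ContDiffAt ℝ (⊤ : ℕ∞) f p := hf.contDiffAt (hΩ.mem_nhds hp)
  have hgp : ContDiffAt ℝ (⊤ : ℕ∞) g (f p) := hg.contDiffAt (hU.mem_nhds (hfU ⟨p, hp, rfl⟩))
  have hfd : DifferentiableAt ℝ f p := hfp.differentiableAt (by simp)
  have hgd : DifferentiableAt ℝ g (f p) := hgp.differentiableAt (by simp)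
  have hm := hmse p hp
  simp only [px, py, px_def, py_def] at hm ⊢
  rw [chain1' hfd hgd (1, 0), chain1' hfd hgd (0, 1),
    chain2' hΩ hf hU hfU hg hp (1, 0) (1, 0), chain2' hΩ hf hU hfU hg hp (1, 0) (0, 1),
    chain2' hΩ hf hU hfU hg hp (0, 1) (0, 1)]
  constructor
  · intro h
    linear_combination h - (deriv g (f p)) ^ 3 * hm
  · intro h
    linear_combination h + (deriv g (f p)) ^ 3 * hm
end

section
/- Let U ⊆ ℝ be an open interval, let h : ℝ → ℝ, and let H₁ : ℝ → ℝ be differentiable on U with H₁'(t) = h(t) for all t ∈ U. Let C ∈ ℝ, let ε ∈ {1, −1} and σ ∈ {1, −1}, assume 1 + σ·C²·exp(2·H₁(t)) > 0 for all t ∈ U, and let g : ℝ → ℝ be differentiable on U with g'(t) = ε·(1 + σ·C²·exp(2·H₁(t)))^(−1/2) for all t ∈ U. Then g' is differentiable on U and g''(t) = h(t)·(g'(t)³ − g'(t)) for all t ∈ U. -/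
/-- verification of the solution formula
`g' = ε·(1 + σ·C²·e^{2H₁})^{−1/2}` for the ODE `g'' = h·(g'³ − g')`,
where `H₁' = h` on the open interval `U`. -/
theorem mgt_ode_solution_formula
    (U : Set ℝ) (hUopen : IsOpen U) (hUconn : U.OrdConnected)
    (h H₁ : ℝ → ℝ) (hH₁ : ∀ t ∈ U, HasDerivAt H₁ (h t) t)
    (C ε σ : ℝ) (hε : ε = 1 ∨ ε = -1) (hσ : σ = 1 ∨ σ = -1)
    (hpos : ∀ t ∈ U, 0 < 1 + σ * C ^ 2 * Real.exp (2 * H₁ t))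
    (g : ℝ → ℝ)
    (hg : ∀ t ∈ U, HasDerivAt g
      (ε * (1 + σ * C ^ 2 * Real.exp (2 * H₁ t)) ^ (-(1 / 2) : ℝ)) t) :
    ∀ t ∈ U, HasDerivAt (deriv g) (h t * ((deriv g t) ^ 3 - deriv g t)) t := by
  intro t ht
  set φ : ℝ → ℝ := fun s => ε * (1 + σ * C ^ 2 * Real.exp (2 * H₁ s)) ^ (-(1 / 2) : ℝ)
    with hφdef
  have hEq : ∀ s ∈ U, deriv g s = φ s := fun s hs => (hg s hs).deriv
  set u : ℝ → ℝ := fun s => 1 + σ * C ^ 2 * Real.exp (2 * H₁ s) with hudef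
  have hut : 0 < u t := hpos t ht
  -- derivative of u
  have hu : HasDerivAt u (σ * C ^ 2 * (Real.exp (2 * H₁ t) * (2 * h t))) t := by
    have h1 : HasDerivAt (fun s => 2 * H₁ s) (2 * h t) t := (hH₁ t ht).const_mul 2
    have h2 : HasDerivAt (fun s => Real.exp (2 * H₁ s))
        (Real.exp (2 * H₁ t) * (2 * h t)) t := h1.exp
    exact (h2.const_mul (σ * C ^ 2)).const_add 1
  -- derivative of φ
  have hφ : HasDerivAt φ
      (ε * (σ * C ^ 2 * (Real.exp (2 * H₁ t) * (2 * h t)) * (-(1 / 2) : ℝ)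
        * u t ^ ((-(1 / 2) : ℝ) - 1))) t := by
    exact (hu.rpow_const (p := (-(1 / 2) : ℝ)) (Or.inl hut.ne')).const_mul ε
  -- deriv g agrees with φ near t
  have hcongr : deriv g =ᶠ[nhds t] φ :=
    Filter.eventuallyEq_of_mem (hUopen.mem_nhds ht) hEq
  have key : HasDerivAt (deriv g)
      (ε * (σ * C ^ 2 * (Real.exp (2 * H₁ t) * (2 * h t)) * (-(1 / 2) : ℝ)
        * u t ^ ((-(1 / 2) : ℝ) - 1))) t := hφ.congr_of_eventuallyEq hcongr
  -- now identify the derivative value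
  have hval : ε * (σ * C ^ 2 * (Real.exp (2 * H₁ t) * (2 * h t)) * (-(1 / 2) : ℝ)
        * u t ^ ((-(1 / 2) : ℝ) - 1))
      = h t * ((deriv g t) ^ 3 - deriv g t) := by
    rw [hEq t ht, hφdef]
    beta_reduce
    set P : ℝ := u t ^ ((-(3 / 2) : ℝ)) with hP
    set Q : ℝ := u t ^ ((-(1 / 2) : ℝ)) with hQ
    have h32 : u t ^ ((-(1 / 2) : ℝ) - 1) = P := by
      rw [hP]; norm_num
    have hQ3 : Q ^ 3 = P := by
      rw [hQ, hP, ← Real.rpow_natCast (u t ^ ((-(1 / 2) : ℝ))) 3,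
        ← Real.rpow_mul hut.le]
      norm_num
    have hQP : Q = u t * P := by
      rw [hQ, hP]
      rw [← Real.rpow_one_add' hut.le (by norm_num)]
      norm_num
    rw [h32, mul_pow, hQ3, hQP, hudef]
    rcases hε with rfl | rfl <;> ring
  rw [← hval]
  exact key
end

section
/- Let Ω ⊆ ℝ² be open and let f : Ω → ℝ be a smooth function satisfying the minimal surface equation with f_x(p)² + f_y(p)² ≠ 0 for every p ∈ Ω. Let U ⊆ ℝ be an open interval with f(Ω) ⊆ U and let h : ℝ → ℝ be smooth on U with f_xx(p) + f_yy(p) = h(f(p))·(f_x(p)² + f_y(p)²) for all p ∈ Ω. Let H₁, H : ℝ → ℝ be differentiable on U with H₁' = h and H'(s) = exp(−H₁(s)) for all s ∈ U, and let j : ℝ → ℝ satisfy j(H(s)) = h(s)·exp(−H₁(s)) for all s ∈ U. Then u = H ∘ f is harmonic on Ω (that is, u_xx + u_yy = 0 on Ω) and u satisfies the modified equation with coefficient function j on Ω. -/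
/-- forward direction of the equivalence theorem: if `f` solves the
nontrivial minimal graph transformation problem with first characteristic function `h`,
then `u = H ∘ f` is harmonic and solves the modified problem with second
characteristic function `j`, where `H' = e^{−H₁}`, `H₁' = h`, `j(H(s)) = h(s)·e^{−H₁(s)}`. -/
theorem mgt_forward_equivalence
    (Ω : Set (ℝ × ℝ)) (hΩ : IsOpen Ω)
    (f : ℝ × ℝ → ℝ) (hf : ContDiffOn ℝ (⊤ : ℕ∞) f Ω) (hmse : SatisfiesMSE f Ω)
    (hgrad : ∀ p ∈ Ω, (px f p) ^ 2 + (py f p) ^ 2 ≠ 0)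
    (U : Set ℝ) (hUopen : IsOpen U) (hUconn : U.OrdConnected) (hfU : f '' Ω ⊆ U)
    (h : ℝ → ℝ) (hh : ContDiffOn ℝ (⊤ : ℕ∞) h U)
    (hchar : ∀ p ∈ Ω,
      px (px f) p + py (py f) p = h (f p) * ((px f p) ^ 2 + (py f p) ^ 2))
    (H₁ H : ℝ → ℝ)
    (hH₁ : ∀ s ∈ U, HasDerivAt H₁ (h s) s)
    (hH : ∀ s ∈ U, HasDerivAt H (Real.exp (-H₁ s)) s)
    (j : ℝ → ℝ) (hj : ∀ s ∈ U, j (H s) = h s * Real.exp (-H₁ s)) :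
    (∀ p ∈ Ω, px (px (H ∘ f)) p + py (py (H ∘ f)) p = 0) ∧
      SatisfiesModified (H ∘ f) j Ω := by
  have hfd : ∀ p ∈ Ω, HasFDerivAt f (fderiv ℝ f p) p := fun p hp =>
    ((hf.contDiffAt (hΩ.mem_nhds hp)).differentiableAt (by simp)).hasFDerivAt
  have hfp : ∀ p ∈ Ω, f p ∈ U := fun p hp => hfU ⟨p, hp, rfl⟩
  -- first derivatives of u = H ∘ f
  have hux : ∀ p ∈ Ω, px (H ∘ f) p = Real.exp (-H₁ (f p)) * px f p := by
    intro p hp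
    have hc : HasFDerivAt (H ∘ f) (Real.exp (-H₁ (f p)) • fderiv ℝ f p) p :=
      (hH (f p) (hfp p hp)).comp_hasFDerivAt p (hfd p hp)
    simp [px, hc.fderiv]
  have huy : ∀ p ∈ Ω, py (H ∘ f) p = Real.exp (-H₁ (f p)) * py f p := by
    intro p hp
    have hc : HasFDerivAt (H ∘ f) (Real.exp (-H₁ (f p)) • fderiv ℝ f p) p :=
      (hH (f p) (hfp p hp)).comp_hasFDerivAt p (hfd p hp)
    simp [py, hc.fderiv]
  -- E : the conformal factor
  set E : ℝ × ℝ → ℝ := fun q => Real.exp (-H₁ (f q)) with hEdef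
  have hE : ∀ p ∈ Ω, HasFDerivAt E
      ((E p * (-h (f p))) • fderiv ℝ f p) p := by
    intro p hp
    have h1 : HasFDerivAt (fun q => H₁ (f q)) (h (f p) • fderiv ℝ f p) p :=
      (hH₁ (f p) (hfp p hp)).comp_hasFDerivAt p (hfd p hp)
    have h2 : HasFDerivAt (fun q => -H₁ (f q)) (-(h (f p) • fderiv ℝ f p)) p := h1.neg
    have h3 : HasFDerivAt (fun q => Real.exp (-H₁ (f q)))
        (Real.exp (-H₁ (f p)) • (-(h (f p) • fderiv ℝ f p))) p :=
      (Real.hasDerivAt_exp _).comp_hasFDerivAt p h2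
    convert h3 using 1
    ext v <;> simp [hEdef] <;> ring
  -- differentiability of px f, py f
  have hpxd : ∀ p ∈ Ω, DifferentiableAt ℝ (px f) p := by
    intro p hp
    have := ((hf.contDiffAt (hΩ.mem_nhds hp)).fderiv_right (m := (⊤ : ℕ∞)) (by simp)).differentiableAt (by simp)
    exact this.clm_apply (differentiableAt_const _)
  have hpyd : ∀ p ∈ Ω, DifferentiableAt ℝ (py f) p := by
    intro p hp
    have := ((hf.contDiffAt (hΩ.mem_nhds hp)).fderiv_right (m := (⊤ : ℕ∞)) (by simp)).differentiableAt (by simp)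
    exact this.clm_apply (differentiableAt_const _)
  -- second derivatives of u
  have key : ∀ p ∈ Ω,
      px (px (H ∘ f)) p = E p * (px (px f) p - h (f p) * (px f p) ^ 2) ∧
      py (py (H ∘ f)) p = E p * (py (py f) p - h (f p) * (py f p) ^ 2) ∧
      py (px (H ∘ f)) p = E p * (py (px f) p - h (f p) * (px f p * py f p)) := by
    intro p hp
    have hevx : px (H ∘ f) =ᶠ[nhds p] fun q => E q * px f q :=
      Filter.eventuallyEq_of_mem (hΩ.mem_nhds hp) (fun q hq => hux q hq)
    have hevy : py (H ∘ f) =ᶠ[nhds p] fun q => E q * py f q :=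
      Filter.eventuallyEq_of_mem (hΩ.mem_nhds hp) (fun q hq => huy q hq)
    have hprodx : HasFDerivAt (fun q => E q * px f q)
        (E p • fderiv ℝ (px f) p + px f p • ((E p * (-h (f p))) • fderiv ℝ f p)) p :=
      (hE p hp).mul (hpxd p hp).hasFDerivAt
    have hprody : HasFDerivAt (fun q => E q * py f q)
        (E p • fderiv ℝ (py f) p + py f p • ((E p * (-h (f p))) • fderiv ℝ f p)) p :=
      (hE p hp).mul (hpyd p hp).hasFDerivAt
    refine ⟨?_, ?_, ?_⟩
    · have : px (px (H ∘ f)) p = fderiv ℝ (fun q => E q * px f q) p (1, 0) := by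
        simp only [px, hevx.fderiv_eq]
      rw [this, hprodx.fderiv]
      simp [px]
      ring
    · have : py (py (H ∘ f)) p = fderiv ℝ (fun q => E q * py f q) p (0, 1) := by
        simp only [py, hevy.fderiv_eq]
      rw [this, hprody.fderiv]
      simp [py]
      ring
    · have : py (px (H ∘ f)) p = fderiv ℝ (fun q => E q * px f q) p (0, 1) := by
        simp only [px, py, hevx.fderiv_eq]
      rw [this, hprodx.fderiv]
      simp [px, py]
      ring
  constructor
  · intro p hp
    obtain ⟨k1, k2, _⟩ := key p hp
    rw [k1, k2]
    linear_combination E p * hchar p hp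
  · intro p hp
    obtain ⟨k1, k2, k3⟩ := key p hp
    rw [k1, k2, k3, hux p hp, huy p hp]
    have hjj : j ((H ∘ f) p) = h (f p) * E p := hj (f p) (hfp p hp)
    rw [hjj]
    have hm := hmse p hp
    have hc := hchar p hp
    set a := px f p; set b := py f p
    set A := px (px f) p; set B := py (py f) p; set C := py (px f) p
    have hEe : E p = Real.exp (-H₁ (f p)) := rfl
    linear_combination (E p ^ 3 * ((a ^ 2 + b ^ 2) + 2)) * hc - 2 * E p ^ 3 * hm
end

section
/- Let I ⊆ ℝ be an open interval, let H : ℝ → ℝ be smooth on I with H'(s) > 0 for all s ∈ I, let J = H(I), and let K : ℝ → ℝ be the inverse of H on J (so K(H(s)) = s for s ∈ I and H(K(t)) = t for t ∈ J). Let j : ℝ → ℝ satisfy j(H(s)) = −H''(s) for all s ∈ I. Let Ω ⊆ ℝ² be open and let u : Ω → ℝ be smooth with u_xx + u_yy = 0 on Ω, u_x(p)² + u_y(p)² ≠ 0 for every p ∈ Ω, u(Ω) ⊆ J, and suppose u satisfies the modified equation with coefficient function j on Ω. Then f = K ∘ u satisfies the minimal surface equation on Ω, and f_xx(p) + f_yy(p)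 = h(f(p))·(f_x(p)² + f_y(p)²) for all p ∈ Ω, where h(s) = −H''(s)/H'(s) for s ∈ I. -/
private lemma mgt_alg1 (a b A B C e h2 : ℝ) (he : e ≠ 0)
    (harm : A + C = 0)
    (mod : (A - C) * (a^2 - b^2) + 4*B*a*b = 2 * -h2 * (a^2+b^2)) :
    (1 + (e⁻¹*b)^2) * (e⁻¹*A + a*((-(h2*e⁻¹)/e^2)*a))
      - 2*(e⁻¹*B + a*((-(h2*e⁻¹)/e^2)*b))*(e⁻¹*a)*(e⁻¹*b)
      + (1 + (e⁻¹*a)^2) * (e⁻¹*C + b*((-(h2*e⁻¹)/e^2)*b)) = 0 := by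
  have hC : C = -A := by linarith
  subst hC
  field_simp
  linear_combination (-e^2/2) * mod

private lemma mgt_alg2 (a b A C e h2 : ℝ) (he : e ≠ 0) (harm : A + C = 0) :
    (e⁻¹*A + a*((-(h2*e⁻¹)/e^2)*a)) + (e⁻¹*C + b*((-(h2*e⁻¹)/e^2)*b))
      = (-h2/e) * ((e⁻¹*a)^2 + (e⁻¹*b)^2) := by
  have hC : C = -A := by linarith
  subst hC
  field_simp
  ring

/-- converse direction of the equivalence theorem: if `u` is a harmonic
solution of the modified problem with coefficient `j`, where `j(H(s)) = −H''(s)` for a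
smooth increasing `H` with inverse `K`, then `f = K ∘ u` satisfies the minimal surface
equation and `Δf = h(f)·‖∇f‖²` with `h = −H''/H'`. -/
theorem mgt_converse_equivalence
    (I : Set ℝ) (hIopen : IsOpen I) (hIconn : I.OrdConnected)
    (H : ℝ → ℝ) (hH : ContDiffOn ℝ (⊤ : ℕ∞) H I) (hH' : ∀ s ∈ I, 0 < deriv H s)
    (K : ℝ → ℝ) (hKH : ∀ s ∈ I, K (H s) = s) (hHK : ∀ t ∈ H '' I, H (K t) = t)
    (j : ℝ → ℝ) (hj : ∀ s ∈ I, j (H s) = -(deriv (deriv H) s))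
    (Ω : Set (ℝ × ℝ)) (hΩ : IsOpen Ω)
    (u : ℝ × ℝ → ℝ) (hu : ContDiffOn ℝ (⊤ : ℕ∞) u Ω)
    (hharm : ∀ p ∈ Ω, px (px u) p + py (py u) p = 0)
    (hgrad : ∀ p ∈ Ω, (px u p) ^ 2 + (py u p) ^ 2 ≠ 0)
    (huJ : u '' Ω ⊆ H '' I)
    (hmod : SatisfiesModified u j Ω) :
    SatisfiesMSE (K ∘ u) Ω ∧
      ∀ p ∈ Ω,
        px (px (K ∘ u)) p + py (py (K ∘ u)) p =
          (-(deriv (deriv H) ((K ∘ u) p)) / deriv H ((K ∘ u) p)) *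
            ((px (K ∘ u) p) ^ 2 + (py (K ∘ u) p) ^ 2) := by
  -- derivative of K at points of H '' I
  have hKder : ∀ s ∈ I, HasDerivAt K (deriv H s)⁻¹ (H s) := by
    intro s hs
    have h1 : HasStrictDerivAt H (deriv H s) s :=
      (hH.contDiffAt (hIopen.mem_nhds hs)).hasStrictDerivAt (by simp)
    have h2 : deriv H s ≠ 0 := (hH' s hs).ne'
    have hg : ∀ᶠ x in nhds s, K (H x) = x :=
      Filter.eventually_of_mem (hIopen.mem_nhds hs) hKH
    exact (h1.to_local_left_inverse h2 hg).hasDerivAt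
  -- second derivative of H
  have hH2 : ∀ s ∈ I, HasDerivAt (deriv H) (deriv (deriv H) s) s := by
    intro s hs
    have h1 : ContDiffOn ℝ 1 (deriv H) I := hH.deriv_of_isOpen hIopen (by exact WithTop.coe_le_coe.mpr (le_top : ((1 + 1 : ℕ) : ℕ∞) ≤ ⊤))
    exact ((h1.differentiableOn one_ne_zero).differentiableAt (hIopen.mem_nhds hs)).hasDerivAt
  -- basic facts about K ∘ u
  have hKu : ∀ q ∈ Ω, K (u q) ∈ I ∧ H (K (u q)) = u q := by
    intro q hq
    obtain ⟨s1, hs1I, hs1⟩ := huJ ⟨q, hq, rfl⟩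
    have hk : K (u q) = s1 := by rw [← hs1, hKH s1 hs1I]
    refine ⟨hk ▸ hs1I, ?_⟩
    rw [hk, hs1]
  have hud : ∀ q ∈ Ω, HasFDerivAt u (fderiv ℝ u q) q := fun q hq =>
    (((hu.differentiableOn (by simp)).differentiableAt (hΩ.mem_nhds hq)).hasFDerivAt)
  have hfd1 : ∀ q ∈ Ω, HasFDerivAt (K ∘ u)
      ((deriv H (K (u q)))⁻¹ • fderiv ℝ u q) q := by
    intro q hq
    have h1 := hKder _ (hKu q hq).1
    rw [(hKu q hq).2] at h1
    exact h1.comp_hasFDerivAt q (hud q hq)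
  have hpxf : ∀ q ∈ Ω, px (K ∘ u) q = (deriv H (K (u q)))⁻¹ * px u q := by
    intro q hq
    show fderiv ℝ (K ∘ u) q (1, 0) = _
    rw [(hfd1 q hq).fderiv]
    simp [px]
  have hpyf : ∀ q ∈ Ω, py (K ∘ u) q = (deriv H (K (u q)))⁻¹ * py u q := by
    intro q hq
    show fderiv ℝ (K ∘ u) q (0, 1) = _
    rw [(hfd1 q hq).fderiv]
    simp [py]
  -- smoothness of the first partials of u
  have hfdu : ContDiffOn ℝ 1 (fun q => fderiv ℝ u q) Ω := hu.fderiv_of_isOpen hΩ (by exact WithTop.coe_le_coe.mpr (le_top : ((1 + 1 : ℕ) : ℕ∞) ≤ ⊤))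
  have hpxuC : ContDiffOn ℝ 1 (px u) Ω := hfdu.clm_apply contDiffOn_const
  have hpyuC : ContDiffOn ℝ 1 (py u) Ω := hfdu.clm_apply contDiffOn_const
  -- second-order formulas
  have key : ∀ p ∈ Ω,
      px (px (K ∘ u)) p = (deriv H (K (u p)))⁻¹ * px (px u) p
        + px u p * ((-(deriv (deriv H) (K (u p)) * (deriv H (K (u p)))⁻¹)
            / (deriv H (K (u p)))^2) * px u p) ∧
      py (px (K ∘ u)) p = (deriv H (K (u p)))⁻¹ * py (px u) p
        + px u p * ((-(deriv (deriv H) (K (u p)) * (deriv H (K (u p)))⁻¹)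
            / (deriv H (K (u p)))^2) * py u p) ∧
      py (py (K ∘ u)) p = (deriv H (K (u p)))⁻¹ * py (py u) p
        + py u p * ((-(deriv (deriv H) (K (u p)) * (deriv H (K (u p)))⁻¹)
            / (deriv H (K (u p)))^2) * py u p) := by
    intro p hp
    have hsI := (hKu p hp).1
    have hHs := (hKu p hp).2
    have he : deriv H (K (u p)) ≠ 0 := (hH' _ hsI).ne'
    have hK1 : HasDerivAt K (deriv H (K (u p)))⁻¹ (u p) := by
      have := hKder _ hsI; rwa [hHs] at this
    have hcomp : HasDerivAt (fun t => deriv H (K t))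
        (deriv (deriv H) (K (u p)) * (deriv H (K (u p)))⁻¹) (u p) :=
      (hH2 _ hsI).comp (u p) hK1
    have hinv : HasDerivAt (fun t => (deriv H (K t))⁻¹)
        (-(deriv (deriv H) (K (u p)) * (deriv H (K (u p)))⁻¹) / (deriv H (K (u p)))^2)
        (u p) := hcomp.inv he
    have hcu : HasFDerivAt (fun q => (deriv H (K (u q)))⁻¹)
        ((-(deriv (deriv H) (K (u p)) * (deriv H (K (u p)))⁻¹) / (deriv H (K (u p)))^2)
          • fderiv ℝ u p) p :=
      hinv.comp_hasFDerivAt p (hud p hp)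
    have hpxu : HasFDerivAt (px u) (fderiv ℝ (px u) p) p :=
      ((hpxuC.differentiableOn one_ne_zero).differentiableAt (hΩ.mem_nhds hp)).hasFDerivAt
    have hpyu : HasFDerivAt (py u) (fderiv ℝ (py u) p) p :=
      ((hpyuC.differentiableOn one_ne_zero).differentiableAt (hΩ.mem_nhds hp)).hasFDerivAt
    have hprodx := hcu.mul hpxu
    have hprody := hcu.mul hpyu
    have heqx : px (K ∘ u) =ᶠ[nhds p] fun q => (deriv H (K (u q)))⁻¹ * px u q :=
      Filter.eventuallyEq_of_mem (hΩ.mem_nhds hp) fun q hq => hpxf q hq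
    have heqy : py (K ∘ u) =ᶠ[nhds p] fun q => (deriv H (K (u q)))⁻¹ * py u q :=
      Filter.eventuallyEq_of_mem (hΩ.mem_nhds hp) fun q hq => hpyf q hq
    have hDx := hprodx.congr_of_eventuallyEq heqx
    have hDy := hprody.congr_of_eventuallyEq heqy
    refine ⟨?_, ?_, ?_⟩
    · show fderiv ℝ (px (K ∘ u)) p (1, 0) = _
      rw [hDx.fderiv]
      simp [px, smul_eq_mul]
    · show fderiv ℝ (px (K ∘ u)) p (0, 1) = _
      rw [hDx.fderiv]
      simp [px, py, smul_eq_mul]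
    · show fderiv ℝ (py (K ∘ u)) p (0, 1) = _
      rw [hDy.fderiv]
      simp [py, smul_eq_mul]
  have hjval : ∀ p ∈ Ω, j (u p) = -(deriv (deriv H) (K (u p))) := by
    intro p hp
    have := hj _ (hKu p hp).1
    rwa [(hKu p hp).2] at this
  constructor
  · intro p hp
    obtain ⟨k1, k2, k3⟩ := key p hp
    have hmod' := hmod p hp
    rw [hjval p hp] at hmod'
    have he : deriv H (K (u p)) ≠ 0 := (hH' _ (hKu p hp).1).ne'
    rw [k1, k2, k3, hpxf p hp, hpyf p hp]
    exact mgt_alg1 _ _ _ _ _ _ _ he (hharm p hp) hmod'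
  · intro p hp
    obtain ⟨k1, k2, k3⟩ := key p hp
    have he : deriv H (K (u p)) ≠ 0 := (hH' _ (hKu p hp).1).ne'
    rw [k1, k3, hpxf p hp, hpyf p hp, Function.comp_apply]
    exact mgt_alg2 _ _ _ _ _ _ he (hharm p hp)
end

section
/- Let Ω ⊆ ℂ be open and preconnected, let A : ℂ → ℂ be holomorphic on Ω with deriv A z ≠ 0 for all z ∈ Ω, and let j : ℝ → ℝ be differentiable. Define u : ℝ² → ℝ by u(x, y) = 2·Re(A(x + i·y)), and assume u satisfies the modified equation with coefficient function j at every point (x, y) with x + i·y ∈ Ω. Then there exists a real constant k such that for all z ∈ Ω, (A'''(z))·(A'(z)) − (A''(z))² = k·(A'(z))⁴, where A', A'', A''' denote the first, second, and third complex derivatives of A. -/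
/-!
For `u = 2 Re A = A + conj A` one has `u_z = A'` and `u_zz = A''`, so the modified equation
says `A'² conj A'' + conj A'² A'' = j(u) |A'|²`. Applying `∂_z` to it gives
`conj A'² A''' + 2 A' |A''|² = j(u) conj A' A'' + j'(u) A'² conj A'`. Eliminating `j(u)` and
`j'(u)` between the equation, this identity and its conjugate leaves
`conj A'⁴ (A''' A' - A''²) = A'⁴ conj (A''' A' - A''²)`: the holomorphic function
`(A''' A' - A''²) / A'⁴` is real-valued, hence constant on the connected set `Ω` by the open
mapping theorem.
-/

open Complex ComplexConjugate Filter Topology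

lemma px_congr {f g : ℝ × ℝ → ℝ} {p : ℝ × ℝ} (h : f =ᶠ[𝓝 p] g) : px f p = px g p := by
  rw [px, px, h.fderiv_eq]

lemma py_congr {f g : ℝ × ℝ → ℝ} {p : ℝ × ℝ} (h : f =ᶠ[𝓝 p] g) : py f p = py g p := by
  rw [py, py, h.fderiv_eq]

section Planar

variable {f : ℂ → ℂ} {p : ℝ × ℝ}

lemma fderiv_mul_re_comp_equivRealProd_apply (r : ℝ)
    (hf : DifferentiableAt ℂ f (equivRealProdCLM.symm p)) (v : ℝ × ℝ) :
    fderiv ℝ (fun q => r * (f (equivRealProdCLM.symm q)).re) p v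
      = r * (deriv f (equivRealProdCLM.symm p) * equivRealProdCLM.symm v).re := by
  have h : HasFDerivAt (fun q => r * (f (equivRealProdCLM.symm q)).re) _ p :=
    (reCLM.hasFDerivAt.comp p ((hf.hasDerivAt.hasFDerivAt.restrictScalars ℝ).comp p
      equivRealProdCLM.symm.hasFDerivAt)).const_mul r
  rw [h.fderiv]
  simp [mul_comm]

lemma px_mul_re_comp_equivRealProd (r : ℝ)
    (hf : DifferentiableAt ℂ f (equivRealProdCLM.symm p)) :
    px (fun q => r * (f (equivRealProdCLM.symm q)).re) p
      = r * (deriv f (equivRealProdCLM.symm p)).re := by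
  rw [px, fderiv_mul_re_comp_equivRealProd_apply r hf, equivRealProdCLM_symm_apply]
  simp

lemma py_mul_re_comp_equivRealProd (r : ℝ)
    (hf : DifferentiableAt ℂ f (equivRealProdCLM.symm p)) :
    py (fun q => r * (f (equivRealProdCLM.symm q)).re) p
      = r * (I * deriv f (equivRealProdCLM.symm p)).re := by
  rw [py, fderiv_mul_re_comp_equivRealProd_apply r hf, equivRealProdCLM_symm_apply, mul_comm I]
  simp

end Planar

lemma DifferentiableAt.hasDerivAt_comp_add_ofReal_mul {f : ℂ → ℂ} {z : ℂ}
    (hf : DifferentiableAt ℂ f z) (v : ℂ) :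
    HasDerivAt (fun t : ℝ => f (z + t * v)) (deriv f z * v) 0 := by
  have hline : HasDerivAt (fun t : ℝ => z + t * v) v 0 := by
    simpa using ((hasDerivAt_id (0 : ℝ)).ofReal_comp.mul_const v).const_add z
  exact hf.hasDerivAt.comp_of_eq (0 : ℝ) hline (by simp)

/-- The modified equation for `u = 2 Re A`, written with `u_z = A'` and `u_zz = A''`. -/
def SatisfiesModifiedWirtinger (A : ℂ → ℂ) (j : ℝ → ℝ) (Ω : Set ℂ) : Prop :=
  ∀ z ∈ Ω, deriv A z ^ 2 * conj (deriv (deriv A) z) + conj (deriv A z) ^ 2 * deriv (deriv A) z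
    = j (2 * (A z).re) * (deriv A z * conj (deriv A z))

section Wirtinger

variable {Ω : Set ℂ} {A : ℂ → ℂ} {j : ℝ → ℝ}

lemma SatisfiesModified.satisfiesModifiedWirtinger (hΩ : IsOpen Ω) (hA : AnalyticOnNhd ℂ A Ω)
    (hmod : SatisfiesModified (fun q => 2 * (A (equivRealProdCLM.symm q)).re) j
      (equivRealProdCLM.symm ⁻¹' Ω)) :
    SatisfiesModifiedWirtinger A j Ω := by
  intro z hz
  set u : ℝ × ℝ → ℝ := fun q => 2 * (A (equivRealProdCLM.symm q)).re
  set p := equivRealProdCLM z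
  have hp : p ∈ equivRealProdCLM.symm ⁻¹' Ω := by
    rwa [Set.mem_preimage, ContinuousLinearEquiv.symm_apply_apply]
  have hdiff {f : ℂ → ℂ} (hf : AnalyticOnNhd ℂ f Ω) {q : ℝ × ℝ}
      (hq : q ∈ equivRealProdCLM.symm ⁻¹' Ω) : DifferentiableAt ℂ f (equivRealProdCLM.symm q) :=
    (hf _ hq).differentiableAt
  have hU : equivRealProdCLM.symm ⁻¹' Ω ∈ 𝓝 p :=
    (hΩ.preimage equivRealProdCLM.symm.continuous).mem_nhds hp
  have hpx : px u =ᶠ[𝓝 p] fun q => 2 * (deriv A (equivRealProdCLM.symm q)).re :=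
    eventually_of_mem hU fun q hq => px_mul_re_comp_equivRealProd 2 (hdiff hA hq)
  have hpy : py u =ᶠ[𝓝 p]
      fun q => 2 * ((fun w => I * deriv A w) (equivRealProdCLM.symm q)).re :=
    eventually_of_mem hU fun q hq => py_mul_re_comp_equivRealProd 2 (hdiff hA hq)
  have hm := hmod p hp
  rw [px_congr hpx, py_congr hpx, py_congr hpy,
    px_mul_re_comp_equivRealProd 2 (hdiff hA.deriv hp),
    py_mul_re_comp_equivRealProd 2 (hdiff hA.deriv hp),
    py_mul_re_comp_equivRealProd 2 (hdiff (analyticOnNhd_const.mul hA.deriv) hp),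
    px_mul_re_comp_equivRealProd 2 (hdiff hA hp),
    py_mul_re_comp_equivRealProd 2 (hdiff hA hp), deriv_const_mul_field'] at hm
  simp only [u, p, ContinuousLinearEquiv.symm_apply_apply] at hm
  apply Complex.ext
  · simp only [add_re, mul_re, mul_im, conj_re, conj_im, ofReal_re, ofReal_im, I_re, I_im,
      pow_two] at hm ⊢
    linear_combination hm / 8
  · simp only [add_im, mul_re, mul_im, conj_re, conj_im, ofReal_re, ofReal_im, pow_two]
    ring

lemma SatisfiesModifiedWirtinger.directional_deriv_eq (hE : SatisfiesModifiedWirtinger A j Ω)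
    (hΩ : IsOpen Ω) (hA : AnalyticOnNhd ℂ A Ω) {z : ℂ} (hz : z ∈ Ω)
    (hj : DifferentiableAt ℝ j (2 * (A z).re)) (v : ℂ) :
    2 * deriv A z * (deriv (deriv A) z * v) * conj (deriv (deriv A) z)
      + deriv A z ^ 2 * conj (deriv (deriv (deriv A)) z * v)
      + 2 * conj (deriv A z) * conj (deriv (deriv A) z * v) * deriv (deriv A) z
      + conj (deriv A z) ^ 2 * (deriv (deriv (deriv A)) z * v)
      = deriv j (2 * (A z).re) * (2 * (deriv A z * v).re) * (deriv A z * conj (deriv A z))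
        + j (2 * (A z).re) * (deriv (deriv A) z * v * conj (deriv A z)
          + deriv A z * conj (deriv (deriv A) z * v)) := by
  have hd {f : ℂ → ℂ} (hf : AnalyticOnNhd ℂ f Ω) :=
    (hf z hz).differentiableAt.hasDerivAt_comp_add_ofReal_mul v
  have ha := hd hA.deriv
  have hb := hd hA.deriv.deriv
  have hJ : HasDerivAt (fun t : ℝ => (j (2 * (A (z + t * v)).re) : ℂ))
      ((deriv j (2 * (A z).re) * (2 * (deriv A z * v).re) : ℝ) : ℂ) 0 := by
    have hre := (reCLM.hasFDerivAt.comp_hasDerivAt (0 : ℝ) (hd hA)).const_mul 2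
    simp only [Function.comp_def, reCLM_apply] at hre
    exact (hj.hasDerivAt.comp_of_eq (0 : ℝ) hre (by simp)).ofReal_comp
  have hΦ := (((ha.pow 2).mul hb.star).add ((ha.star.pow 2).mul hb)).sub
    (hJ.mul (ha.mul ha.star))
  have hzero : ∀ᶠ t : ℝ in 𝓝 0, deriv A (z + t * v) ^ 2 * star (deriv (deriv A) (z + t * v))
      + star (deriv A (z + t * v)) ^ 2 * deriv (deriv A) (z + t * v)
      - (j (2 * (A (z + t * v)).re) : ℂ) * (deriv A (z + t * v) * star (deriv A (z + t * v)))
      = 0 := by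
    have hcont : ContinuousAt (fun t : ℝ => z + t * v) 0 := by fun_prop
    filter_upwards [hcont.preimage_mem_nhds (by simpa using hΩ.mem_nhds hz)] with t ht
    exact sub_eq_zero.mpr (hE _ ht)
  have hΦ' := hΦ.unique ((hasDerivAt_const (0 : ℝ) (0 : ℂ)).congr_of_eventuallyEq hzero)
  simp only [Complex.star_def, Pi.pow_apply, Pi.mul_apply, ofReal_zero, zero_mul, add_zero]
    at hΦ'
  push_cast at hΦ' ⊢
  linear_combination hΦ'

-- `∂_z = (∂_x - i ∂_y) / 2`, taken along the directions `1` and `I`.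
lemma SatisfiesModifiedWirtinger.wirtinger_deriv_eq (hE : SatisfiesModifiedWirtinger A j Ω)
    (hΩ : IsOpen Ω) (hA : AnalyticOnNhd ℂ A Ω) {z : ℂ} (hz : z ∈ Ω)
    (hj : DifferentiableAt ℝ j (2 * (A z).re)) :
    conj (deriv A z) ^ 2 * deriv (deriv (deriv A)) z
      + 2 * deriv A z * deriv (deriv A) z * conj (deriv (deriv A) z)
      = j (2 * (A z).re) * conj (deriv A z) * deriv (deriv A) z
        + deriv j (2 * (A z).re) * deriv A z ^ 2 * conj (deriv A z) := by
  have h1 := hE.directional_deriv_eq hΩ hA hz hj 1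
  have hI := hE.directional_deriv_eq hΩ hA hz hj I
  simp only [mul_one, mul_I_re, map_mul, conj_I] at h1 hI
  push_cast at h1 hI
  linear_combination (norm := (ring_nf; simp only [I_sq]; ring)) (h1 - I * hI) / 2
    + ((deriv j (2 * (A z).re) : ℝ) : ℂ) * deriv A z * conj (deriv A z) * re_add_im (deriv A z)

end Wirtinger

lemma conj_pow_four_mul_eq_pow_four_mul_conj {a b c : ℂ} {J J' : ℝ}
    (hE : a ^ 2 * conj b + conj a ^ 2 * b = J * (a * conj a))
    (hD : conj a ^ 2 * c + 2 * a * b * conj b = J * conj a * b + J' * a ^ 2 * conj a) :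
    conj a ^ 4 * (c * a - b ^ 2) = a ^ 4 * conj (c * a - b ^ 2) := by
  have hD' : a ^ 2 * conj c + 2 * conj a * conj b * b = J * a * conj b + J' * conj a ^ 2 * a := by
    simpa [map_ofNat] using congrArg conj hD
  rw [map_sub, map_mul, map_pow]
  linear_combination (a * conj a ^ 2) * hD - (a ^ 2 * conj a) * hD'
    + (a ^ 2 * conj b - conj a ^ 2 * b) * hE

lemma Complex.im_div_eq_zero_of_conj_mul_eq {w d : ℂ} (h : conj d * w = d * conj w) :
    (w / d).im = 0 := by
  rcases eq_or_ne d 0 with rfl | hd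
  · simp
  rw [← conj_eq_iff_im, map_div₀, div_eq_div_iff ((map_ne_zero _).mpr hd) hd]
  linear_combination -h

lemma AnalyticOnNhd.exists_eq_ofReal_of_im_eq_zero {f : ℂ → ℂ} {U : Set ℂ}
    (hf : AnalyticOnNhd ℂ f U) (hU : IsOpen U) (hU' : IsPreconnected U)
    (him : ∀ z ∈ U, (f z).im = 0) : ∃ k : ℝ, ∀ z ∈ U, f z = k := by
  rcases U.eq_empty_or_nonempty with rfl | ⟨z₀, hz₀⟩
  · exact ⟨0, by simp⟩
  obtain ⟨c, hc⟩ := hf.eq_const_of_im_eq_const him hU ⟨⟨z₀, hz₀⟩, hU'⟩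
  refine ⟨c.re, fun z hz => ?_⟩
  rw [hc z hz]
  exact (conj_eq_iff_re.mp (conj_eq_iff_im.mpr (hc z₀ hz₀ ▸ him z₀ hz₀))).symm

/-- weakening: if `u(x,y) = 2·Re(A(x+iy))` with `A` holomorphic and
`A' ≠ 0` satisfies the modified equation with coefficient `j`, then there is a real
constant `k` with `A'''·A' − (A'')² = k·(A')⁴` on `Ω`. -/
theorem weakened_equation_from_modified_problem
    (Ω : Set ℂ) (hΩ : IsOpen Ω) (hconn : IsPreconnected Ω)
    (A : ℂ → ℂ) (hA : DifferentiableOn ℂ A Ω)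
    (hA' : ∀ z ∈ Ω, deriv A z ≠ 0)
    (j : ℝ → ℝ) (hj : Differentiable ℝ j)
    (u : ℝ × ℝ → ℝ)
    (hu : ∀ p : ℝ × ℝ, u p = 2 * (A (↑p.1 + ↑p.2 * Complex.I)).re)
    (hmod : SatisfiesModified u j {p : ℝ × ℝ | (↑p.1 + ↑p.2 * Complex.I) ∈ Ω}) :
    ∃ k : ℝ, ∀ z ∈ Ω,
      deriv (deriv (deriv A)) z * deriv A z - (deriv (deriv A) z) ^ 2 =
        (k : ℂ) * (deriv A z) ^ 4 := by
  have hAn := hA.analyticOnNhd hΩ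
  have hu' : u = fun q => 2 * (A (equivRealProdCLM.symm q)).re := by
    ext q; rw [hu, equivRealProdCLM_symm_apply]
  have hE : SatisfiesModifiedWirtinger A j Ω :=
    SatisfiesModified.satisfiesModifiedWirtinger hΩ hAn
      (by simpa only [hu', Set.preimage, equivRealProdCLM_symm_apply] using hmod)
  have hreal : ∀ z ∈ Ω, ((deriv (deriv (deriv A)) z * deriv A z - deriv (deriv A) z ^ 2)
      / deriv A z ^ 4).im = 0 := fun z hz =>
    Complex.im_div_eq_zero_of_conj_mul_eq (by
      simpa only [map_pow] using conj_pow_four_mul_eq_pow_four_mul_conj (hE z hz)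
        (hE.wirtinger_deriv_eq hΩ hAn hz (hj _)))
  have hdiff : DifferentiableOn ℂ
      (fun z => (deriv (deriv (deriv A)) z * deriv A z - deriv (deriv A) z ^ 2) / deriv A z ^ 4) Ω :=
    ((hAn.deriv.deriv.deriv.differentiableOn.mul hAn.deriv.differentiableOn).sub
      (hAn.deriv.deriv.differentiableOn.pow 2)).div (hAn.deriv.differentiableOn.pow 4)
      fun z hz => pow_ne_zero 4 (hA' z hz)
  obtain ⟨k, hk⟩ := (hdiff.analyticOnNhd hΩ).exists_eq_ofReal_of_im_eq_zero hΩ hconn hreal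
  exact ⟨k, fun z hz => (div_eq_iff (pow_ne_zero 4 (hA' z hz))).mp (hk z hz)⟩
end

section
/- Let Ω ⊆ ℝ² be open and connected and let f : Ω → ℝ be a smooth function such that f_xx + f_yy = 0 on Ω, f satisfies the minimal surface equation on Ω, and f_x(p)² + f_y(p)² ≠ 0 for every p ∈ Ω. Then exactly one of the following holds: (i) there exist real constants α, β, γ such that f(x, y) = α·x + β·y + γ for all (x, y) ∈ Ω (f is a plane); or (ii) there exist a real constant α ≠ 0 and a complex number w₀ such that x + i·y ≠ w₀ for all (x, y) ∈ Ω and f_x(x, y) − i·f_y(x, y) = 2i/(α·((x + i·y) − w₀)) for all (x, y) ∈ Ω (f is a helicoid with axis over w₀). -/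
section helpers
open Set Metric

lemma constOn_of_fderiv_zero {E G : Type*} [NormedAddCommGroup E] [NormedSpace ℝ E]
    [NormedAddCommGroup G] [NormedSpace ℝ G] {U : Set E} (hU : IsOpen U)
    (hc : IsPreconnected U) {F : E → G} (hd : ∀ z ∈ U, HasFDerivAt F (0 : E →L[ℝ] G) z)
    {x y : E} (hx : x ∈ U) (hy : y ∈ U) : F x = F y := by
  have key : ∀ z ∈ U, ∀ᶠ w in nhds z, F w = F z := by
    intro z hz
    obtain ⟨r, hr, hball⟩ := Metric.isOpen_iff.1 hU z hz
    have hcst : ∀ w ∈ ball z r, F w = F z := by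
      intro w hw
      refine (convex_ball z r).is_const_of_fderivWithin_eq_zero
        (fun v hv => ((hd v (hball hv)).differentiableAt).differentiableWithinAt)
        (fun v hv => ?_) hw (mem_ball_self hr)
      rw [fderivWithin_of_isOpen isOpen_ball hv, (hd v (hball hv)).fderiv]
    exact Filter.eventually_of_mem (Metric.ball_mem_nhds z hr) hcst
  by_contra hne
  set S : Set E := {z | z ∈ U ∧ F z = F y} with hS
  set T : Set E := {z | z ∈ U ∧ F z ≠ F y} with hT
  have hSo : IsOpen S := by
    rw [isOpen_iff_mem_nhds]
    rintro z ⟨hz, hFz⟩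
    filter_upwards [key z hz, hU.mem_nhds hz] with w hw hwU
    exact ⟨hwU, hw.trans hFz⟩
  have hTo : IsOpen T := by
    rw [isOpen_iff_mem_nhds]
    rintro z ⟨hz, hFz⟩
    filter_upwards [key z hz, hU.mem_nhds hz] with w hw hwU
    exact ⟨hwU, hw.symm ▸ hFz⟩
  have := hc S T hSo hTo (fun z hz => by
      by_cases h : F z = F y
      · exact Or.inl ⟨hz, h⟩
      · exact Or.inr ⟨hz, h⟩)
    ⟨y, hy, hy, rfl⟩ ⟨x, hx, hx, hne⟩
  obtain ⟨z, _, ⟨_, h1⟩, ⟨_, h2⟩⟩ := this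
  exact h2 h1

lemma constOn_of_deriv_zero {U : Set ℂ} (hU : IsOpen U) (hc : IsPreconnected U)
    {F : ℂ → ℂ} (hd : ∀ z ∈ U, HasDerivAt F 0 z)
    {x y : ℂ} (hx : x ∈ U) (hy : y ∈ U) : F x = F y := by
  refine constOn_of_fderiv_zero hU hc (fun z hz => ?_) hx hy
  have h := (hd z hz).hasFDerivAt.restrictScalars ℝ
  convert h using 1
  ext v
  simp

lemma clm_decomp {G : Type*} [NormedAddCommGroup G] [NormedSpace ℝ G]
    (L : ℝ × ℝ →L[ℝ] G) (x y : ℝ) :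
    L (x, y) = x • L (1, 0) + y • L (0, 1) := by
  have h : (x, y) = x • ((1:ℝ), (0:ℝ)) + y • ((0:ℝ), (1:ℝ)) := by
    simp [Prod.ext_iff]
  rw [h, map_add, map_smul, map_smul]

open Complex ContinuousLinearMap in
lemma keyDeriv (Ω : Set (ℝ × ℝ)) (hΩ : IsOpen Ω) (f : ℝ × ℝ → ℝ)
    (hf : ContDiffOn ℝ (⊤ : ℕ∞) f Ω)
    (hharm : ∀ p ∈ Ω, px (px f) p + py (py f) p = 0)
    {z : ℂ} (hz : (z.re, z.im) ∈ Ω) :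
    HasDerivAt (fun w : ℂ => (px f (w.re, w.im) : ℂ) - Complex.I * (py f (w.re, w.im)))
      ((px (px f) (z.re, z.im) : ℂ) - Complex.I * (py (px f) (z.re, z.im))) z := by
  set p : ℝ × ℝ := (z.re, z.im) with hp
  have hf' : ContDiffOn ℝ (⊤ : ℕ∞) (fderiv ℝ f) Ω := hf.fderiv_of_isOpen hΩ (by simp)
  have hfd : ∀ q ∈ Ω, DifferentiableAt ℝ f q := fun q hq =>
    (hf.contDiffAt (hΩ.mem_nhds hq)).differentiableAt (by simp)
  have hD2d : DifferentiableAt ℝ (fderiv ℝ f) p :=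
    (hf'.contDiffAt (hΩ.mem_nhds hz)).differentiableAt (by simp)
  set D2 := fderiv ℝ (fderiv ℝ f) p with hD2def
  have hD2 : HasFDerivAt (fderiv ℝ f) D2 p := hD2d.hasFDerivAt
  have hsym : ∀ v w, D2 v w = D2 w v :=
    second_derivative_symmetric_of_eventually
      (Filter.eventually_of_mem (hΩ.mem_nhds hz) fun q hq => (hfd q hq).hasFDerivAt) hD2
  have hA : HasFDerivAt (px f) ((ContinuousLinearMap.apply ℝ ℝ ((1:ℝ),(0:ℝ))).comp D2) p :=
    (ContinuousLinearMap.apply ℝ ℝ ((1:ℝ),(0:ℝ))).hasFDerivAt.comp p hD2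
  have hB : HasFDerivAt (py f) ((ContinuousLinearMap.apply ℝ ℝ ((0:ℝ),(1:ℝ))).comp D2) p :=
    (ContinuousLinearMap.apply ℝ ℝ ((0:ℝ),(1:ℝ))).hasFDerivAt.comp p hD2
  set a := D2 (1, 0) (1, 0) with ha
  set b := D2 (0, 1) (1, 0) with hb
  have hpx2 : px (px f) p = a := by
    rw [px, hA.fderiv]; rfl
  have hpy2 : py (px f) p = b := by
    rw [py, hA.fderiv]; rfl
  have hharm' : D2 (0, 1) (0, 1) = -a := by
    have h1 : px (px f) p + py (py f) p = 0 := hharm p hz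
    rw [px, py, hA.fderiv, hB.fderiv] at h1
    simp only [ContinuousLinearMap.comp_apply, ContinuousLinearMap.apply_apply] at h1
    linarith
  have hsym' : D2 (1, 0) (0, 1) = b := by rw [hsym (1,0) (0,1)]
  have hGA : HasFDerivAt (fun q : ℝ × ℝ => ((px f q : ℝ) : ℂ))
      (Complex.ofRealCLM.comp ((ContinuousLinearMap.apply ℝ ℝ ((1:ℝ),(0:ℝ))).comp D2)) p :=
    Complex.ofRealCLM.hasFDerivAt.comp p hA
  have hGB : HasFDerivAt (fun q : ℝ × ℝ => ((py f q : ℝ) : ℂ))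
      (Complex.ofRealCLM.comp ((ContinuousLinearMap.apply ℝ ℝ ((0:ℝ),(1:ℝ))).comp D2)) p :=
    Complex.ofRealCLM.hasFDerivAt.comp p hB
  have hG : HasFDerivAt (fun q : ℝ × ℝ => (px f q : ℂ) - Complex.I * (py f q))
      (Complex.ofRealCLM.comp ((ContinuousLinearMap.apply ℝ ℝ ((1:ℝ),(0:ℝ))).comp D2)
        - Complex.I • Complex.ofRealCLM.comp
            ((ContinuousLinearMap.apply ℝ ℝ ((0:ℝ),(1:ℝ))).comp D2)) p :=
    hGA.sub (hGB.const_mul Complex.I)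
  have he : HasFDerivAt (fun w : ℂ => ((w.re, w.im) : ℝ × ℝ))
      (Complex.equivRealProdCLM : ℂ →L[ℝ] ℝ × ℝ) z :=
    Complex.equivRealProdCLM.toContinuousLinearMap.hasFDerivAt
  have hF : HasFDerivAt (fun w : ℂ => (px f (w.re, w.im) : ℂ) - Complex.I * (py f (w.re, w.im)))
      ((Complex.ofRealCLM.comp ((ContinuousLinearMap.apply ℝ ℝ ((1:ℝ),(0:ℝ))).comp D2)
        - Complex.I • Complex.ofRealCLM.comp
            ((ContinuousLinearMap.apply ℝ ℝ ((0:ℝ),(1:ℝ))).comp D2)).comp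
        (Complex.equivRealProdCLM : ℂ →L[ℝ] ℝ × ℝ)) z := hG.comp z he
  rw [hpx2, hpy2]
  rw [hasDerivAt_iff_hasFDerivAt]
  refine hasFDerivAt_of_restrictScalars ℝ hF ?_
  apply ContinuousLinearMap.ext
  intro v
  simp only [ContinuousLinearMap.coe_restrictScalars', ContinuousLinearMap.smulRight_apply,
    ContinuousLinearMap.one_apply, ContinuousLinearMap.comp_apply,
    ContinuousLinearMap.sub_apply, ContinuousLinearMap.smul_apply,
    ContinuousLinearMap.apply_apply, Complex.ofRealCLM_apply]
  have hdec : D2 (v.re, v.im) = v.re • D2 (1, 0) + v.im • D2 (0, 1) := clm_decomp D2 v.re v.im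
  have hAv : D2 (v.re, v.im) (1, 0) = v.re * a + v.im * b := by
    rw [hdec]; simp [smul_eq_mul, ha, hb]
  have hBv : D2 (v.re, v.im) (0, 1) = v.re * b - v.im * a := by
    rw [hdec]; simp only [ContinuousLinearMap.add_apply, ContinuousLinearMap.smul_apply,
      hharm', hsym', smul_eq_mul]
    ring
  have hev : ((Complex.equivRealProdCLM : ℂ →L[ℝ] ℝ × ℝ) v) = (v.re, v.im) := rfl
  rw [hev, hAv, hBv]
  apply Complex.ext <;>
    simp [Complex.mul_re, Complex.mul_im, Complex.add_re, Complex.add_im] <;> ring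

open Complex in
lemma algA (t : ℝ) (ht : (t:ℂ) ≠ 0) (k : ℂ) :
    Complex.I * t * (-(Complex.I * k) / t) = k := by
  rw [show Complex.I * t * (-(Complex.I * k) / t) = -(Complex.I * Complex.I) * k * ((t:ℂ) / t) by ring,
    div_self ht]
  simp

open Complex in
lemma algB (t : ℝ) (ht : (t:ℂ) ≠ 0) (k z : ℂ) (hne0 : k - Complex.I * t * z ≠ 0)
    (hzw : z - (-(Complex.I * k) / t) ≠ 0) :
    (k - Complex.I * t * z)⁻¹ = 2 * Complex.I / (((2*t : ℝ):ℂ) * (z - (-(Complex.I * k) / t))) := by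
  have hd : ((2*t : ℝ):ℂ) * (z - (-(Complex.I * k) / t)) ≠ 0 := by
    apply mul_ne_zero _ hzw
    push_cast
    exact mul_ne_zero two_ne_zero ht
  rw [inv_eq_one_div, div_eq_div_iff hne0 hd]
  field_simp
  push_cast
  linear_combination (2*(t:ℂ)^2*z) * Complex.I_sq

end helpers

open Complex

/-- a harmonic minimal graph surface with nowhere-vanishing gradient is
exactly one of: a plane, or a helicoid (characterized by
`f_x − i·f_y = 2i/(α·(z − w₀))` with `α ≠ 0`). -/
theorem harmonic_mgs_plane_or_helicoid
    (Ω : Set (ℝ × ℝ)) (hΩ : IsOpen Ω) (hconn : IsConnected Ω)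
    (f : ℝ × ℝ → ℝ) (hf : ContDiffOn ℝ (⊤ : ℕ∞) f Ω)
    (hharm : ∀ p ∈ Ω, px (px f) p + py (py f) p = 0)
    (hmse : SatisfiesMSE f Ω)
    (hgrad : ∀ p ∈ Ω, (px f p) ^ 2 + (py f p) ^ 2 ≠ 0) :
    Xor'
      (∃ α β γ : ℝ, ∀ p ∈ Ω, f p = α * p.1 + β * p.2 + γ)
      (∃ α : ℝ, α ≠ 0 ∧ ∃ w₀ : ℂ,
        (∀ p ∈ Ω, (↑p.1 + ↑p.2 * Complex.I) ≠ w₀) ∧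
        ∀ p ∈ Ω,
          (↑(px f p) : ℂ) - Complex.I * ↑(py f p) =
            2 * Complex.I / (↑α * ((↑p.1 + ↑p.2 * Complex.I) - w₀))) := by

  classical
  obtain ⟨p₀, hp₀⟩ := hconn.nonempty
  have hcoord : ∀ p : ℝ × ℝ,
      ((((p.1 : ℂ) + p.2 * Complex.I).re, ((p.1 : ℂ) + p.2 * Complex.I).im) : ℝ × ℝ) = p := by
    intro p; simp [Prod.ext_iff]
  set U : Set ℂ := (fun z : ℂ => ((z.re, z.im) : ℝ × ℝ)) ⁻¹' Ω with hUdef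
  have hUopen : IsOpen U := hΩ.preimage (Complex.continuous_re.prodMk Complex.continuous_im)
  have hmemU : ∀ p ∈ Ω, ((p.1 : ℂ) + p.2 * Complex.I) ∈ U := by
    intro p hp
    rw [hUdef, Set.mem_preimage, hcoord]
    exact hp
  have hUconn : IsPreconnected U := by
    have himg : U = (fun p : ℝ × ℝ => (p.1 : ℂ) + p.2 * Complex.I) '' Ω := by
      ext z
      constructor
      · intro hz
        exact ⟨(z.re, z.im), hz, by simp [Complex.ext_iff]⟩
      · rintro ⟨p, hp, rfl⟩
        rw [Set.mem_preimage, hcoord]; exact hp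
    rw [himg]
    exact (hconn.image _ (Continuous.continuousOn (by continuity))).isPreconnected
  set F : ℂ → ℂ := fun w => (px f (w.re, w.im) : ℂ) - Complex.I * (py f (w.re, w.im)) with hFdef
  set c : ℂ → ℂ :=
    fun w => (px (px f) (w.re, w.im) : ℂ) - Complex.I * (py (px f) (w.re, w.im)) with hcdef
  have hder : ∀ z ∈ U, HasDerivAt F (c z) z := fun z hz => keyDeriv Ω hΩ f hf hharm hz
  have hFne : ∀ z ∈ U, F z ≠ 0 := by
    intro z hz h0
    apply hgrad (z.re, z.im) hz
    rw [Complex.ext_iff] at h0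
    simp only [hFdef, Complex.sub_re, Complex.sub_im, Complex.ofReal_re, Complex.ofReal_im,
      Complex.mul_re, Complex.mul_im, Complex.I_re, Complex.I_im, Complex.zero_re,
      Complex.zero_im] at h0
    nlinarith [h0.1, h0.2]
  have hFanal : AnalyticOnNhd ℂ F U :=
    DifferentiableOn.analyticOnNhd
      (fun z hz => (hder z hz).differentiableAt.differentiableWithinAt) hUopen
  have hderivF : ∀ z ∈ U, deriv F z = c z := fun z hz => (hder z hz).deriv
  set H : ℂ → ℂ := fun z => deriv F z / (F z) ^ 2 with hHdef
  have hHanal : AnalyticOnNhd ℂ H U :=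
    (hFanal.deriv_of_isOpen hUopen).div (hFanal.pow 2)
      (fun z hz => pow_ne_zero 2 (hFne z hz))
  have hHre : ∀ z ∈ U, (H z).re = 0 := by
    intro z hz
    have hp : ((z.re, z.im) : ℝ × ℝ) ∈ Ω := hz
    set A := px f (z.re, z.im)
    set B := py f (z.re, z.im)
    set C := px (px f) (z.re, z.im)
    set D := py (px f) (z.re, z.im)
    set E := py (py f) (z.re, z.im)
    have h1 : (1 + B ^ 2) * C - 2 * D * A * B + (1 + A ^ 2) * E = 0 := hmse _ hp
    have h2 : C + E = 0 := hharm _ hp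
    have hFz : F z = (A : ℂ) - Complex.I * B := rfl
    have hcz : c z = (C : ℂ) - Complex.I * D := rfl
    have hnum : (c z).re * ((F z) ^ 2).re + (c z).im * ((F z) ^ 2).im = 0 := by
      rw [hFz, hcz]
      simp only [pow_two, Complex.mul_re, Complex.mul_im, Complex.sub_re, Complex.sub_im,
        Complex.ofReal_re, Complex.ofReal_im, Complex.I_re, Complex.I_im]
      ring_nf
      nlinarith [h1, h2]
    simp only [hHdef]
    rw [hderivF z hz, Complex.div_re, ← add_div, hnum, zero_div]
  set z₀ : ℂ := (p₀.1 : ℂ) + p₀.2 * Complex.I with hz₀def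
  have hz₀ : z₀ ∈ U := hmemU p₀ hp₀
  have hkey : (∃ α β γ : ℝ, ∀ p ∈ Ω, f p = α * p.1 + β * p.2 + γ) ∨
      (∃ α : ℝ, α ≠ 0 ∧ ∃ w₀ : ℂ,
        (∀ p ∈ Ω, (↑p.1 + ↑p.2 * Complex.I) ≠ w₀) ∧
        ∀ p ∈ Ω,
          (↑(px f p) : ℂ) - Complex.I * ↑(py f p) =
            2 * Complex.I / (↑α * ((↑p.1 + ↑p.2 * Complex.I) - w₀))) := by
    rcases hHanal.is_constant_or_isOpen hUconn with ⟨w, hw⟩ | hopen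
    swap
    · exfalso
      have himgopen : IsOpen (H '' U) := hopen U subset_rfl hUopen
      obtain ⟨ε, hε, hball⟩ := Metric.isOpen_iff.1 himgopen _ ⟨z₀, hz₀, rfl⟩
      have hmem : H z₀ + ((ε/2 : ℝ) : ℂ) ∈ Metric.ball (H z₀) ε := by
        rw [Metric.mem_ball, Complex.dist_eq]
        simp only [add_sub_cancel_left, Complex.norm_real, Real.norm_eq_abs]
        rw [abs_of_pos (by linarith)]
        linarith
      obtain ⟨z, hzU, hz⟩ := hball hmem
      have h1 := hHre z hzU
      have h2 := hHre z₀ hz₀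
      rw [hz] at h1
      simp only [Complex.add_re, Complex.ofReal_re] at h1
      rw [h2] at h1
      linarith
    · -- H is constant w, with w.re = 0
      have hwre : w.re = 0 := by rw [← hw z₀ hz₀]; exact hHre z₀ hz₀
      set t := w.im with htdef
      have hwI : w = Complex.I * (t : ℂ) := by
        apply Complex.ext <;> simp [hwre, htdef]
      have hckey : ∀ z ∈ U, c z = Complex.I * (t : ℂ) * (F z) ^ 2 := by
        intro z hz
        have h1 := hw z hz
        simp only [hHdef] at h1
        rw [hderivF z hz, div_eq_iff (pow_ne_zero 2 (hFne z hz))] at h1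
        rw [h1, hwI]
      by_cases ht : t = 0
      · -- plane case
        left
        have hF0 : ∀ z ∈ U, HasDerivAt F 0 z := by
          intro z hz
          have h := hder z hz
          rw [hckey z hz] at h
          simpa [ht] using h
        have hFc : ∀ z ∈ U, F z = F z₀ :=
          fun z hz => constOn_of_deriv_zero hUopen hUconn hF0 hz hz₀
        set α := px f p₀ with hα
        set β := py f p₀ with hβ
        have hFz₀ : F z₀ = (α : ℂ) - Complex.I * (β : ℂ) := by
          simp only [hFdef, hz₀def, hcoord p₀, hα, hβ]
        have hpxy : ∀ p ∈ Ω, px f p = α ∧ py f p = β := by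
          intro p hp
          have h := hFc _ (hmemU p hp)
          rw [hFz₀] at h
          simp only [hFdef, hcoord p] at h
          rw [Complex.ext_iff] at h
          simp only [Complex.sub_re, Complex.sub_im, Complex.ofReal_re, Complex.ofReal_im,
            Complex.mul_re, Complex.mul_im, Complex.I_re, Complex.I_im] at h
          obtain ⟨h1', h2'⟩ := h
          constructor
          · linarith
          · linarith
        set L : ℝ × ℝ →L[ℝ] ℝ :=
          α • (ContinuousLinearMap.fst ℝ ℝ ℝ) + β • (ContinuousLinearMap.snd ℝ ℝ ℝ) with hLdef
        have hg0 : ∀ p ∈ Ω,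
            HasFDerivAt (fun q : ℝ × ℝ => f q - (α * q.1 + β * q.2)) (0 : ℝ × ℝ →L[ℝ] ℝ) p := by
          intro p hp
          have hfd : DifferentiableAt ℝ f p :=
            ((hf.contDiffAt (hΩ.mem_nhds hp)).differentiableAt (by simp))
          have h1 : HasFDerivAt f (fderiv ℝ f p) p := hfd.hasFDerivAt
          have hLf : HasFDerivAt (fun q : ℝ × ℝ => α * q.1 + β * q.2) L p := by
            have h := L.hasFDerivAt (x := p)
            convert h using 2 with q
            simp [hLdef]
          have h2 := h1.sub hLf
          refine h2.congr_fderiv ?_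
          rw [sub_eq_zero]
          apply ContinuousLinearMap.ext
          intro v
          have hv : fderiv ℝ f p v = v.1 * px f p + v.2 * py f p := by
            have := clm_decomp (fderiv ℝ f p) v.1 v.2
            simpa [px, py, smul_eq_mul] using this
          rw [hv, (hpxy p hp).1, (hpxy p hp).2]
          simp [hLdef]
          ring
        have hgc : ∀ p ∈ Ω, f p - (α * p.1 + β * p.2) = f p₀ - (α * p₀.1 + β * p₀.2) :=
          fun p hp => constOn_of_fderiv_zero hΩ hconn.isPreconnected hg0 hp hp₀
        exact ⟨α, β, f p₀ - (α * p₀.1 + β * p₀.2), fun p hp => by linarith [hgc p hp]⟩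
      · -- helicoid case
        right
        have hK0 : ∀ z ∈ U,
            HasDerivAt (fun w : ℂ => (F w)⁻¹ + Complex.I * (t : ℂ) * w) 0 z := by
          intro z hz
          have h1 := (hder z hz).inv (hFne z hz)
          have h2 : HasDerivAt (fun w : ℂ => Complex.I * (t : ℂ) * w)
              (Complex.I * (t : ℂ)) z := by
            simpa using (hasDerivAt_id z).const_mul (Complex.I * (t : ℂ))
          have h3 := h1.add h2
          refine h3.congr_deriv ?_
          rw [hckey z hz]
          have hF2 : (F z) ^ 2 ≠ 0 := pow_ne_zero 2 (hFne z hz)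
          field_simp
          rw [div_self (hFne z hz)]; ring
        set k : ℂ := (F z₀)⁻¹ + Complex.I * (t : ℂ) * z₀ with hkdef
        have hKc : ∀ z ∈ U, (F z)⁻¹ + Complex.I * (t : ℂ) * z = k :=
          fun z hz => constOn_of_deriv_zero hUopen hUconn hK0 hz hz₀
        have htC : (t : ℂ) ≠ 0 := Complex.ofReal_ne_zero.2 ht
        refine ⟨2 * t, mul_ne_zero two_ne_zero ht, -(Complex.I * k) / (t : ℂ), ?_, ?_⟩
        · intro p hp h
          set z : ℂ := (p.1 : ℂ) + p.2 * Complex.I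
          have hz : z ∈ U := hmemU p hp
          have hinv : (F z)⁻¹ = k - Complex.I * (t : ℂ) * z := by
            have := hKc z hz
            linear_combination this
          have hne0 : k - Complex.I * (t : ℂ) * z ≠ 0 := by
            rw [← hinv]
            exact inv_ne_zero (hFne z hz)
          apply hne0
          rw [h, algA t htC k, sub_self]
        · intro p hp
          set z : ℂ := (p.1 : ℂ) + p.2 * Complex.I with hzdef
          have hz : z ∈ U := hmemU p hp
          have hinv : (F z)⁻¹ = k - Complex.I * (t : ℂ) * z := by
            have := hKc z hz
            linear_combination this
          have hne0 : k - Complex.I * (t : ℂ) * z ≠ 0 := by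
            rw [← hinv]
            exact inv_ne_zero (hFne z hz)
          have hzw : z - (-(Complex.I * k) / (t : ℂ)) ≠ 0 := by
            intro h
            apply hne0
            rw [sub_eq_zero] at h
            rw [h, algA t htC k, sub_self]
          have hFz : F z = (k - Complex.I * (t : ℂ) * z)⁻¹ := by
            rw [← hinv, inv_inv]
          have hLHS : (↑(px f p) : ℂ) - Complex.I * ↑(py f p) = F z := by
            simp only [hFdef, hzdef, hcoord p]
          rw [hLHS, hFz]
          exact algB t htC k z hne0 hzw
  have hnotboth : ¬((∃ α β γ : ℝ, ∀ p ∈ Ω, f p = α * p.1 + β * p.2 + γ) ∧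
      (∃ α : ℝ, α ≠ 0 ∧ ∃ w₀ : ℂ,
        (∀ p ∈ Ω, (↑p.1 + ↑p.2 * Complex.I) ≠ w₀) ∧
        ∀ p ∈ Ω,
          (↑(px f p) : ℂ) - Complex.I * ↑(py f p) =
            2 * Complex.I / (↑α * ((↑p.1 + ↑p.2 * Complex.I) - w₀)))) := by
    rintro ⟨⟨α, β, γ, hPlane⟩, α', hα', w₀, hne, hHel⟩
    set L : ℝ × ℝ →L[ℝ] ℝ :=
      α • (ContinuousLinearMap.fst ℝ ℝ ℝ) + β • (ContinuousLinearMap.snd ℝ ℝ ℝ) with hLdef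
    have hpxy : ∀ p ∈ Ω, px f p = α ∧ py f p = β := by
      intro p hp
      have hev : f =ᶠ[nhds p] (fun q : ℝ × ℝ => α * q.1 + β * q.2 + γ) :=
        Filter.eventually_of_mem (hΩ.mem_nhds hp) hPlane
      have haff : HasFDerivAt (fun q : ℝ × ℝ => α * q.1 + β * q.2 + γ) L p := by
        have h := (L.hasFDerivAt (x := p)).add_const γ
        refine h.congr_of_eventuallyEq (Filter.Eventually.of_forall fun q => ?_)
        simp [hLdef]
      have hfd : fderiv ℝ f p = L := by
        rw [hev.fderiv_eq, haff.fderiv]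
      constructor
      · rw [px, hfd]; simp [hLdef]
      · rw [py, hfd]; simp [hLdef]
    obtain ⟨ε, hε, hball⟩ := Metric.isOpen_iff.1 hΩ p₀ hp₀
    set p₁ : ℝ × ℝ := (p₀.1 + ε/2, p₀.2) with hp₁def
    have hp₁ : p₁ ∈ Ω := by
      apply hball
      rw [Metric.mem_ball, Prod.dist_eq]
      simp only [hp₁def, Real.dist_eq, add_sub_cancel_left, sub_self, abs_zero]
      rw [max_eq_left (abs_nonneg _), abs_of_pos (by linarith)]
      linarith
    have h₀ := hHel p₀ hp₀
    have h₁ := hHel p₁ hp₁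
    rw [(hpxy p₀ hp₀).1, (hpxy p₀ hp₀).2] at h₀
    rw [(hpxy p₁ hp₁).1, (hpxy p₁ hp₁).2] at h₁
    have heq := h₀.symm.trans h₁
    set w₁ : ℂ := (p₀.1 : ℂ) + p₀.2 * Complex.I with hw₁def
    set w₂ : ℂ := (p₁.1 : ℂ) + p₁.2 * Complex.I with hw₂def
    have hd₁ : (α' : ℂ) * (w₁ - w₀) ≠ 0 :=
      mul_ne_zero (Complex.ofReal_ne_zero.2 hα') (sub_ne_zero.2 (hne p₀ hp₀))
    have hd₂ : (α' : ℂ) * (w₂ - w₀) ≠ 0 :=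
      mul_ne_zero (Complex.ofReal_ne_zero.2 hα') (sub_ne_zero.2 (hne p₁ hp₁))
    rw [div_eq_div_iff hd₁ hd₂] at heq
    have h2I : (2 : ℂ) * Complex.I ≠ 0 := by
      simp [Complex.I_ne_zero]
    have hcan := mul_left_cancel₀ h2I heq
    have hw : w₁ = w₂ := by
      have h' := mul_left_cancel₀ (Complex.ofReal_ne_zero.2 hα') hcan
      linear_combination -h'
    have hre : w₁.re = w₂.re := by rw [hw]
    simp only [hw₁def, hw₂def, hp₁def, Complex.add_re, Complex.ofReal_re, Complex.mul_re,
      Complex.I_re, Complex.I_im, Complex.ofReal_im] at hre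
    simp at hre
    linarith
  rcases hkey with h | h
  · exact Or.inl ⟨h, fun hb => hnotboth ⟨h, hb⟩⟩
  · exact Or.inr ⟨h, fun ha => hnotboth ⟨ha, h⟩⟩
end

section
/- Let a ∈ ℂ with a ≠ 0, let b ∈ ℂ, and let c ∈ ℝ. Define u : ℝ² → ℝ by u(x, y) = 2·Re(a⁻¹·exp(a·(x + i·y) + b)) + c. Then u is smooth, u_xx + u_yy = 0 on ℝ², and u satisfies the modified equation with coefficient function j(s) = |a|²·(s − c) at every point of ℝ². -/
noncomputable def phiL : ℝ × ℝ →L[ℝ] ℂ :=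
  Complex.ofRealCLM.comp (ContinuousLinearMap.fst ℝ ℝ ℝ) +
    Complex.I • Complex.ofRealCLM.comp (ContinuousLinearMap.snd ℝ ℝ ℝ)

lemma phiL_apply (h : ℝ × ℝ) : phiL h = ↑h.1 + ↑h.2 * Complex.I := by
  simp [phiL, mul_comm]

/-- The basic family of functions. -/
noncomputable def V (a b w : ℂ) (q : ℝ × ℝ) : ℝ :=
  2 * (w * Complex.exp (a * (↑q.1 + ↑q.2 * Complex.I) + b)).re

lemma contDiff_V (a b w : ℂ) : ContDiff ℝ (⊤ : ℕ∞) (V a b w) := by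
  have h1 : ContDiff ℝ (⊤ : ℕ∞) (fun q : ℝ × ℝ => a * (↑q.1 + ↑q.2 * Complex.I) + b) := by
    have : (fun q : ℝ × ℝ => a * (↑q.1 + ↑q.2 * Complex.I) + b)
        = fun q : ℝ × ℝ => a * phiL q + b := by
      funext q; rw [phiL_apply]
    rw [this]
    exact (contDiff_const.mul phiL.contDiff).add contDiff_const
  have h2 : ContDiff ℝ (⊤ : ℕ∞) (fun q : ℝ × ℝ =>
      w * Complex.exp (a * (↑q.1 + ↑q.2 * Complex.I) + b)) :=
    contDiff_const.mul (Complex.contDiff_exp.comp h1)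
  exact contDiff_const.mul (Complex.reCLM.contDiff.comp h2)

lemma hasFDerivAt_V (a b w : ℂ) (p : ℝ × ℝ) :
    HasFDerivAt (V a b w)
      ((2 : ℝ) • Complex.reCLM.comp
        ((w • (Complex.exp (a * (↑p.1 + ↑p.2 * Complex.I) + b) • (a • phiL))))) p := by
  have h0 : HasFDerivAt (fun q : ℝ × ℝ => (↑q.1 + ↑q.2 * Complex.I)) phiL p := by
    have := phiL.hasFDerivAt (x := p)
    rwa [show (⇑phiL) = fun q : ℝ × ℝ => (↑q.1 + ↑q.2 * Complex.I) from funext phiL_apply] at this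
  have h1 : HasFDerivAt (fun q : ℝ × ℝ => a * (↑q.1 + ↑q.2 * Complex.I) + b) (a • phiL) p :=
    (h0.const_mul a).add_const b
  have h2 := (Complex.hasDerivAt_exp (a * (↑p.1 + ↑p.2 * Complex.I) + b)).comp_hasFDerivAt p h1
  have h3 := h2.const_mul w
  have h4 := (Complex.reCLM.hasFDerivAt).comp p h3
  exact h4.const_mul (2 : ℝ)

lemma px_V (a b w : ℂ) : px (V a b w) = V a b (w * a) := by
  funext p
  rw [px, (hasFDerivAt_V a b w p).fderiv]
  simp [V, phiL_apply]
  ring_nf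

lemma py_V (a b w : ℂ) : py (V a b w) = V a b (w * a * Complex.I) := by
  funext p
  rw [py, (hasFDerivAt_V a b w p).fderiv]
  simp [V, phiL_apply]
  ring_nf

/-- case `k = 0`: `u(x,y) = 2·Re(a⁻¹·e^{a(x+iy)+b}) + c` is smooth,
harmonic, and satisfies the modified equation with `j(s) = |a|²·(s − c)` on all of `ℝ²`. -/
theorem scherk_modified_solution
    (a : ℂ) (ha : a ≠ 0) (b : ℂ) (c : ℝ)
    (u : ℝ × ℝ → ℝ)
    (hudef : ∀ p : ℝ × ℝ,
      u p = 2 * (a⁻¹ * Complex.exp (a * (↑p.1 + ↑p.2 * Complex.I) + b)).re + c) :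
    ContDiff ℝ (⊤ : ℕ∞) u ∧
      (∀ p : ℝ × ℝ, px (px u) p + py (py u) p = 0) ∧
      SatisfiesModified u (fun s => ‖a‖ ^ 2 * (s - c)) Set.univ := by
  have hu : u = fun p => V a b a⁻¹ p + c := funext fun p => hudef p
  subst hu
  have hinv : a⁻¹ * a = 1 := inv_mul_cancel₀ ha
  have hpx : px (fun q => V a b a⁻¹ q + c) = V a b 1 := by
    funext p
    show fderiv ℝ (fun q => V a b a⁻¹ q + c) p (1, 0) = V a b 1 p
    rw [fderiv_add_const]
    show px (V a b a⁻¹) p = V a b 1 p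
    rw [px_V, hinv]
  have hpy : py (fun q => V a b a⁻¹ q + c) = V a b Complex.I := by
    funext p
    show fderiv ℝ (fun q => V a b a⁻¹ q + c) p (0, 1) = V a b Complex.I p
    rw [fderiv_add_const]
    show py (V a b a⁻¹) p = V a b Complex.I p
    rw [py_V, hinv, one_mul]
  have hns : Complex.normSq a ≠ 0 := (Complex.normSq_pos.mpr ha).ne'
  refine ⟨(contDiff_V a b a⁻¹).add contDiff_const, ?_, ?_⟩
  · intro p
    rw [hpx, hpy, px_V, py_V]
    simp [V, Complex.mul_re, Complex.mul_im, Complex.I_re, Complex.I_im]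
    ring
  · intro p _
    simp only [hpx, hpy, px_V, py_V]
    simp only [V, Complex.sq_norm, add_sub_cancel_right]
    simp [Complex.mul_re, Complex.mul_im, Complex.I_re, Complex.I_im,
      Complex.inv_re, Complex.inv_im, Complex.normSq_apply]
    have hns' : a.re * a.re + a.im * a.im ≠ 0 := by
      simpa [Complex.normSq_apply] using hns
    have hns'' : a.re ^ 2 + a.im ^ 2 ≠ 0 := by simpa [sq] using hns'
    field_simp [hns', hns'']
    ring
end

section
/- Let a ∈ ℂ with a ≠ 0, let b ∈ ℂ, let C₂ ∈ ℝ and C₃ ≠ 0 be real constants, and define q : ℝ² → ℝ by q(x, y) = (2/C₃²)·Re(a⁻¹·exp(a·(x + i·y) + b)). Let Ω ⊆ ℝ² be an open set on which |q(x, y)| < 1, and define f : Ω → ℝ by f(x, y) = |a|⁻¹·arcsin(q(x, y)) − C₂. Then f is smooth on Ω, f satisfies the minimal surface equation on Ω, and f_xx(p) + f_yy(p) = h(f(p))·(f_x(p)² + f_y(p)²) for all p ∈ Ω, where h(s) = |a|·tan(|a|·(s + C₂)). (This f is Scherk's first surface up to a rigid motion and uniform scaling.) -/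
/-! ### Auxiliary machinery -/

/-- The ℝ-linear map `(u,v) ↦ ((u + v·i)·w).re`. -/
noncomputable def D2' (w : ℂ) : (ℝ × ℝ) →L[ℝ] ℝ :=
  Complex.reCLM.comp ((((1 : ℂ →L[ℂ] ℂ).smulRight w).restrictScalars ℝ).comp
    (Complex.equivRealProdCLM.symm : (ℝ × ℝ) ≃L[ℝ] ℂ).toContinuousLinearMap)

lemma D2'_apply (w : ℂ) (u v : ℝ) : D2' w (u, v) = ((↑u + ↑v * Complex.I) * w).re := by
  simp [D2', Complex.equivRealProdCLM_symm_apply, Complex.mul_re]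

lemma D2'_apply_10 (w : ℂ) : D2' w (1, 0) = w.re := by
  have := D2'_apply w 1 0; simpa using this

lemma D2'_apply_01 (w : ℂ) : D2' w (0, 1) = -w.im := by
  have := D2'_apply w 0 1; simp [Complex.mul_re] at this; simpa using this

lemma hasFDerivAt_reComp (g g' : ℂ → ℂ) (p : ℝ × ℝ)
    (hg : HasDerivAt g (g' (↑p.1 + ↑p.2 * Complex.I)) (↑p.1 + ↑p.2 * Complex.I)) :
    HasFDerivAt (fun p : ℝ × ℝ => (g (↑p.1 + ↑p.2 * Complex.I)).re)
      (D2' (g' (↑p.1 + ↑p.2 * Complex.I))) p := by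
  have hL : HasFDerivAt (fun p : ℝ × ℝ => (↑p.1 + ↑p.2 * Complex.I : ℂ))
      ((Complex.equivRealProdCLM.symm : (ℝ × ℝ) ≃L[ℝ] ℂ).toContinuousLinearMap) p := by
    have := (Complex.equivRealProdCLM.symm : (ℝ × ℝ) ≃L[ℝ] ℂ).toContinuousLinearMap.hasFDerivAt (x := p)
    convert this using 2 with r
    simp [Complex.equivRealProdCLM_symm_apply]
  have hgF : HasFDerivAt g
      (((1 : ℂ →L[ℂ] ℂ).smulRight (g' (↑p.1 + ↑p.2 * Complex.I))).restrictScalars ℝ)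
      (↑p.1 + ↑p.2 * Complex.I) := hg.hasFDerivAt.restrictScalars ℝ
  exact Complex.reCLM.hasFDerivAt.comp _ (hgF.comp p hL)

noncomputable def G0' (a b : ℂ) (c : ℝ) (z : ℂ) : ℂ := ↑c * a⁻¹ * Complex.exp (a * z + b)
noncomputable def G1' (a b : ℂ) (c : ℝ) (z : ℂ) : ℂ := ↑c * Complex.exp (a * z + b)
noncomputable def G2' (a b : ℂ) (c : ℝ) (z : ℂ) : ℂ := ↑c * a * Complex.exp (a * z + b)

lemma hasDerivAt_exp_affine (a b z : ℂ) :
    HasDerivAt (fun z => Complex.exp (a * z + b)) (Complex.exp (a * z + b) * a) z := by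
  have := (((hasDerivAt_id z).const_mul a).add_const b).cexp
  simpa using this

lemma hasDerivAt_G0' (a : ℂ) (ha : a ≠ 0) (b : ℂ) (c : ℝ) (z : ℂ) :
    HasDerivAt (G0' a b c) (G1' a b c z) z := by
  have h := (hasDerivAt_exp_affine a b z).const_mul ((c : ℂ) * a⁻¹)
  have h2 : (c : ℂ) * a⁻¹ * (Complex.exp (a * z + b) * a) = G1' a b c z := by
    unfold G1'; field_simp
  exact h2 ▸ h

lemma hasDerivAt_G1' (a b : ℂ) (c : ℝ) (z : ℂ) :
    HasDerivAt (G1' a b c) (G2' a b c z) z := by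
  have h := (hasDerivAt_exp_affine a b z).const_mul ((c : ℂ))
  have h2 : (c : ℂ) * (Complex.exp (a * z + b) * a) = G2' a b c z := by
    unfold G2'; ring
  exact h2 ▸ h

lemma G1'_eq (a : ℂ) (ha : a ≠ 0) (b : ℂ) (c : ℝ) (z : ℂ) :
    G1' a b c z = a * G0' a b c z := by
  unfold G0' G1'; field_simp

lemma G2'_eq (a b : ℂ) (c : ℝ) (z : ℂ) :
    G2' a b c z = a * G1' a b c z := by
  unfold G1' G2'; ring

noncomputable def Afun (α t : ℝ) : ℝ := α⁻¹ * (1 / Real.sqrt (1 - t ^ 2))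
noncomputable def Ader (α t : ℝ) : ℝ := α⁻¹ * (t / ((1 - t ^ 2) * Real.sqrt (1 - t ^ 2)))

lemma hasDerivAt_Afun (α : ℝ) {t : ℝ} (ht : t ^ 2 < 1) :
    HasDerivAt (Afun α) (Ader α t) t := by
  have hpos : (0 : ℝ) < 1 - t ^ 2 := by linarith
  have hsqrt : Real.sqrt (1 - t ^ 2) ≠ 0 := by positivity
  have h1 : HasDerivAt (fun t : ℝ => 1 - t ^ 2) (-(2 * t)) t := by
    simpa using ((hasDerivAt_pow 2 t).const_sub 1)
  have h2 : HasDerivAt (fun t : ℝ => Real.sqrt (1 - t ^ 2))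
      (1 / (2 * Real.sqrt (1 - t ^ 2)) * (-(2 * t))) t :=
    (Real.hasDerivAt_sqrt hpos.ne').comp t h1
  have h3 := (h2.inv hsqrt).const_mul α⁻¹
  have heq : Afun α = fun t : ℝ => α⁻¹ * (Real.sqrt (1 - t ^ 2))⁻¹ := by
    funext t; unfold Afun; rw [one_div]
  rw [heq]
  have hsq : Real.sqrt (1 - t ^ 2) ^ 2 = 1 - t ^ 2 := Real.sq_sqrt hpos.le
  have e1 : -(1 / (2 * Real.sqrt (1 - t ^ 2)) * -(2 * t)) = t / Real.sqrt (1 - t ^ 2) := by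
    field_simp
  have h4 : α⁻¹ * (-(1 / (2 * Real.sqrt (1 - t ^ 2)) * -(2 * t)) / Real.sqrt (1 - t ^ 2) ^ 2)
      = Ader α t := by
    unfold Ader
    rw [e1, div_div, mul_comm (Real.sqrt (1 - t ^ 2)) (Real.sqrt (1 - t ^ 2) ^ 2), hsq]
  exact h4 ▸ h3

lemma lap_algebra (α s u x1 y1 x2 : ℝ) (hα : α ≠ 0) (hs : s ≠ 0) (hs2 : s ^ 2 = 1 - u ^ 2) :
    (α⁻¹ * (1 / s)) * x2 + x1 * ((α⁻¹ * (u / ((1 - u ^ 2) * s))) * x1)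
      + ((α⁻¹ * (1 / s)) * (-x2) + (-y1) * ((α⁻¹ * (u / ((1 - u ^ 2) * s))) * (-y1)))
      = (α * (u / s)) * (((α⁻¹ * (1 / s)) * x1) ^ 2 + ((α⁻¹ * (1 / s)) * (-y1)) ^ 2) := by
  rw [← hs2]
  field_simp
  ring

lemma mse_algebra (α s u x1 y1 ar ai : ℝ) (hα : α ≠ 0) (hs : s ≠ 0)
    (hs2 : s ^ 2 = 1 - u ^ 2) (hkey : ar * x1 + ai * y1 = α ^ 2 * u) :
    (1 + ((α⁻¹ * (1 / s)) * (-y1)) ^ 2)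
        * ((α⁻¹ * (1 / s)) * (ar * x1 - ai * y1) + x1 * ((α⁻¹ * (u / ((1 - u ^ 2) * s))) * x1))
      - 2 * ((α⁻¹ * (1 / s)) * (-(ai * x1 + ar * y1)) + x1 * ((α⁻¹ * (u / ((1 - u ^ 2) * s))) * (-y1)))
          * ((α⁻¹ * (1 / s)) * x1) * ((α⁻¹ * (1 / s)) * (-y1))
      + (1 + ((α⁻¹ * (1 / s)) * x1) ^ 2)
        * ((α⁻¹ * (1 / s)) * (-(ar * x1 - ai * y1)) + (-y1) * ((α⁻¹ * (u / ((1 - u ^ 2) * s))) * (-y1)))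
      = 0 := by
  rw [← hs2]
  field_simp
  linear_combination (-(s ^ 2)) * (x1 ^ 2 + y1 ^ 2) * hkey

set_option maxHeartbeats 16000000 in
/-- Scherk's first surface, case `k = 0`:
`f = |a|⁻¹·arcsin(q) − C₂` with `q = (2/C₃²)·Re(a⁻¹·e^{a(x+iy)+b})` is a minimal graph
surface with first characteristic function `h(s) = |a|·tan(|a|·(s + C₂))`. -/
theorem scherk_first_surface_mgs
    (a : ℂ) (ha : a ≠ 0) (b : ℂ) (C₂ C₃ : ℝ) (hC₃ : C₃ ≠ 0)
    (q : ℝ × ℝ → ℝ)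
    (hqdef : ∀ p : ℝ × ℝ,
      q p = (2 / C₃ ^ 2) * (a⁻¹ * Complex.exp (a * (↑p.1 + ↑p.2 * Complex.I) + b)).re)
    (Ω : Set (ℝ × ℝ)) (hΩ : IsOpen Ω) (hqlt : ∀ p ∈ Ω, |q p| < 1)
    (f : ℝ × ℝ → ℝ)
    (hfdef : ∀ p : ℝ × ℝ,
      f p = (‖a‖)⁻¹ * Real.arcsin (q p) - C₂) :
    ContDiffOn ℝ (⊤ : ℕ∞) f Ω ∧
      SatisfiesMSE f Ω ∧
      ∀ p ∈ Ω,
        px (px f) p + py (py f) p =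
          (‖a‖ * Real.tan (‖a‖ * (f p + C₂))) *
            ((px f p) ^ 2 + (py f p) ^ 2) := by
  set c : ℝ := 2 / C₃ ^ 2 with hc
  set α : ℝ := ‖a‖ with hαdef
  have hαpos : 0 < α := norm_pos_iff.mpr ha
  have hαne : α ≠ 0 := ne_of_gt hαpos
  have hα2 : α ^ 2 = a.re ^ 2 + a.im ^ 2 := by
    rw [hαdef, Complex.sq_norm, Complex.normSq_apply]; ring
  have hqG : q = fun p : ℝ × ℝ => (G0' a b c (↑p.1 + ↑p.2 * Complex.I)).re := by
    funext p; rw [hqdef p]; unfold G0'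
    rw [mul_assoc, Complex.re_ofReal_mul]
  -- smoothness of q
  have hzc : ContDiff ℝ (⊤ : ℕ∞) (fun p : ℝ × ℝ => (↑p.1 + ↑p.2 * Complex.I : ℂ)) := by
    apply ContDiff.add
    · exact Complex.ofRealCLM.contDiff.comp contDiff_fst
    · exact (Complex.ofRealCLM.contDiff.comp contDiff_snd).mul contDiff_const
  have hqc : ContDiff ℝ (⊤ : ℕ∞) q := by
    rw [hqG]; unfold G0'
    exact Complex.reCLM.contDiff.comp
      (contDiff_const.mul ((Complex.contDiff_exp (𝕜 := ℝ)).comp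
        ((contDiff_const.mul hzc).add contDiff_const)))
  set U : Set (ℝ × ℝ) := {p : ℝ × ℝ | |q p| < 1} with hUdef
  have hUopen : IsOpen U := isOpen_lt (continuous_abs.comp hqc.continuous) continuous_const
  have hΩU : ∀ p ∈ Ω, p ∈ U := fun p hp => hqlt p hp
  have hbound : ∀ p ∈ U, (q p) ^ 2 < 1 := by
    intro p hp
    have h : |q p| < 1 := hp
    nlinarith [abs_nonneg (q p), sq_abs (q p)]
  have hne1 : ∀ p ∈ U, q p ≠ -1 := by
    intro p hp h
    have h2 : |q p| < 1 := hp
    rw [h] at h2; norm_num at h2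
  have hne1' : ∀ p ∈ U, q p ≠ 1 := by
    intro p hp h
    have h2 : |q p| < 1 := hp
    rw [h] at h2; norm_num at h2
  -- derivative of q
  have hq' : ∀ p : ℝ × ℝ, HasFDerivAt q (D2' (G1' a b c (↑p.1 + ↑p.2 * Complex.I))) p := by
    intro p
    rw [hqG]
    exact hasFDerivAt_reComp _ (G1' a b c) p (hasDerivAt_G0' a ha b c _)
  -- f is smooth on Ω
  have hfeq : f = fun p : ℝ × ℝ => α⁻¹ * Real.arcsin (q p) - C₂ := funext hfdef
  have hsmooth : ContDiffOn ℝ (⊤ : ℕ∞) f Ω := by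
    intro p hp
    have hcd : ContDiffAt ℝ (⊤ : ℕ∞) f p := by
      rw [hfeq]
      exact ((contDiffAt_const.mul
        ((Real.contDiffAt_arcsin (hne1 p (hΩU p hp)) (hne1' p (hΩU p hp))).comp p
          hqc.contDiffAt)).sub contDiffAt_const)
    exact hcd.contDiffWithinAt
  -- derivative of f on U
  have hf' : ∀ p ∈ U, HasFDerivAt f
      ((Afun α (q p)) • D2' (G1' a b c (↑p.1 + ↑p.2 * Complex.I))) p := by
    intro p hp
    have harc := Real.hasDerivAt_arcsin (hne1 p hp) (hne1' p hp)
    have hcomp := harc.comp_hasFDerivAt p (hq' p)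
    have hder := (hcomp.const_mul α⁻¹).sub_const C₂
    have hD : (Afun α (q p)) • D2' (G1' a b c (↑p.1 + ↑p.2 * Complex.I))
        = α⁻¹ • ((1 / Real.sqrt (1 - q p ^ 2)) • D2' (G1' a b c (↑p.1 + ↑p.2 * Complex.I))) := by
      rw [smul_smul]; unfold Afun; rfl
    rw [hfeq, hD]
    exact hder
  -- first partial derivatives of f on U
  have hpx : ∀ p ∈ U, px f p
      = Afun α (q p) * (G1' a b c (↑p.1 + ↑p.2 * Complex.I)).re := by
    intro p hp
    rw [px, (hf' p hp).fderiv]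
    simp [D2'_apply_10]
  have hpy : ∀ p ∈ U, py f p
      = Afun α (q p) * (-(G1' a b c (↑p.1 + ↑p.2 * Complex.I)).im) := by
    intro p hp
    rw [py, (hf' p hp).fderiv]
    simp [D2'_apply_01]
  -- derivatives of the first partials on U
  have hφ1' : ∀ p ∈ U, HasFDerivAt
      (fun p : ℝ × ℝ => Afun α (q p) * (G1' a b c (↑p.1 + ↑p.2 * Complex.I)).re)
      ((Afun α (q p)) • D2' (G2' a b c (↑p.1 + ↑p.2 * Complex.I))
        + (G1' a b c (↑p.1 + ↑p.2 * Complex.I)).re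
            • ((Ader α (q p)) • D2' (G1' a b c (↑p.1 + ↑p.2 * Complex.I)))) p := by
    intro p hp
    have hA : HasFDerivAt (fun p : ℝ × ℝ => Afun α (q p))
        ((Ader α (q p)) • D2' (G1' a b c (↑p.1 + ↑p.2 * Complex.I))) p :=
      (hasDerivAt_Afun α (hbound p hp)).comp_hasFDerivAt p (hq' p)
    have hx : HasFDerivAt (fun p : ℝ × ℝ => (G1' a b c (↑p.1 + ↑p.2 * Complex.I)).re)
        (D2' (G2' a b c (↑p.1 + ↑p.2 * Complex.I))) p :=
      hasFDerivAt_reComp _ (G2' a b c) p (hasDerivAt_G1' a b c _)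
    exact hA.mul hx
  have him : (fun p : ℝ × ℝ => Afun α (q p) * (-(G1' a b c (↑p.1 + ↑p.2 * Complex.I)).im))
      = fun p : ℝ × ℝ => Afun α (q p) * (Complex.I * G1' a b c (↑p.1 + ↑p.2 * Complex.I)).re := by
    funext p
    simp [Complex.mul_re]
  have hφ2' : ∀ p ∈ U, HasFDerivAt
      (fun p : ℝ × ℝ => Afun α (q p) * (-(G1' a b c (↑p.1 + ↑p.2 * Complex.I)).im))
      ((Afun α (q p)) • D2' (Complex.I * G2' a b c (↑p.1 + ↑p.2 * Complex.I))
        + (Complex.I * G1' a b c (↑p.1 + ↑p.2 * Complex.I)).re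
            • ((Ader α (q p)) • D2' (G1' a b c (↑p.1 + ↑p.2 * Complex.I)))) p := by
    intro p hp
    rw [him]
    have hA : HasFDerivAt (fun p : ℝ × ℝ => Afun α (q p))
        ((Ader α (q p)) • D2' (G1' a b c (↑p.1 + ↑p.2 * Complex.I))) p :=
      (hasDerivAt_Afun α (hbound p hp)).comp_hasFDerivAt p (hq' p)
    have hy : HasFDerivAt
        (fun p : ℝ × ℝ => (Complex.I * G1' a b c (↑p.1 + ↑p.2 * Complex.I)).re)
        (D2' (Complex.I * G2' a b c (↑p.1 + ↑p.2 * Complex.I))) p :=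
      hasFDerivAt_reComp (fun z => Complex.I * G1' a b c z) (fun z => Complex.I * G2' a b c z) p
        ((hasDerivAt_G1' a b c _).const_mul Complex.I)
    exact hA.mul hy
  -- second partial derivatives on Ω
  have hsecond : ∀ p ∈ Ω,
      px (px f) p = Afun α (q p) * (G2' a b c (↑p.1 + ↑p.2 * Complex.I)).re
          + (G1' a b c (↑p.1 + ↑p.2 * Complex.I)).re
              * (Ader α (q p) * (G1' a b c (↑p.1 + ↑p.2 * Complex.I)).re)
      ∧ py (px f) p = Afun α (q p) * (-(G2' a b c (↑p.1 + ↑p.2 * Complex.I)).im)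
          + (G1' a b c (↑p.1 + ↑p.2 * Complex.I)).re
              * (Ader α (q p) * (-(G1' a b c (↑p.1 + ↑p.2 * Complex.I)).im))
      ∧ py (py f) p = Afun α (q p) * (-(G2' a b c (↑p.1 + ↑p.2 * Complex.I)).re)
          + (-(G1' a b c (↑p.1 + ↑p.2 * Complex.I)).im)
              * (Ader α (q p) * (-(G1' a b c (↑p.1 + ↑p.2 * Complex.I)).im)) := by
    intro p hp
    have hpU : p ∈ U := hΩU p hp
    have hnhds : U ∈ nhds p := hUopen.mem_nhds hpU
    have hev1 : px f =ᶠ[nhds p] (fun p : ℝ × ℝ =>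
        Afun α (q p) * (G1' a b c (↑p.1 + ↑p.2 * Complex.I)).re) :=
      Filter.eventuallyEq_of_mem hnhds hpx
    have hev2 : py f =ᶠ[nhds p] (fun p : ℝ × ℝ =>
        Afun α (q p) * (-(G1' a b c (↑p.1 + ↑p.2 * Complex.I)).im)) :=
      Filter.eventuallyEq_of_mem hnhds hpy
    refine ⟨?_, ?_, ?_⟩
    · rw [px, hev1.fderiv_eq, (hφ1' p hpU).fderiv]
      simp [D2'_apply_10]
    · rw [py, hev1.fderiv_eq, (hφ1' p hpU).fderiv]
      simp [D2'_apply_01]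
    · rw [py, hev2.fderiv_eq, (hφ2' p hpU).fderiv]
      simp [D2'_apply_01, Complex.mul_im]
  -- the algebraic identities
  refine ⟨hsmooth, ?_, ?_⟩
  · -- MSE
    intro p hp
    have hpU : p ∈ U := hΩU p hp
    obtain ⟨hxx, hyx, hyy⟩ := hsecond p hp
    have hw2re : (G2' a b c (↑p.1 + ↑p.2 * Complex.I)).re
        = a.re * (G1' a b c (↑p.1 + ↑p.2 * Complex.I)).re
          - a.im * (G1' a b c (↑p.1 + ↑p.2 * Complex.I)).im := by
      rw [G2'_eq, Complex.mul_re]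
    have hw2im : (G2' a b c (↑p.1 + ↑p.2 * Complex.I)).im
        = a.re * (G1' a b c (↑p.1 + ↑p.2 * Complex.I)).im
          + a.im * (G1' a b c (↑p.1 + ↑p.2 * Complex.I)).re := by
      rw [G2'_eq, Complex.mul_im]
    have hkey : a.re * (G1' a b c (↑p.1 + ↑p.2 * Complex.I)).re
        + a.im * (G1' a b c (↑p.1 + ↑p.2 * Complex.I)).im = α ^ 2 * q p := by
      rw [G1'_eq a ha, Complex.mul_re, Complex.mul_im, hα2]
      have : q p = (G0' a b c (↑p.1 + ↑p.2 * Complex.I)).re := by rw [hqG]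
      rw [this]; ring
    have hpos : (0 : ℝ) < 1 - (q p) ^ 2 := by have := hbound p hpU; linarith
    have hs : Real.sqrt (1 - (q p) ^ 2) ≠ 0 := by positivity
    have hs2 : Real.sqrt (1 - (q p) ^ 2) ^ 2 = 1 - (q p) ^ 2 := Real.sq_sqrt hpos.le
    have hpxp := hpx p hpU
    have hpyp := hpy p hpU
    obtain ⟨x1, hx1⟩ : ∃ x, (G1' a b c (↑p.1 + ↑p.2 * Complex.I)).re = x := ⟨_, rfl⟩
    obtain ⟨y1, hy1⟩ : ∃ x, (G1' a b c (↑p.1 + ↑p.2 * Complex.I)).im = x := ⟨_, rfl⟩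
    obtain ⟨x2, hx2⟩ : ∃ x, (G2' a b c (↑p.1 + ↑p.2 * Complex.I)).re = x := ⟨_, rfl⟩
    obtain ⟨y2, hy2⟩ : ∃ x, (G2' a b c (↑p.1 + ↑p.2 * Complex.I)).im = x := ⟨_, rfl⟩
    simp only [hx1, hy1, hx2, hy2] at hxx hyx hyy hkey hpxp hpyp hw2re hw2im
    rw [hxx, hyx, hyy, hpxp, hpyp, hw2re, hw2im]
    unfold Afun Ader
    linear_combination mse_algebra α (Real.sqrt (1 - (q p) ^ 2)) (q p) x1 y1
      a.re a.im hαne hs hs2 hkey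
  · -- Laplace identity
    intro p hp
    have hpU : p ∈ U := hΩU p hp
    obtain ⟨hxx, _, hyy⟩ := hsecond p hp
    have hpos : (0 : ℝ) < 1 - (q p) ^ 2 := by have := hbound p hpU; linarith
    have hs : Real.sqrt (1 - (q p) ^ 2) ≠ 0 := by positivity
    have hs2 : Real.sqrt (1 - (q p) ^ 2) ^ 2 = 1 - (q p) ^ 2 := Real.sq_sqrt hpos.le
    have htan : Real.tan (α * (f p + C₂)) = q p / Real.sqrt (1 - (q p) ^ 2) := by
      rw [hfdef p]
      have harg : α * (α⁻¹ * Real.arcsin (q p) - C₂ + C₂) = Real.arcsin (q p) := by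
        field_simp
        ring
      rw [harg, Real.tan_arcsin]
    have hpxp := hpx p hpU
    have hpyp := hpy p hpU
    obtain ⟨x1, hx1⟩ : ∃ x, (G1' a b c (↑p.1 + ↑p.2 * Complex.I)).re = x := ⟨_, rfl⟩
    obtain ⟨y1, hy1⟩ : ∃ x, (G1' a b c (↑p.1 + ↑p.2 * Complex.I)).im = x := ⟨_, rfl⟩
    obtain ⟨x2, hx2⟩ : ∃ x, (G2' a b c (↑p.1 + ↑p.2 * Complex.I)).re = x := ⟨_, rfl⟩
    simp only [hx1, hy1, hx2] at hxx hyy hpxp hpyp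
    rw [hxx, hyy, hpxp, hpyp, htan]
    unfold Afun Ader
    linear_combination lap_algebra α (Real.sqrt (1 - (q p) ^ 2)) (q p) x1 y1 x2 hαne hs hs2
end

section
/- Let λ > 0, p, q ∈ ℝ, C₂ ∈ ℝ, and ε ∈ {1, −1}. Let r(x, y) = √((x − p)² + (y − q)²), let Ω = {(x, y) ∈ ℝ² : λ·r(x, y) > 1}, and define f : Ω → ℝ by f(x, y) = (ε/λ)·arcosh(λ·r(x, y)) − C₂, where arcosh(t) = log(t + √(t² − 1)) for t ≥ 1. Then f is smooth on Ω, f satisfies the minimal surface equation on Ω, and f_xx(p') + f_yy(p') = h(f(p'))·(f_x(p')² + f_y(p')²) for all p' ∈ Ω, where h(s) = −2·λ/sinh(2·λ·(s + C₂)). (In particular, sinh(2λ(f + C₂)) is nonzero on Ω, and f is a catenoid.) -/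
lemma cat_ht0 {lam t : ℝ} (ht : 1 < lam^2 * t) : 0 < t := by nlinarith [sq_nonneg lam]

lemma cat_hq {lam t : ℝ} (ht : 1 < lam^2 * t) : 0 < lam^2*t^2 - t := by
  have h0 := cat_ht0 ht; nlinarith

lemma catG_deriv {lam ε C₂ t : ℝ} (hlam : 0 < lam) (ht : 1 < lam^2 * t) :
    HasDerivAt (fun s => (ε / lam) * Real.log (lam * Real.sqrt s + Real.sqrt (lam^2*s - 1)) - C₂)
      (ε / (2 * Real.sqrt (lam^2*t^2 - t))) t := by
  have ht0 : 0 < t := cat_ht0 ht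
  have hb0 : 0 < lam^2*t - 1 := by linarith
  have ha : 0 < Real.sqrt t := Real.sqrt_pos.mpr ht0
  have hb : 0 < Real.sqrt (lam^2*t - 1) := Real.sqrt_pos.mpr hb0
  have hA : 0 < lam * Real.sqrt t + Real.sqrt (lam^2*t - 1) := by positivity
  have h1 : HasDerivAt (fun s : ℝ => Real.sqrt s) (1/(2*Real.sqrt t)) t :=
    Real.hasDerivAt_sqrt ht0.ne'
  have h2 : HasDerivAt (fun s : ℝ => lam^2*s - 1) (lam^2) t := by
    simpa using ((hasDerivAt_id t).const_mul (lam^2)).sub_const 1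
  have h3 : HasDerivAt (fun s : ℝ => Real.sqrt (lam^2*s - 1))
      (lam^2 * (1/(2*Real.sqrt (lam^2*t-1)))) t := by
    simpa [mul_comm, Function.comp_def] using (Real.hasDerivAt_sqrt hb0.ne').comp t h2
  have h4 : HasDerivAt (fun s : ℝ => lam * Real.sqrt s + Real.sqrt (lam^2*s - 1))
      (lam * (1/(2*Real.sqrt t)) + lam^2 * (1/(2*Real.sqrt (lam^2*t-1)))) t :=
    (h1.const_mul lam).add h3
  have h5 := ((h4.log hA.ne').const_mul (ε/lam)).sub_const C₂
  refine h5.congr_deriv ?_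
  have hc : Real.sqrt (lam^2*t^2 - t) = Real.sqrt t * Real.sqrt (lam^2*t-1) := by
    rw [← Real.sqrt_mul ht0.le]; ring_nf
  rw [hc]; field_simp; ring

lemma catG1_deriv {lam ε t : ℝ} (ht : 1 < lam^2 * t) :
    HasDerivAt (fun s => ε / (2 * Real.sqrt (lam^2*s^2 - s)))
      (-ε * (2*lam^2*t - 1) / (4 * Real.sqrt (lam^2*t^2 - t) ^ 3)) t := by
  have hq : 0 < lam^2*t^2 - t := cat_hq ht
  have hc : 0 < Real.sqrt (lam^2*t^2 - t) := Real.sqrt_pos.mpr hq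
  have h2 : HasDerivAt (fun s : ℝ => lam^2*s^2 - s) (2*lam^2*t - 1) t := by
    have := (((hasDerivAt_id t).pow 2).const_mul (lam^2)).sub (hasDerivAt_id t)
    refine this.congr_deriv ?_
    simp [id]
    ring
  have h3 : HasDerivAt (fun s : ℝ => Real.sqrt (lam^2*s^2 - s))
      ((2*lam^2*t - 1) * (1/(2*Real.sqrt (lam^2*t^2-t)))) t := by
    have := h2.sqrt hq.ne'
    convert this using 1
    field_simp
  have h4 : HasDerivAt (fun s : ℝ => 2 * Real.sqrt (lam^2*s^2 - s))
      (2 * ((2*lam^2*t - 1) * (1/(2*Real.sqrt (lam^2*t^2-t))))) t := h3.const_mul 2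
  have h5 := (hasDerivAt_const t ε).div h4 (by positivity)
  refine h5.congr_deriv ?_
  have h6 : Real.sqrt (lam^2*t^2-t) ^ 2 = lam^2*t^2 - t := Real.sq_sqrt hq.le
  field_simp
  ring

lemma catG_contDiffAt {lam ε C₂ t : ℝ} (hlam : 0 < lam) (ht : 1 < lam^2 * t) :
    ContDiffAt ℝ (⊤ : ℕ∞) (fun s => (ε / lam) * Real.log (lam * Real.sqrt s + Real.sqrt (lam^2*s - 1)) - C₂) t := by
  have ht0 : 0 < t := cat_ht0 ht
  have hb0 : 0 < lam^2*t - 1 := by linarith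
  have ha : 0 < Real.sqrt t := Real.sqrt_pos.mpr ht0
  have hb : 0 < Real.sqrt (lam^2*t - 1) := Real.sqrt_pos.mpr hb0
  have hA : 0 < lam * Real.sqrt t + Real.sqrt (lam^2*t - 1) := by positivity
  have c1 : ContDiffAt ℝ (⊤ : ℕ∞) (fun s : ℝ => lam * Real.sqrt s) t :=
    (contDiffAt_const (c := lam)).mul (Real.contDiffAt_sqrt ht0.ne')
  have c2 : ContDiffAt ℝ (⊤ : ℕ∞) (fun s : ℝ => Real.sqrt (lam^2*s - 1)) t := by
    have h : ContDiffAt ℝ (⊤ : ℕ∞) (fun s : ℝ => lam^2*s - 1) t := by fun_prop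
    exact (Real.contDiffAt_sqrt hb0.ne').comp t h
  have c3 : ContDiffAt ℝ (⊤ : ℕ∞)
      (fun s : ℝ => (ε/lam) * Real.log (lam * Real.sqrt s + Real.sqrt (lam^2*s - 1))) t :=
    (contDiffAt_const (c := ε/lam)).mul ((c1.add c2).log hA.ne')
  exact c3.sub contDiffAt_const

lemma cat_sinh {lam ε t : ℝ} (hlam : 0 < lam) (hε : ε = 1 ∨ ε = -1) (ht : 1 < lam^2*t) :
    Real.sinh (2*ε*Real.log (lam*Real.sqrt t + Real.sqrt (lam^2*t - 1)))
      = 2*ε*lam*Real.sqrt (lam^2*t^2 - t) := by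
  have ht0 : 0 < t := cat_ht0 ht
  have hb0 : 0 < lam^2*t - 1 := by linarith
  have ha : 0 < Real.sqrt t := Real.sqrt_pos.mpr ht0
  have hb : 0 < Real.sqrt (lam^2*t - 1) := Real.sqrt_pos.mpr hb0
  have ha2 : Real.sqrt t ^ 2 = t := Real.sq_sqrt ht0.le
  have hb2 : Real.sqrt (lam^2*t-1) ^ 2 = lam^2*t - 1 := Real.sq_sqrt hb0.le
  have hA : 0 < lam*Real.sqrt t + Real.sqrt (lam^2*t - 1) := by positivity
  have hcab : Real.sqrt (lam^2*t^2 - t) = Real.sqrt t * Real.sqrt (lam^2*t - 1) := by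
    rw [← Real.sqrt_mul ht0.le]; ring_nf
  have hinv : (lam*Real.sqrt t + Real.sqrt (lam^2*t - 1))
      * (lam*Real.sqrt t - Real.sqrt (lam^2*t - 1)) = 1 := by nlinarith [ha2, hb2]
  have hi : (lam*Real.sqrt t + Real.sqrt (lam^2*t - 1))⁻¹
      = lam*Real.sqrt t - Real.sqrt (lam^2*t - 1) := inv_eq_of_mul_eq_one_right hinv
  have key : Real.sinh (2*Real.log (lam*Real.sqrt t + Real.sqrt (lam^2*t - 1)))
      = 2*lam*Real.sqrt (lam^2*t^2 - t) := by
    rw [Real.sinh_eq, two_mul, Real.exp_add, Real.exp_log hA, Real.exp_neg, Real.exp_add,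
      Real.exp_log hA, mul_inv, hi, hcab]
    ring
  rcases hε with h | h
  · rw [h]; simpa using key
  · rw [h]
    have : (2:ℝ)*(-1)*Real.log (lam*Real.sqrt t + Real.sqrt (lam^2*t - 1))
        = -(2*Real.log (lam*Real.sqrt t + Real.sqrt (lam^2*t - 1))) := by ring
    rw [this, Real.sinh_neg, key]; ring

noncomputable def catD (x₀ y₀ : ℝ) (p : ℝ × ℝ) : (ℝ × ℝ) →L[ℝ] ℝ :=
  (2*(p.1-x₀)) • ContinuousLinearMap.fst ℝ ℝ ℝ + (2*(p.2-y₀)) • ContinuousLinearMap.snd ℝ ℝ ℝ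

lemma catD_apply (x₀ y₀ : ℝ) (p : ℝ × ℝ) (v : ℝ × ℝ) :
    catD x₀ y₀ p v = 2*(p.1-x₀)*v.1 + 2*(p.2-y₀)*v.2 := by
  simp [catD, smul_eq_mul]

lemma catρ_hasFDeriv (x₀ y₀ : ℝ) (p : ℝ × ℝ) :
    HasFDerivAt (fun q : ℝ × ℝ => (q.1 - x₀)^2 + (q.2 - y₀)^2) (catD x₀ y₀ p) p := by
  have h1 : HasFDerivAt (fun q : ℝ × ℝ => q.1 - x₀) (ContinuousLinearMap.fst ℝ ℝ ℝ) p :=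
    hasFDerivAt_fst.sub_const x₀
  have h2 : HasFDerivAt (fun q : ℝ × ℝ => q.2 - y₀) (ContinuousLinearMap.snd ℝ ℝ ℝ) p :=
    hasFDerivAt_snd.sub_const y₀
  have h3 := (h1.mul h1).add (h2.mul h2)
  have hfun : (fun q : ℝ × ℝ => (q.1 - x₀)*(q.1 - x₀) + (q.2 - y₀)*(q.2 - y₀))
      = fun q : ℝ × ℝ => (q.1 - x₀)^2 + (q.2 - y₀)^2 := by
    funext q; ring
  replace h3 : HasFDerivAt (fun q : ℝ × ℝ => (q.1 - x₀)*(q.1 - x₀) + (q.2 - y₀)*(q.2 - y₀)) _ p := h3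
  rw [hfun] at h3
  refine h3.congr_fderiv ?_
  ext
  · simp [catD, smul_eq_mul]; ring
  · simp [catD, smul_eq_mul]; ring


/-- catenoid, case `k > 0`, `c₀ = 0`:
`f = (ε/λ)·arcosh(λ·r) − C₂` with `r` the distance to `(x₀, y₀)` and
`arcosh t = log (t + √(t² − 1))` is a minimal graph surface on `{λ·r > 1}` with first
characteristic function `h(s) = −2λ/sinh(2λ(s + C₂))`. -/
theorem catenoid_mgs
    (lam : ℝ) (hlam : 0 < lam) (x₀ y₀ C₂ : ℝ) (ε : ℝ) (hε : ε = 1 ∨ ε = -1)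
    (r : ℝ × ℝ → ℝ)
    (hrdef : ∀ p : ℝ × ℝ, r p = Real.sqrt ((p.1 - x₀) ^ 2 + (p.2 - y₀) ^ 2))
    (Ω : Set (ℝ × ℝ)) (hΩ : Ω = {p : ℝ × ℝ | 1 < lam * r p})
    (f : ℝ × ℝ → ℝ)
    (hfdef : ∀ p : ℝ × ℝ,
      f p = (ε / lam) * Real.log (lam * r p + Real.sqrt ((lam * r p) ^ 2 - 1)) - C₂) :
    ContDiffOn ℝ (⊤ : ℕ∞) f Ω ∧
      SatisfiesMSE f Ω ∧
      (∀ p ∈ Ω, Real.sinh (2 * lam * (f p + C₂)) ≠ 0) ∧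
      ∀ p ∈ Ω,
        px (px f) p + py (py f) p =
          (-2 * lam / Real.sinh (2 * lam * (f p + C₂))) *
            ((px f p) ^ 2 + (py f p) ^ 2) := by
  have hε2 : ε^2 = 1 := by rcases hε with h|h <;> simp [h]
  set ρ : ℝ × ℝ → ℝ := fun q => (q.1 - x₀)^2 + (q.2 - y₀)^2 with hρdef
  have hρnn : ∀ q, 0 ≤ ρ q := fun q => by positivity
  have hr2 : ∀ q, (lam * r q)^2 = lam^2 * ρ q := by
    intro q
    rw [hrdef q, mul_pow, Real.sq_sqrt (by positivity)]
  have hfρ : ∀ q, f q = (ε/lam) * Real.log (lam * Real.sqrt (ρ q) + Real.sqrt (lam^2 * ρ q - 1)) - C₂ := by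
    intro q
    rw [hfdef q, hrdef q, ← hr2 q, hrdef q]
  have hmem : ∀ p ∈ Ω, 1 < lam^2 * ρ p := by
    intro p hp
    rw [hΩ] at hp
    have h1 : 1 < lam * r p := hp
    calc (1:ℝ) = 1^2 := by norm_num
    _ < (lam * r p)^2 := by nlinarith
    _ = lam^2 * ρ p := hr2 p
  have hrc : Continuous r := by
    have : r = fun q : ℝ × ℝ => Real.sqrt ((q.1 - x₀) ^ 2 + (q.2 - y₀) ^ 2) := funext hrdef
    rw [this]; fun_prop
  have hΩo : IsOpen Ω := by
    rw [hΩ]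
    exact isOpen_lt continuous_const (continuous_const.mul hrc)
  -- first derivative
  have hfd : ∀ p ∈ Ω, HasFDerivAt f
      ((ε / (2 * Real.sqrt (lam^2*(ρ p)^2 - ρ p))) • catD x₀ y₀ p) p := by
    intro p hp
    have := (catG_deriv (ε := ε) (C₂ := C₂) hlam (hmem p hp)).comp_hasFDerivAt p
      (catρ_hasFDeriv x₀ y₀ p)
    have hco : ((fun s => (ε / lam) * Real.log (lam * Real.sqrt s + Real.sqrt (lam^2*s - 1)) - C₂) ∘ ρ) = f := by
      funext q; exact (hfρ q).symm
    rwa [hco] at this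
  set Fx : ℝ × ℝ → ℝ := fun q => (ε / (2 * Real.sqrt (lam^2*(ρ q)^2 - ρ q))) * (2*(q.1-x₀)) with hFxdef
  set Fy : ℝ × ℝ → ℝ := fun q => (ε / (2 * Real.sqrt (lam^2*(ρ q)^2 - ρ q))) * (2*(q.2-y₀)) with hFydef
  have hpxf : ∀ p ∈ Ω, px f p = Fx p := by
    intro p hp
    rw [px, (hfd p hp).fderiv]
    simp [catD_apply, hFxdef]
  have hpyf : ∀ p ∈ Ω, py f p = Fy p := by
    intro p hp
    rw [py, (hfd p hp).fderiv]
    simp [catD_apply, hFydef]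
  -- second derivatives
  have hg1ρ : ∀ p ∈ Ω, HasFDerivAt (fun q => ε / (2 * Real.sqrt (lam^2*(ρ q)^2 - ρ q)))
      ((-ε * (2*lam^2*(ρ p) - 1) / (4 * Real.sqrt (lam^2*(ρ p)^2 - ρ p) ^ 3)) • catD x₀ y₀ p) p := by
    intro p hp
    exact (catG1_deriv (ε := ε) (hmem p hp)).comp_hasFDerivAt p (catρ_hasFDeriv x₀ y₀ p)
  have hvx : ∀ p : ℝ × ℝ, HasFDerivAt (fun q : ℝ × ℝ => 2*(q.1-x₀))
      ((2:ℝ) • ContinuousLinearMap.fst ℝ ℝ ℝ) p := fun p =>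
    (hasFDerivAt_fst.sub_const x₀).const_mul 2
  have hvy : ∀ p : ℝ × ℝ, HasFDerivAt (fun q : ℝ × ℝ => 2*(q.2-y₀))
      ((2:ℝ) • ContinuousLinearMap.snd ℝ ℝ ℝ) p := fun p =>
    (hasFDerivAt_snd.sub_const y₀).const_mul 2
  have hFxd : ∀ p ∈ Ω, HasFDerivAt Fx
      ((ε / (2 * Real.sqrt (lam^2*(ρ p)^2 - ρ p))) • ((2:ℝ) • ContinuousLinearMap.fst ℝ ℝ ℝ)
        + (2*(p.1-x₀)) • ((-ε * (2*lam^2*(ρ p) - 1) / (4 * Real.sqrt (lam^2*(ρ p)^2 - ρ p) ^ 3)) • catD x₀ y₀ p)) p := by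
    intro p hp
    exact (hg1ρ p hp).mul (hvx p)
  have hFyd : ∀ p ∈ Ω, HasFDerivAt Fy
      ((ε / (2 * Real.sqrt (lam^2*(ρ p)^2 - ρ p))) • ((2:ℝ) • ContinuousLinearMap.snd ℝ ℝ ℝ)
        + (2*(p.2-y₀)) • ((-ε * (2*lam^2*(ρ p) - 1) / (4 * Real.sqrt (lam^2*(ρ p)^2 - ρ p) ^ 3)) • catD x₀ y₀ p)) p := by
    intro p hp
    exact (hg1ρ p hp).mul (hvy p)
  have hfx_ev : ∀ p ∈ Ω, px f =ᶠ[nhds p] Fx := by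
    intro p hp
    filter_upwards [hΩo.mem_nhds hp] with q hq using hpxf q hq
  have hfy_ev : ∀ p ∈ Ω, py f =ᶠ[nhds p] Fy := by
    intro p hp
    filter_upwards [hΩo.mem_nhds hp] with q hq using hpyf q hq
  have hpxpxf : ∀ p ∈ Ω, px (px f) p =
      ε / (2 * Real.sqrt (lam^2*(ρ p)^2 - ρ p)) * 2
        + 2*(p.1-x₀) * ((-ε * (2*lam^2*(ρ p) - 1) / (4 * Real.sqrt (lam^2*(ρ p)^2 - ρ p) ^ 3)) * (2*(p.1-x₀))) := by
    intro p hp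
    rw [px, (hfx_ev p hp).fderiv_eq, (hFxd p hp).fderiv]
    simp [catD_apply, smul_eq_mul]
  have hpypxf : ∀ p ∈ Ω, py (px f) p =
      2*(p.1-x₀) * ((-ε * (2*lam^2*(ρ p) - 1) / (4 * Real.sqrt (lam^2*(ρ p)^2 - ρ p) ^ 3)) * (2*(p.2-y₀))) := by
    intro p hp
    rw [py, (hfx_ev p hp).fderiv_eq, (hFxd p hp).fderiv]
    simp [catD_apply, smul_eq_mul]
  have hpypyf : ∀ p ∈ Ω, py (py f) p =
      ε / (2 * Real.sqrt (lam^2*(ρ p)^2 - ρ p)) * 2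
        + 2*(p.2-y₀) * ((-ε * (2*lam^2*(ρ p) - 1) / (4 * Real.sqrt (lam^2*(ρ p)^2 - ρ p) ^ 3)) * (2*(p.2-y₀))) := by
    intro p hp
    rw [py, (hfy_ev p hp).fderiv_eq, (hFyd p hp).fderiv]
    simp [catD_apply, smul_eq_mul]
  -- sinh value
  have hsinh : ∀ p ∈ Ω, Real.sinh (2*lam*(f p + C₂))
      = 2*ε*lam*Real.sqrt (lam^2*(ρ p)^2 - ρ p) := by
    intro p hp
    have h1 : 2*lam*(f p + C₂) = 2*ε*Real.log (lam * Real.sqrt (ρ p) + Real.sqrt (lam^2 * ρ p - 1)) := by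
      rw [hfρ p]
      field_simp
      ring
    rw [h1]
    exact cat_sinh hlam hε (hmem p hp)
  have hsinh_ne : ∀ p ∈ Ω, Real.sinh (2 * lam * (f p + C₂)) ≠ 0 := by
    intro p hp
    rw [hsinh p hp]
    have hc : 0 < Real.sqrt (lam^2*(ρ p)^2 - ρ p) := Real.sqrt_pos.mpr (cat_hq (hmem p hp))
    have hm := mul_pos hlam hc
    rcases hε with h|h <;> rw [h] <;> intro hcon <;> nlinarith
  refine ⟨?_, ?_, hsinh_ne, ?_⟩
  · -- smoothness
    intro p hp
    have hρca : ContDiffAt ℝ (⊤ : ℕ∞) ρ p := by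
      rw [hρdef]; fun_prop
    have h := (catG_contDiffAt (ε := ε) (C₂ := C₂) hlam (hmem p hp)).comp p hρca
    have hco : ((fun s => (ε / lam) * Real.log (lam * Real.sqrt s + Real.sqrt (lam^2*s - 1)) - C₂) ∘ ρ) = f := by
      funext q; exact (hfρ q).symm
    rw [hco] at h
    exact h.contDiffWithinAt
  · -- MSE
    intro p hp
    rw [hpxpxf p hp, hpypxf p hp, hpypyf p hp, hpxf p hp, hpyf p hp]
    simp only [hFxdef, hFydef]
    have ht := hmem p hp
    have hq := cat_hq ht
    have hc : 0 < Real.sqrt (lam^2*(ρ p)^2 - ρ p) := Real.sqrt_pos.mpr hq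
    have hc2 : Real.sqrt (lam^2*(ρ p)^2 - ρ p) ^ 2 = lam^2*(ρ p)^2 - ρ p := Real.sq_sqrt hq.le
    have hT : ρ p = (p.1-x₀)^2 + (p.2-y₀)^2 := rfl
    set X := p.1 - x₀ with hXd
    set Y := p.2 - y₀ with hYd
    set t := ρ p with htd
    set c := Real.sqrt (lam^2*t^2 - t) with hcd
    clear_value X Y t c
    field_simp
    linear_combination (4*ε*c^2*(X^2+Y^2)) * hε2 + (8*ε*c^2) * hc2
      + ((8*ε*c^2)*(lam^2*t-1)) * hT
  · -- characteristic equation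
    intro p hp
    rw [hpxpxf p hp, hpypyf p hp, hpxf p hp, hpyf p hp, hsinh p hp]
    simp only [hFxdef, hFydef]
    have ht := hmem p hp
    have hq := cat_hq ht
    have hc : 0 < Real.sqrt (lam^2*(ρ p)^2 - ρ p) := Real.sqrt_pos.mpr hq
    have hc2 : Real.sqrt (lam^2*(ρ p)^2 - ρ p) ^ 2 = lam^2*(ρ p)^2 - ρ p := Real.sq_sqrt hq.le
    have hT : ρ p = (p.1-x₀)^2 + (p.2-y₀)^2 := rfl
    have hεne : ε ≠ 0 := by rcases hε with h|h <;> rw [h] <;> norm_num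
    set X := p.1 - x₀ with hXd
    set Y := p.2 - y₀ with hYd
    set t := ρ p with htd
    set c := Real.sqrt (lam^2*t^2 - t) with hcd
    clear_value X Y t c
    field_simp
    linear_combination (8) * hc2 + ((8)*(lam^2*t-1)) * hT
end

section
/- Let c ≠ 0 and d be real constants and let (p, q) ∈ ℝ². Define u on Ω = ℝ² \ {(p, q)} by u(x, y) = c·log((x − p)² + (y − q)²) + d. Then u is smooth on Ω, u_xx + u_yy = 0 on Ω, and u satisfies the modified equation with coefficient function j(s) = −2·c·exp(−(s − d)/c) at every point of Ω. -/
private lemma hasF_r2 (x₀ y₀ : ℝ) (p : ℝ × ℝ) :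
    HasFDerivAt (fun q : ℝ × ℝ => (q.1 - x₀) ^ 2 + (q.2 - y₀) ^ 2)
      ((2 * (p.1 - x₀)) • ContinuousLinearMap.fst ℝ ℝ ℝ
        + (2 * (p.2 - y₀)) • ContinuousLinearMap.snd ℝ ℝ ℝ) p := by
  have hx : HasFDerivAt (fun q : ℝ × ℝ => q.1 - x₀) (ContinuousLinearMap.fst ℝ ℝ ℝ) p :=
    hasFDerivAt_fst.sub_const x₀
  have hy : HasFDerivAt (fun q : ℝ × ℝ => q.2 - y₀) (ContinuousLinearMap.snd ℝ ℝ ℝ) p :=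
    hasFDerivAt_snd.sub_const y₀
  have h : HasFDerivAt (fun q : ℝ × ℝ => (q.1 - x₀) * (q.1 - x₀) + (q.2 - y₀) * (q.2 - y₀)) (_ : ℝ × ℝ →L[ℝ] ℝ) p :=
    (hx.mul hx).add (hy.mul hy)
  simp only [pow_two]
  convert h using 1
  ext <;> simp <;> ring

private lemma r2_pos {x₀ y₀ : ℝ} {p : ℝ × ℝ} (hp : p ≠ (x₀, y₀)) :
    0 < (p.1 - x₀) ^ 2 + (p.2 - y₀) ^ 2 := by
  have h : p.1 ≠ x₀ ∨ p.2 ≠ y₀ := by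
    by_contra h; push_neg at h
    exact hp (Prod.ext h.1 h.2)
  rcases h with h | h
  · have : p.1 - x₀ ≠ 0 := sub_ne_zero.mpr h
    positivity
  · have : p.2 - y₀ ≠ 0 := sub_ne_zero.mpr h
    positivity

private lemma hasF_u (c d x₀ y₀ : ℝ) {p : ℝ × ℝ} (hp : p ≠ (x₀, y₀)) :
    HasFDerivAt (fun q : ℝ × ℝ => c * Real.log ((q.1 - x₀) ^ 2 + (q.2 - y₀) ^ 2) + d)
      (c • (((p.1 - x₀) ^ 2 + (p.2 - y₀) ^ 2)⁻¹ •
        ((2 * (p.1 - x₀)) • ContinuousLinearMap.fst ℝ ℝ ℝ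
          + (2 * (p.2 - y₀)) • ContinuousLinearMap.snd ℝ ℝ ℝ))) p := by
  have h0 := (r2_pos hp).ne'
  have h1 := (Real.hasDerivAt_log h0).comp_hasFDerivAt p (hasF_r2 x₀ y₀ p)
  exact (h1.const_mul c).add_const d

private lemma pxu_eq (c d x₀ y₀ : ℝ) {p : ℝ × ℝ} (hp : p ≠ (x₀, y₀)) :
    px (fun q : ℝ × ℝ => c * Real.log ((q.1 - x₀) ^ 2 + (q.2 - y₀) ^ 2) + d) p
      = 2 * c * (p.1 - x₀) / ((p.1 - x₀) ^ 2 + (p.2 - y₀) ^ 2) := by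
  rw [px, (hasF_u c d x₀ y₀ hp).fderiv]
  simp
  ring

private lemma pyu_eq (c d x₀ y₀ : ℝ) {p : ℝ × ℝ} (hp : p ≠ (x₀, y₀)) :
    py (fun q : ℝ × ℝ => c * Real.log ((q.1 - x₀) ^ 2 + (q.2 - y₀) ^ 2) + d) p
      = 2 * c * (p.2 - y₀) / ((p.1 - x₀) ^ 2 + (p.2 - y₀) ^ 2) := by
  rw [py, (hasF_u c d x₀ y₀ hp).fderiv]
  simp
  ring

private lemma hasF_g1 (c x₀ y₀ : ℝ) {p : ℝ × ℝ} (hp : p ≠ (x₀, y₀)) :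
    HasFDerivAt (fun q : ℝ × ℝ => 2 * c * (q.1 - x₀) / ((q.1 - x₀) ^ 2 + (q.2 - y₀) ^ 2))
      ((2 * c * (p.1 - x₀)) • ((-(((p.1 - x₀) ^ 2 + (p.2 - y₀) ^ 2) ^ 2)⁻¹) •
          ((2 * (p.1 - x₀)) • ContinuousLinearMap.fst ℝ ℝ ℝ
            + (2 * (p.2 - y₀)) • ContinuousLinearMap.snd ℝ ℝ ℝ))
        + (((p.1 - x₀) ^ 2 + (p.2 - y₀) ^ 2)⁻¹) • ((2 * c) • ContinuousLinearMap.fst ℝ ℝ ℝ)) p := by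
  have h0 := (r2_pos hp).ne'
  have hinv := (hasDerivAt_inv h0).comp_hasFDerivAt p (hasF_r2 x₀ y₀ p)
  have hnum : HasFDerivAt (fun q : ℝ × ℝ => 2 * c * (q.1 - x₀))
      ((2 * c) • ContinuousLinearMap.fst ℝ ℝ ℝ) p :=
    (hasFDerivAt_fst.sub_const x₀).const_mul (2 * c)
  have h := hnum.mul hinv
  simp only [div_eq_mul_inv]
  exact h

private lemma hasF_g2 (c x₀ y₀ : ℝ) {p : ℝ × ℝ} (hp : p ≠ (x₀, y₀)) :
    HasFDerivAt (fun q : ℝ × ℝ => 2 * c * (q.2 - y₀) / ((q.1 - x₀) ^ 2 + (q.2 - y₀) ^ 2))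
      ((2 * c * (p.2 - y₀)) • ((-(((p.1 - x₀) ^ 2 + (p.2 - y₀) ^ 2) ^ 2)⁻¹) •
          ((2 * (p.1 - x₀)) • ContinuousLinearMap.fst ℝ ℝ ℝ
            + (2 * (p.2 - y₀)) • ContinuousLinearMap.snd ℝ ℝ ℝ))
        + (((p.1 - x₀) ^ 2 + (p.2 - y₀) ^ 2)⁻¹) • ((2 * c) • ContinuousLinearMap.snd ℝ ℝ ℝ)) p := by
  have h0 := (r2_pos hp).ne'
  have hinv := (hasDerivAt_inv h0).comp_hasFDerivAt p (hasF_r2 x₀ y₀ p)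
  have hnum : HasFDerivAt (fun q : ℝ × ℝ => 2 * c * (q.2 - y₀))
      ((2 * c) • ContinuousLinearMap.snd ℝ ℝ ℝ) p :=
    (hasFDerivAt_snd.sub_const y₀).const_mul (2 * c)
  have h := hnum.mul hinv
  simp only [div_eq_mul_inv]
  exact h

/-- case `k > 0`, `c₀ = 0`: `u = c·log((x−x₀)² + (y−y₀)²) + d` is smooth
and harmonic away from `(x₀, y₀)` and satisfies the modified equation with
`j(s) = −2c·e^{−(s−d)/c}`. -/
theorem log_modified_solution
    (c : ℝ) (hc : c ≠ 0) (d x₀ y₀ : ℝ)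
    (Ω : Set (ℝ × ℝ)) (hΩ : Ω = {p : ℝ × ℝ | p ≠ (x₀, y₀)})
    (u : ℝ × ℝ → ℝ)
    (hudef : ∀ p : ℝ × ℝ,
      u p = c * Real.log ((p.1 - x₀) ^ 2 + (p.2 - y₀) ^ 2) + d) :
    ContDiffOn ℝ (⊤ : ℕ∞) u Ω ∧
      (∀ p ∈ Ω, px (px u) p + py (py u) p = 0) ∧
      SatisfiesModified u (fun s => -2 * c * Real.exp (-(s - d) / c)) Ω := by
  have hueq : u = fun q : ℝ × ℝ => c * Real.log ((q.1 - x₀) ^ 2 + (q.2 - y₀) ^ 2) + d :=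
    funext hudef
  subst hueq
  subst hΩ
  set g1 : ℝ × ℝ → ℝ :=
    fun q : ℝ × ℝ => 2 * c * (q.1 - x₀) / ((q.1 - x₀) ^ 2 + (q.2 - y₀) ^ 2) with hg1
  set g2 : ℝ × ℝ → ℝ :=
    fun q : ℝ × ℝ => 2 * c * (q.2 - y₀) / ((q.1 - x₀) ^ 2 + (q.2 - y₀) ^ 2) with hg2
  set U : ℝ × ℝ → ℝ :=
    fun q : ℝ × ℝ => c * Real.log ((q.1 - x₀) ^ 2 + (q.2 - y₀) ^ 2) + d with hU
  have hopen : IsOpen {p : ℝ × ℝ | p ≠ (x₀, y₀)} := isOpen_ne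
  -- second partial derivatives
  have hpx : ∀ p ∈ {p : ℝ × ℝ | p ≠ (x₀, y₀)}, fderiv ℝ (px U) p = fderiv ℝ g1 p := by
    intro p hp
    apply Filter.EventuallyEq.fderiv_eq
    filter_upwards [hopen.mem_nhds hp] with q hq
    exact pxu_eq c d x₀ y₀ hq
  have hpy : ∀ p ∈ {p : ℝ × ℝ | p ≠ (x₀, y₀)}, fderiv ℝ (py U) p = fderiv ℝ g2 p := by
    intro p hp
    apply Filter.EventuallyEq.fderiv_eq
    filter_upwards [hopen.mem_nhds hp] with q hq
    exact pyu_eq c d x₀ y₀ hq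
  have hxx : ∀ p ∈ {p : ℝ × ℝ | p ≠ (x₀, y₀)},
      px (px U) p = (2 * c * ((p.2 - y₀) ^ 2 - (p.1 - x₀) ^ 2))
        / (((p.1 - x₀) ^ 2 + (p.2 - y₀) ^ 2)) ^ 2 := by
    intro p hp
    have h0 := (r2_pos hp).ne'
    rw [px, hpx p hp, (hasF_g1 c x₀ y₀ hp).fderiv]
    simp
    field_simp
    ring
  have hxy : ∀ p ∈ {p : ℝ × ℝ | p ≠ (x₀, y₀)},
      py (px U) p = (-(4 * c * (p.1 - x₀) * (p.2 - y₀)))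
        / (((p.1 - x₀) ^ 2 + (p.2 - y₀) ^ 2)) ^ 2 := by
    intro p hp
    have h0 := (r2_pos hp).ne'
    rw [py, hpx p hp, (hasF_g1 c x₀ y₀ hp).fderiv]
    simp
    field_simp
    ring
  have hyy : ∀ p ∈ {p : ℝ × ℝ | p ≠ (x₀, y₀)},
      py (py U) p = (2 * c * ((p.1 - x₀) ^ 2 - (p.2 - y₀) ^ 2))
        / (((p.1 - x₀) ^ 2 + (p.2 - y₀) ^ 2)) ^ 2 := by
    intro p hp
    have h0 := (r2_pos hp).ne'
    rw [py, hpy p hp, (hasF_g2 c x₀ y₀ hp).fderiv]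
    simp
    field_simp
    ring
  refine ⟨?_, ?_, ?_⟩
  · -- smoothness
    have hr2 : ContDiff ℝ (⊤ : ℕ∞) (fun q : ℝ × ℝ => (q.1 - x₀) ^ 2 + (q.2 - y₀) ^ 2) :=
      (((contDiff_fst.sub contDiff_const).pow 2).add
        ((contDiff_snd.sub contDiff_const).pow 2))
    have hlog := (hr2.contDiffOn (s := {p : ℝ × ℝ | p ≠ (x₀, y₀)})).log
      (fun p hp => (r2_pos hp).ne')
    have h := (hlog.const_smul c).add (contDiffOn_const (c := d))
    simpa [smul_eq_mul] using h
  · -- harmonic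
    intro p hp
    have h0 := (r2_pos hp).ne'
    rw [hxx p hp, hyy p hp]
    field_simp
    ring
  · -- modified equation
    intro p hp
    have h0 := r2_pos hp
    have hx1 := pxu_eq c d x₀ y₀ hp
    have hy1 := pyu_eq c d x₀ y₀ hp
    rw [hxx p hp, hyy p hp, hxy p hp, hx1, hy1]
    have hexp : Real.exp (-(U p - d) / c) = ((p.1 - x₀) ^ 2 + (p.2 - y₀) ^ 2)⁻¹ := by
      have : -(U p - d) / c = -Real.log ((p.1 - x₀) ^ 2 + (p.2 - y₀) ^ 2) := by
        simp only [hU]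
        field_simp
        ring
      rw [this, Real.exp_neg, Real.exp_log h0]
    simp only [hU] at hexp ⊢
    rw [hexp]
    field_simp
    ring
end

section
/- Let s ∈ ℂ with s ≠ 0, let c₁ ∈ ℂ, let c ≠ 0 and d be real constants, and let Ω ⊆ ℝ² be an open set such that for every (x, y) ∈ Ω, writing ζ = s·((x + i·y) + c₁)/2, one has sinh(ζ) ≠ 0 and cosh(ζ) ≠ 0. Define u : Ω → ℝ by u(x, y) = 2·c·log |tanh(s·((x + i·y) + c₁)/2)| + d, where |·| denotes the complex absolute value and tanh is the complex hyperbolic tangent. Then u is smooth on Ω, u_xx + u_yy = 0 on Ω, and u satisfies the modified equation with coefficient function j(t) = |s|²·|c|·sinh((t − d)/|c|) at every point of Ω. -/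
open Complex

noncomputable def mulCLM (a : ℂ) : ℂ →L[ℝ] ℂ :=
  (ContinuousLinearMap.smulRight (1 : ℂ →L[ℂ] ℂ) a).restrictScalars ℝ

lemma mulCLM_apply (a w : ℂ) : mulCLM a w = w * a := by
  simp [mulCLM, smul_eq_mul]

noncomputable def emb : ℝ × ℝ →L[ℝ] ℂ :=
  Complex.ofRealCLM.comp (ContinuousLinearMap.fst ℝ ℝ ℝ) +
    Complex.I • Complex.ofRealCLM.comp (ContinuousLinearMap.snd ℝ ℝ ℝ)

lemma emb_apply (v : ℝ × ℝ) : emb v = v.1 + v.2 * Complex.I := by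
  simp [emb]; ring

noncomputable def DD (a : ℂ) : ℝ × ℝ →L[ℝ] ℝ :=
  Complex.reCLM.comp ((mulCLM a).comp emb)

lemma DD_apply (a : ℂ) (v : ℝ × ℝ) : DD a v = ((v.1 + v.2 * Complex.I) * a).re := by
  simp [DD, mulCLM_apply, emb_apply]

noncomputable def EE (a : ℂ) : ℝ × ℝ →L[ℝ] ℝ :=
  Complex.imCLM.comp ((mulCLM a).comp emb)

lemma EE_apply (a : ℂ) (v : ℝ × ℝ) : EE a v = ((v.1 + v.2 * Complex.I) * a).im := by
  simp [EE, mulCLM_apply, emb_apply]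

lemma key {F : ℂ → ℂ} {F' : ℂ} {p : ℝ × ℝ}
    (hF : HasDerivAt F F' (↑p.1 + ↑p.2 * Complex.I)) :
    HasFDerivAt (fun q : ℝ × ℝ => F (↑q.1 + ↑q.2 * Complex.I)) ((mulCLM F').comp emb) p := by
  have h1 : HasFDerivAt F (mulCLM F') (↑p.1 + ↑p.2 * Complex.I) :=
    hF.hasFDerivAt.restrictScalars ℝ
  have h2 : HasFDerivAt (fun q : ℝ × ℝ => (↑q.1 + ↑q.2 * Complex.I : ℂ)) emb p := by
    have h := emb.hasFDerivAt (x := p)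
    rw [show ⇑emb = fun q : ℝ × ℝ => (↑q.1 + ↑q.2 * Complex.I : ℂ) from funext emb_apply] at h
    exact h
  exact h1.comp p h2

lemma keyRe {F : ℂ → ℂ} {F' : ℂ} {p : ℝ × ℝ}
    (hF : HasDerivAt F F' (↑p.1 + ↑p.2 * Complex.I)) :
    HasFDerivAt (fun q : ℝ × ℝ => (F (↑q.1 + ↑q.2 * Complex.I)).re) (DD F') p :=
  (Complex.reCLM.hasFDerivAt).comp p (key hF)

lemma keyIm {F : ℂ → ℂ} {F' : ℂ} {p : ℝ × ℝ}
    (hF : HasDerivAt F F' (↑p.1 + ↑p.2 * Complex.I)) :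
    HasFDerivAt (fun q : ℝ × ℝ => (F (↑q.1 + ↑q.2 * Complex.I)).im) (EE F') p :=
  (Complex.imCLM.hasFDerivAt).comp p (key hF)

lemma DDlog_eq (Wz W' : ℂ) (hne : Wz ≠ 0) :
    DD (2 * W' / Wz)
      = (Wz.re ^ 2 + Wz.im ^ 2)⁻¹ •
        ((Wz.re • DD W' + Wz.re • DD W') + (Wz.im • EE W' + Wz.im • EE W')) := by
  have hn : Wz.re ^ 2 + Wz.im ^ 2 ≠ 0 := by
    have := Complex.normSq_pos.2 hne
    rw [Complex.normSq_apply] at this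
    nlinarith [this]
  apply ContinuousLinearMap.ext
  intro v
  simp only [DD_apply, EE_apply, ContinuousLinearMap.smul_apply, ContinuousLinearMap.add_apply,
    smul_eq_mul]
  rw [show ((v.1 : ℂ) + (v.2 : ℂ) * Complex.I) * (2 * W' / Wz)
      = 2 * ((((v.1 : ℂ) + (v.2 : ℂ) * Complex.I) * W') / Wz) from by ring]
  rw [show (2 * ((((v.1 : ℂ) + (v.2 : ℂ) * Complex.I) * W') / Wz)).re
      = 2 * ((((v.1 : ℂ) + (v.2 : ℂ) * Complex.I) * W') / Wz).re from by
    simp [Complex.mul_re]]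
  rw [Complex.div_re, Complex.normSq_apply]
  have hn' : Wz.re * Wz.re + Wz.im * Wz.im ≠ 0 := by nlinarith [Complex.normSq_pos.2 hne, Complex.normSq_apply Wz]
  field_simp
  ring

lemma keyLog {W : ℂ → ℂ} {W' : ℂ} {p : ℝ × ℝ}
    (hW : HasDerivAt W W' (↑p.1 + ↑p.2 * Complex.I))
    (hne : W (↑p.1 + ↑p.2 * Complex.I) ≠ 0) :
    HasFDerivAt (fun q : ℝ × ℝ => Real.log (Complex.normSq (W (↑q.1 + ↑q.2 * Complex.I))))
      (DD (2 * W' / W (↑p.1 + ↑p.2 * Complex.I))) p := by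
  have hre := keyRe hW
  have him := keyIm hW
  have hsq : HasFDerivAt
      (fun q : ℝ × ℝ => (W (↑q.1 + ↑q.2 * Complex.I)).re ^ 2 + (W (↑q.1 + ↑q.2 * Complex.I)).im ^ 2)
      (((W (↑p.1 + ↑p.2 * Complex.I)).re • DD W' + (W (↑p.1 + ↑p.2 * Complex.I)).re • DD W')
        + ((W (↑p.1 + ↑p.2 * Complex.I)).im • EE W' + (W (↑p.1 + ↑p.2 * Complex.I)).im • EE W')) p := by
    refine ((hre.mul hre).add (him.mul him)).congr_of_eventuallyEq ?_
    exact Filter.Eventually.of_forall fun q => by simp only [pow_two]; rfl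
  have hn : (W (↑p.1 + ↑p.2 * Complex.I)).re ^ 2 + (W (↑p.1 + ↑p.2 * Complex.I)).im ^ 2 ≠ 0 := by
    have := Complex.normSq_pos.2 hne
    rw [Complex.normSq_apply] at this
    nlinarith [this]
  have hlog := hsq.log hn
  have hfun : (fun q : ℝ × ℝ => Real.log (Complex.normSq (W (↑q.1 + ↑q.2 * Complex.I))))
      = fun q : ℝ × ℝ => Real.log ((W (↑q.1 + ↑q.2 * Complex.I)).re ^ 2
          + (W (↑q.1 + ↑q.2 * Complex.I)).im ^ 2) := by
    funext q; rw [Complex.normSq_apply]; ring_nf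
  rw [DDlog_eq _ _ hne, hfun]
  exact hlog

lemma hasDerivAt_zeta (s c₁ : ℂ) (z : ℂ) :
    HasDerivAt (fun w : ℂ => s * (w + c₁) / 2) (s / 2) z := by
  simpa using (((hasDerivAt_id z).add_const c₁).const_mul s).div_const 2

lemma hasDerivAt_G (s c₁ : ℂ) (c : ℝ) (z : ℂ)
    (hS : Complex.sinh (s * (z + c₁) / 2) ≠ 0) (hC : Complex.cosh (s * (z + c₁) / 2) ≠ 0) :
    HasDerivAt (fun w : ℂ => (c : ℂ) * s /
        (Complex.sinh (s * (w + c₁) / 2) * Complex.cosh (s * (w + c₁) / 2)))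
      (-((c : ℂ) * s ^ 2 / 2) *
          (Complex.cosh (s * (z + c₁) / 2) ^ 2 + Complex.sinh (s * (z + c₁) / 2) ^ 2) /
        (Complex.sinh (s * (z + c₁) / 2) * Complex.cosh (s * (z + c₁) / 2)) ^ 2) z := by
  have hz := hasDerivAt_zeta s c₁ z
  have hden : HasDerivAt (fun w : ℂ =>
      Complex.sinh (s * (w + c₁) / 2) * Complex.cosh (s * (w + c₁) / 2))
      (Complex.cosh (s * (z + c₁) / 2) * (s / 2) * Complex.cosh (s * (z + c₁) / 2) +
        Complex.sinh (s * (z + c₁) / 2) * (Complex.sinh (s * (z + c₁) / 2) * (s / 2))) z :=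
    (hz.csinh).mul (hz.ccosh)
  have hne : Complex.sinh (s * (z + c₁) / 2) * Complex.cosh (s * (z + c₁) / 2) ≠ 0 :=
    mul_ne_zero hS hC
  have := (hasDerivAt_const z ((c : ℂ) * s)).div hden hne
  refine this.congr_deriv ?_
  field_simp
  ring

lemma DD_fst (a : ℂ) : DD a (1, 0) = a.re := by simp [DD_apply]

lemma DD_snd (a : ℂ) : DD a (0, 1) = -a.im := by simp [DD_apply]

lemma hasFDerivAt_u (s c₁ : ℂ) (c d : ℝ) (u : ℝ × ℝ → ℝ)
    (hudef : ∀ p : ℝ × ℝ,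
      u p = 2 * c *
        Real.log (‖Complex.tanh (s * ((↑p.1 + ↑p.2 * Complex.I) + c₁) / 2)‖) + d)
    (p : ℝ × ℝ)
    (hnb : ∀ᶠ q : ℝ × ℝ in nhds p,
      Complex.sinh (s * ((↑q.1 + ↑q.2 * Complex.I) + c₁) / 2) ≠ 0 ∧
      Complex.cosh (s * ((↑q.1 + ↑q.2 * Complex.I) + c₁) / 2) ≠ 0) :
    HasFDerivAt u
      (DD ((c : ℂ) * s /
        (Complex.sinh (s * ((↑p.1 + ↑p.2 * Complex.I) + c₁) / 2) *
          Complex.cosh (s * ((↑p.1 + ↑p.2 * Complex.I) + c₁) / 2)))) p := by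
  obtain ⟨hS, hC⟩ := hnb.self_of_nhds
  set z : ℂ := ↑p.1 + ↑p.2 * Complex.I with hz
  have hzeta := hasDerivAt_zeta s c₁ z
  have h1 := keyLog (W := fun w => Complex.sinh (s * (w + c₁) / 2))
    (W' := Complex.cosh (s * (z + c₁) / 2) * (s / 2)) (p := p) (hzeta.csinh) hS
  have h2 := keyLog (W := fun w => Complex.cosh (s * (w + c₁) / 2))
    (W' := Complex.sinh (s * (z + c₁) / 2) * (s / 2)) (p := p) (hzeta.ccosh) hC
  have hnice : HasFDerivAt
      (fun q : ℝ × ℝ => c *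
        (Real.log (Complex.normSq (Complex.sinh (s * ((↑q.1 + ↑q.2 * Complex.I) + c₁) / 2))) -
         Real.log (Complex.normSq (Complex.cosh (s * ((↑q.1 + ↑q.2 * Complex.I) + c₁) / 2)))) + d)
      (c • (DD (2 * (Complex.cosh (s * (z + c₁) / 2) * (s / 2)) / Complex.sinh (s * (z + c₁) / 2))
          - DD (2 * (Complex.sinh (s * (z + c₁) / 2) * (s / 2)) / Complex.cosh (s * (z + c₁) / 2))))
      p := ((h1.sub h2).const_mul c).add_const d
  have hid : 2 * (Complex.cosh (s * (z + c₁) / 2) * (s / 2)) / Complex.sinh (s * (z + c₁) / 2)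
      - 2 * (Complex.sinh (s * (z + c₁) / 2) * (s / 2)) / Complex.cosh (s * (z + c₁) / 2)
      = s / (Complex.sinh (s * (z + c₁) / 2) * Complex.cosh (s * (z + c₁) / 2)) := by
    have hcs := Complex.cosh_sq_sub_sinh_sq (s * (z + c₁) / 2)
    field_simp
    linear_combination s * hcs
  have hCLM : DD ((c : ℂ) * s /
        (Complex.sinh (s * (z + c₁) / 2) * Complex.cosh (s * (z + c₁) / 2)))
      = c • (DD (2 * (Complex.cosh (s * (z + c₁) / 2) * (s / 2)) / Complex.sinh (s * (z + c₁) / 2))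
          - DD (2 * (Complex.sinh (s * (z + c₁) / 2) * (s / 2)) / Complex.cosh (s * (z + c₁) / 2))) := by
    apply ContinuousLinearMap.ext
    intro v
    simp only [DD_apply, ContinuousLinearMap.smul_apply, ContinuousLinearMap.sub_apply,
      smul_eq_mul]
    rw [← Complex.sub_re, ← mul_sub, hid, ← Complex.re_ofReal_mul]
    congr 1
    ring
  rw [hCLM]
  apply hnice.congr_of_eventuallyEq
  filter_upwards [hnb] with q hq
  obtain ⟨hS', hC'⟩ := hq
  rw [hudef q, Complex.tanh_eq_sinh_div_cosh, norm_div,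
    Real.log_div (by simpa using hS') (by simpa using hC')]
  have e1 : Real.log (Complex.normSq (Complex.sinh (s * ((↑q.1 + ↑q.2 * Complex.I) + c₁) / 2)))
      = 2 * Real.log (‖Complex.sinh (s * ((↑q.1 + ↑q.2 * Complex.I) + c₁) / 2)‖) := by
    rw [← Complex.sq_norm, Real.log_pow]; push_cast; ring
  have e2 : Real.log (Complex.normSq (Complex.cosh (s * ((↑q.1 + ↑q.2 * Complex.I) + c₁) / 2)))
      = 2 * Real.log (‖Complex.cosh (s * ((↑q.1 + ↑q.2 * Complex.I) + c₁) / 2)‖) := by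
    rw [← Complex.sq_norm, Real.log_pow]; push_cast; ring
  rw [e1, e2]
  ring

lemma u_eq_nice (s c₁ : ℂ) (c d : ℝ) (u : ℝ × ℝ → ℝ)
    (hudef : ∀ p : ℝ × ℝ,
      u p = 2 * c *
        Real.log (‖Complex.tanh (s * ((↑p.1 + ↑p.2 * Complex.I) + c₁) / 2)‖) + d)
    (p : ℝ × ℝ)
    (hnb : ∀ᶠ q : ℝ × ℝ in nhds p,
      Complex.sinh (s * ((↑q.1 + ↑q.2 * Complex.I) + c₁) / 2) ≠ 0 ∧
      Complex.cosh (s * ((↑q.1 + ↑q.2 * Complex.I) + c₁) / 2) ≠ 0) :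
    u =ᶠ[nhds p] fun q : ℝ × ℝ => c *
        (Real.log (Complex.normSq (Complex.sinh (s * ((↑q.1 + ↑q.2 * Complex.I) + c₁) / 2))) -
         Real.log (Complex.normSq (Complex.cosh (s * ((↑q.1 + ↑q.2 * Complex.I) + c₁) / 2)))) + d := by
  filter_upwards [hnb] with q hq
  obtain ⟨hS', hC'⟩ := hq
  rw [hudef q, Complex.tanh_eq_sinh_div_cosh, norm_div,
    Real.log_div (by simpa using hS') (by simpa using hC')]
  have e1 : Real.log (Complex.normSq (Complex.sinh (s * ((↑q.1 + ↑q.2 * Complex.I) + c₁) / 2)))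
      = 2 * Real.log (‖Complex.sinh (s * ((↑q.1 + ↑q.2 * Complex.I) + c₁) / 2)‖) := by
    rw [← Complex.sq_norm, Real.log_pow]; push_cast; ring
  have e2 : Real.log (Complex.normSq (Complex.cosh (s * ((↑q.1 + ↑q.2 * Complex.I) + c₁) / 2)))
      = 2 * Real.log (‖Complex.cosh (s * ((↑q.1 + ↑q.2 * Complex.I) + c₁) / 2)‖) := by
    rw [← Complex.sq_norm, Real.log_pow]; push_cast; ring
  rw [e1, e2]
  ring

lemma contDiff_normSqR : ContDiff ℝ (⊤ : ℕ∞) (Complex.normSq : ℂ → ℝ) := by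
  have : (Complex.normSq : ℂ → ℝ) = fun z => z.re * z.re + z.im * z.im :=
    funext Complex.normSq_apply
  rw [this]
  exact (Complex.reCLM.contDiff.mul Complex.reCLM.contDiff).add
    (Complex.imCLM.contDiff.mul Complex.imCLM.contDiff)

lemma contDiff_zeta (s c₁ : ℂ) :
    ContDiff ℝ (⊤ : ℕ∞) (fun q : ℝ × ℝ => s * ((↑q.1 + ↑q.2 * Complex.I) + c₁) / 2) := by
  exact ContDiff.div_const (contDiff_const.mul
    (((Complex.ofRealCLM.contDiff.comp contDiff_fst).add
      ((Complex.ofRealCLM.contDiff.comp contDiff_snd).mul contDiff_const)).add contDiff_const)) 2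

lemma contDiffOn_u (s c₁ : ℂ) (c d : ℝ) (u : ℝ × ℝ → ℝ)
    (hudef : ∀ p : ℝ × ℝ,
      u p = 2 * c *
        Real.log (‖Complex.tanh (s * ((↑p.1 + ↑p.2 * Complex.I) + c₁) / 2)‖) + d)
    (Ω : Set (ℝ × ℝ)) (hΩopen : IsOpen Ω)
    (hΩ : ∀ p ∈ Ω,
      Complex.sinh (s * ((↑p.1 + ↑p.2 * Complex.I) + c₁) / 2) ≠ 0 ∧
      Complex.cosh (s * ((↑p.1 + ↑p.2 * Complex.I) + c₁) / 2) ≠ 0) :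
    ContDiffOn ℝ (⊤ : ℕ∞) u Ω := by
  intro p hp
  obtain ⟨hS, hC⟩ := hΩ p hp
  have hnb : ∀ᶠ q : ℝ × ℝ in nhds p,
      Complex.sinh (s * ((↑q.1 + ↑q.2 * Complex.I) + c₁) / 2) ≠ 0 ∧
      Complex.cosh (s * ((↑q.1 + ↑q.2 * Complex.I) + c₁) / 2) ≠ 0 :=
    Filter.eventually_of_mem (hΩopen.mem_nhds hp) (fun q hq => hΩ q hq)
  have hζ := contDiff_zeta s c₁
  have hsinh : ContDiff ℝ (⊤ : ℕ∞) (fun q : ℝ × ℝ =>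
      Complex.normSq (Complex.sinh (s * ((↑q.1 + ↑q.2 * Complex.I) + c₁) / 2))) :=
    contDiff_normSqR.comp ((Complex.contDiff_sinh.restrict_scalars ℝ).comp hζ)
  have hcosh : ContDiff ℝ (⊤ : ℕ∞) (fun q : ℝ × ℝ =>
      Complex.normSq (Complex.cosh (s * ((↑q.1 + ↑q.2 * Complex.I) + c₁) / 2))) :=
    contDiff_normSqR.comp ((Complex.contDiff_cosh.restrict_scalars ℝ).comp hζ)
  have hlogS : ContDiffAt ℝ (⊤ : ℕ∞) (fun q : ℝ × ℝ =>
      Real.log (Complex.normSq (Complex.sinh (s * ((↑q.1 + ↑q.2 * Complex.I) + c₁) / 2)))) p :=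
    hsinh.contDiffAt.log (Complex.normSq_pos.2 hS).ne'
  have hlogC : ContDiffAt ℝ (⊤ : ℕ∞) (fun q : ℝ × ℝ =>
      Real.log (Complex.normSq (Complex.cosh (s * ((↑q.1 + ↑q.2 * Complex.I) + c₁) / 2)))) p :=
    hcosh.contDiffAt.log (Complex.normSq_pos.2 hC).ne'
  have hnice : ContDiffAt ℝ (⊤ : ℕ∞) (fun q : ℝ × ℝ => c *
      (Real.log (Complex.normSq (Complex.sinh (s * ((↑q.1 + ↑q.2 * Complex.I) + c₁) / 2))) -
       Real.log (Complex.normSq (Complex.cosh (s * ((↑q.1 + ↑q.2 * Complex.I) + c₁) / 2)))) + d) p :=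
    (contDiffAt_const.mul (hlogS.sub hlogC)).add contDiffAt_const
  exact (hnice.congr_of_eventuallyEq (u_eq_nice s c₁ c d u hudef p hnb)).contDiffWithinAt

noncomputable def Gv (s c₁ : ℂ) (c : ℝ) (z : ℂ) : ℂ :=
  (c : ℂ) * s / (Complex.sinh (s * (z + c₁) / 2) * Complex.cosh (s * (z + c₁) / 2))

noncomputable def Gd (s c₁ : ℂ) (c : ℝ) (z : ℂ) : ℂ :=
  -((c : ℂ) * s ^ 2 / 2) *
    (Complex.cosh (s * (z + c₁) / 2) ^ 2 + Complex.sinh (s * (z + c₁) / 2) ^ 2) /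
    (Complex.sinh (s * (z + c₁) / 2) * Complex.cosh (s * (z + c₁) / 2)) ^ 2

lemma hasDerivAt_Gv (s c₁ : ℂ) (c : ℝ) (z : ℂ)
    (hS : Complex.sinh (s * (z + c₁) / 2) ≠ 0) (hC : Complex.cosh (s * (z + c₁) / 2) ≠ 0) :
    HasDerivAt (Gv s c₁ c) (Gd s c₁ c z) z := by
  have h := hasDerivAt_G s c₁ c z hS hC
  exact h


lemma all_derivs (s c₁ : ℂ) (c d : ℝ) (u : ℝ × ℝ → ℝ)
    (hudef : ∀ p : ℝ × ℝ,
      u p = 2 * c *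
        Real.log (‖Complex.tanh (s * ((↑p.1 + ↑p.2 * Complex.I) + c₁) / 2)‖) + d)
    (Ω : Set (ℝ × ℝ)) (hΩopen : IsOpen Ω)
    (hΩ : ∀ p ∈ Ω,
      Complex.sinh (s * ((↑p.1 + ↑p.2 * Complex.I) + c₁) / 2) ≠ 0 ∧
      Complex.cosh (s * ((↑p.1 + ↑p.2 * Complex.I) + c₁) / 2) ≠ 0)
    (p : ℝ × ℝ) (hp : p ∈ Ω) :
    px u p = (Gv s c₁ c ((p.1 : ℂ) + (p.2 : ℂ) * Complex.I)).re ∧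
    py u p = -(Gv s c₁ c ((p.1 : ℂ) + (p.2 : ℂ) * Complex.I)).im ∧
    px (px u) p = (Gd s c₁ c ((p.1 : ℂ) + (p.2 : ℂ) * Complex.I)).re ∧
    py (px u) p = -(Gd s c₁ c ((p.1 : ℂ) + (p.2 : ℂ) * Complex.I)).im ∧
    py (py u) p = -(Gd s c₁ c ((p.1 : ℂ) + (p.2 : ℂ) * Complex.I)).re := by
  obtain ⟨hS, hC⟩ := hΩ p hp
  have hU : ∀ q ∈ Ω, HasFDerivAt u (DD (Gv s c₁ c ((q.1 : ℂ) + (q.2 : ℂ) * Complex.I))) q := by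
    intro q hq
    have h := hasFDerivAt_u s c₁ c d u hudef q
      (Filter.eventually_of_mem (hΩopen.mem_nhds hq) (fun r hr => hΩ r hr))
    exact h
  have hpx_ev : px u =ᶠ[nhds p]
      fun q : ℝ × ℝ => (Gv s c₁ c ((q.1 : ℂ) + (q.2 : ℂ) * Complex.I)).re := by
    filter_upwards [hΩopen.mem_nhds hp] with q hq
    show fderiv ℝ u q (1, 0) = _
    rw [(hU q hq).fderiv, DD_fst]
  have hpy_ev : py u =ᶠ[nhds p]
      fun q : ℝ × ℝ => (Complex.I * Gv s c₁ c ((q.1 : ℂ) + (q.2 : ℂ) * Complex.I)).re := by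
    filter_upwards [hΩopen.mem_nhds hp] with q hq
    show fderiv ℝ u q (0, 1) = _
    rw [(hU q hq).fderiv, DD_snd]
    simp [Complex.mul_re]
  have hG := hasDerivAt_Gv s c₁ c ((p.1 : ℂ) + (p.2 : ℂ) * Complex.I) hS hC
  have hpxU : HasFDerivAt (px u) (DD (Gd s c₁ c ((p.1 : ℂ) + (p.2 : ℂ) * Complex.I))) p :=
    (keyRe (p := p) hG).congr_of_eventuallyEq hpx_ev
  have hpyU : HasFDerivAt (py u)
      (DD (Complex.I * Gd s c₁ c ((p.1 : ℂ) + (p.2 : ℂ) * Complex.I))) p :=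
    (keyRe (p := p) (hG.const_mul Complex.I)).congr_of_eventuallyEq hpy_ev
  refine ⟨?_, ?_, ?_, ?_, ?_⟩
  · show fderiv ℝ u p (1, 0) = _
    rw [(hU p hp).fderiv, DD_fst]
  · show fderiv ℝ u p (0, 1) = _
    rw [(hU p hp).fderiv, DD_snd]
  · show fderiv ℝ (px u) p (1, 0) = _
    rw [hpxU.fderiv, DD_fst]
  · show fderiv ℝ (px u) p (0, 1) = _
    rw [hpxU.fderiv, DD_snd]
  · show fderiv ℝ (py u) p (0, 1) = _
    rw [hpyU.fderiv, DD_snd]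
    simp [Complex.mul_im]

/-- case `k > 0`, `c₀ = s² ≠ 0`, the 'Pillars' family:
`u = 2c·log |tanh(s·(z + c₁)/2)| + d` is smooth and harmonic on any open set where
`sinh` and `cosh` of `s·(z + c₁)/2` are nonzero, and satisfies the modified equation
with `j(t) = |s|²·|c|·sinh((t − d)/|c|)`. -/
theorem pillars_modified_solution
    (s : ℂ) (hs : s ≠ 0) (c₁ : ℂ) (c : ℝ) (hc : c ≠ 0) (d : ℝ)
    (Ω : Set (ℝ × ℝ)) (hΩopen : IsOpen Ω)
    (hΩ : ∀ p ∈ Ω,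
      Complex.sinh (s * ((↑p.1 + ↑p.2 * Complex.I) + c₁) / 2) ≠ 0 ∧
      Complex.cosh (s * ((↑p.1 + ↑p.2 * Complex.I) + c₁) / 2) ≠ 0)
    (u : ℝ × ℝ → ℝ)
    (hudef : ∀ p : ℝ × ℝ,
      u p = 2 * c *
        Real.log ‖Complex.tanh (s * ((↑p.1 + ↑p.2 * Complex.I) + c₁) / 2)‖ + d) :
    ContDiffOn ℝ (⊤ : ℕ∞) u Ω ∧
      (∀ p ∈ Ω, px (px u) p + py (py u) p = 0) ∧
      SatisfiesModified u
        (fun t => ‖s‖ ^ 2 * |c| * Real.sinh ((t - d) / |c|)) Ω := by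
  refine ⟨contDiffOn_u s c₁ c d u hudef Ω hΩopen hΩ, ?_, ?_⟩
  · intro p hp
    obtain ⟨-, -, h3, -, h5⟩ := all_derivs s c₁ c d u hudef Ω hΩopen hΩ p hp
    rw [h3, h5]; ring
  · intro p hp
    obtain ⟨hS, hC⟩ := hΩ p hp
    obtain ⟨h1, h2, h3, h4, h5⟩ := all_derivs s c₁ c d u hudef Ω hΩopen hΩ p hp
    beta_reduce
    rw [h1, h2, h3, h4, h5]
    simp only [Gv, Gd]
    set S := Complex.sinh (s * ((↑p.1 + ↑p.2 * Complex.I) + c₁) / 2) with hSdef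
    set C := Complex.cosh (s * ((↑p.1 + ↑p.2 * Complex.I) + c₁) / 2) with hCdef
    have hCS : C ^ 2 - S ^ 2 = 1 := Complex.cosh_sq_sub_sinh_sq _
    set nS := Complex.normSq S with hnSdef
    set nC := Complex.normSq C with hnCdef
    set ns := Complex.normSq s with hnsdef
    have hnS : 0 < nS := Complex.normSq_pos.2 hS
    have hnC : 0 < nC := Complex.normSq_pos.2 hC
    have hns : 0 < ns := Complex.normSq_pos.2 hs
    -- value of j (u p)
    have hjval : ‖s‖ ^ 2 * |c| * Real.sinh ((u p - d) / |c|)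
        = ns * c * (nS / nC - nC / nS) / 2 := by
      have hr : ‖Complex.tanh (s * ((↑p.1 + ↑p.2 * Complex.I) + c₁) / 2)‖
          = ‖S‖ / ‖C‖ := by
        rw [Complex.tanh_eq_sinh_div_cosh, norm_div, ← hSdef, ← hCdef]
      have hrpos : 0 < ‖S‖ / ‖C‖ :=
        div_pos (norm_pos_iff.2 hS) (norm_pos_iff.2 hC)
      have hr2 : (‖S‖ / ‖C‖) ^ 2 = nS / nC := by
        rw [div_pow, Complex.sq_norm, Complex.sq_norm]
      have habss : ‖s‖ ^ 2 = ns := Complex.sq_norm s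
      rw [hudef p, hr]
      have harg : (2 * c * Real.log (‖S‖ / ‖C‖) + d - d) / |c|
          = (c / |c|) * Real.log ((‖S‖ / ‖C‖) ^ 2) := by
        rw [Real.log_pow]
        push_cast
        field_simp
        ring
      rw [harg]
      rcases hc.lt_or_gt with hneg | hpos
      · rw [abs_of_neg hneg]
        have : c / -c * Real.log ((‖S‖ / ‖C‖) ^ 2)
            = Real.log (((‖S‖ / ‖C‖) ^ 2)⁻¹) := by
          rw [Real.log_inv]
          field_simp
        rw [this, Real.sinh_log (by positivity), hr2, inv_inv, inv_div, habss]
        field_simp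
        ring
      · rw [abs_of_pos hpos]
        have : c / c * Real.log ((‖S‖ / ‖C‖) ^ 2)
            = Real.log ((‖S‖ / ‖C‖) ^ 2) := by
          field_simp
        rw [this, Real.sinh_log (by positivity), hr2, inv_div, habss]
        field_simp
    rw [hjval]
    -- reduce LHS to a real part of a complex product
    have hmix : ∀ w z : ℂ, (w.re - -w.re) * (z.re ^ 2 - (-z.im) ^ 2) + 4 * -w.im * z.re * -z.im
        = 2 * (w * (starRingEnd ℂ) (z ^ 2)).re := by
      intro w z
      simp only [Complex.mul_re, Complex.conj_re, Complex.conj_im, pow_two, Complex.mul_im]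
      ring
    rw [hmix]
    -- compute the complex product
    have hSc : (starRingEnd ℂ) S ≠ 0 := by simpa using hS
    have hCc : (starRingEnd ℂ) C ≠ 0 := by simpa using hC
    set k : ℝ := -(c ^ 3 * ns ^ 2) / (2 * (nS * nC) ^ 2) with hkdef
    have hmulval : -(↑c * s ^ 2 / 2) * (C ^ 2 + S ^ 2) / (S * C) ^ 2 *
        (starRingEnd ℂ) ((↑c * s / (S * C)) ^ 2) = (k : ℂ) * (C ^ 2 + S ^ 2) := by
      have hkc : (k : ℂ) = -((c : ℂ) ^ 3 * ((ns : ℝ) : ℂ) ^ 2) / (2 * (((nS : ℝ) : ℂ) * ((nC : ℝ) : ℂ)) ^ 2) := by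
        rw [hkdef]; push_cast; ring
      rw [hkc]
      rw [show ((ns : ℝ) : ℂ) = s * (starRingEnd ℂ) s from (Complex.mul_conj s).symm,
        show ((nS : ℝ) : ℂ) = S * (starRingEnd ℂ) S from (Complex.mul_conj S).symm,
        show ((nC : ℝ) : ℂ) = C * (starRingEnd ℂ) C from (Complex.mul_conj C).symm]
      simp only [map_div₀, map_mul, map_pow, Complex.conj_ofReal]
      field_simp
    rw [hmulval, Complex.re_ofReal_mul]
    -- real part of C^2 + S^2
    have hre2 : (C ^ 2 + S ^ 2).re = nC ^ 2 - nS ^ 2 := by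
      have e1 : C ^ 2 + S ^ 2 = 2 * S ^ 2 + 1 := by linear_combination hCS
      have e2 : C ^ 2 = S ^ 2 + 1 := by linear_combination hCS
      have e3 : nC ^ 2 = Complex.normSq (C ^ 2) := by
        simp [pow_two, Complex.normSq_mul, hnCdef]
      have e4 : nS ^ 2 = Complex.normSq (S ^ 2) := by
        simp [pow_two, Complex.normSq_mul, hnSdef]
      rw [e1, e3, e2, e4, Complex.normSq_add]
      simp [Complex.add_re, Complex.mul_re]
      ring
    rw [hre2]
    -- normSq of the gradient
    have hgrad : ((↑c * s / (S * C) : ℂ)).re ^ 2 + (-(↑c * s / (S * C) : ℂ).im) ^ 2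
        = c ^ 2 * ns / (nS * nC) := by
      have : ((↑c * s / (S * C) : ℂ)).re ^ 2 + (-(↑c * s / (S * C) : ℂ).im) ^ 2
          = Complex.normSq (↑c * s / (S * C)) := by
        rw [Complex.normSq_apply]; ring
      rw [this, Complex.normSq_div, Complex.normSq_mul, Complex.normSq_mul,
        Complex.normSq_ofReal, ← hnSdef, ← hnCdef, ← hnsdef]
      ring
    rw [hgrad, hkdef]
    field_simp
    ring
end
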